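/- arXiv:1704.01777 — 12 statements merged into one kernel-verified Lean document; each statement's English description precedes it below -/
import Mathlib

section
/- The subgroup ℤS of ℤ^d generated by S has finite index, the subgroup H generated by ω_{n−d+1}e₁, …, ω_n e_d has index D = (ω_{n−d+1}⋯ω_n)/[ℤ^d : ℤS] in ℤS, every coset of H contained in ℤS contains an element of S₀, and consequently the (finite) cardinality of S₀ satisfies #S₀ ≥ D. -/
/-!
Since `ω i • e i ∈ S`, the lattice `H = ⨁ ω i ℤ e i` lies in `ℤS`, and `[ℤ^d : H] = ∏ ω i`
yields both the finiteness of `[ℤ^d : ℤS]` and the value of `[ℤS : H]`. In the finite group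
`ℤ^d ⧸ H` the image of `S` is a submonoid, hence a subgroup, so every coset of `H` in `ℤS` meets
`S`; subtracting generators `ω i • e i` while staying in `S` descends, by well-foundedness of
`ℕ^d`, to an element of `S₀` in the same coset. Two elements `s ≤ s'` of `S₀` in the same coset
coincide, since otherwise `s' - ω i • e i ∈ s + S` for some `i`. Hence each coset meets `S₀` in an
antichain, which is finite by Dickson's lemma, so `S₀` is finite and surjects onto `ℤS ⧸ H`.
-/

variable {ι : Type*}

def natCastPi (ι : Type*) : (ι → ℕ) →+ (ι → ℤ) := (Nat.castAddMonoidHom ℤ).compLeft ι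

@[simp]
lemma natCastPi_apply (s : ι → ℕ) (i : ι) : natCastPi ι s i = s i := rfl

lemma natCastPi_injective : Function.Injective (natCastPi ι) :=
  (Nat.cast_injective (R := ℤ)).comp_left

lemma natCastPi_single [DecidableEq ι] (i : ι) (x : ℕ) :
    natCastPi ι (Pi.single i x) = Pi.single i (x : ℤ) :=
  funext <| Pi.apply_single (fun _ => ((↑) : ℕ → ℤ)) (fun _ => Nat.cast_zero) i x

lemma natCastPi_eq_sub_single_iff [DecidableEq ι] {s t : ι → ℕ} {i : ι} {x : ℕ} :
    natCastPi ι t = natCastPi ι s - Pi.single i (x : ℤ) ↔ t + Pi.single i x = s := by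
  rw [eq_sub_iff_add_eq, ← natCastPi_single, ← map_add, natCastPi_injective.eq_iff]

lemma dvd_single_apply {M : Type*} [MonoidWithZero M] [DecidableEq ι] (ω : ι → M) (i k : ι) :
    ω k ∣ (Pi.single i (ω i) : ι → M) k := by
  rcases eq_or_ne k i with rfl | hk <;> simp [*]

def singleLattice (ω : ι → ℕ) : AddSubgroup (ι → ℤ) :=
  AddSubgroup.pi Set.univ fun i => AddSubgroup.zmultiples (ω i : ℤ)

section singleLattice

variable {ω : ι → ℕ}

lemma mem_singleLattice_iff {v : ι → ℤ} : v ∈ singleLattice ω ↔ ∀ i, (ω i : ℤ) ∣ v i := by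
  simp [singleLattice, AddSubgroup.mem_pi, Int.mem_zmultiples_iff]

lemma natCastPi_mem_singleLattice_iff {u : ι → ℕ} :
    natCastPi ι u ∈ singleLattice ω ↔ ∀ i, ω i ∣ u i := by
  simp [mem_singleLattice_iff, Int.natCast_dvd_natCast]

lemma single_mem_singleLattice [DecidableEq ι] (i : ι) : Pi.single i (ω i : ℤ) ∈ singleLattice ω :=
  mem_singleLattice_iff.mpr (dvd_single_apply (fun k => (ω k : ℤ)) i)

lemma closure_range_single_eq_singleLattice [Finite ι] [DecidableEq ι] :
    AddSubgroup.closure (Set.range fun i => Pi.single i (ω i : ℤ)) = singleLattice ω := by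
  refine le_antisymm ((AddSubgroup.closure_le _).mpr ?_) fun v hv => ?_
  · rintro _ ⟨i, rfl⟩
    exact single_mem_singleLattice i
  · refine AddSubmonoid.pi_mem_of_single_mem v fun i => ?_
    obtain ⟨c, hc⟩ := mem_singleLattice_iff.mp hv i
    rw [hc, mul_comm, ← smul_eq_mul, Pi.single_smul]
    exact zsmul_mem (AddSubgroup.subset_closure (Set.mem_range_self i)) c

lemma index_singleLattice [Fintype ι] : (singleLattice ω).index = ∏ i, ω i := by
  simp [singleLattice, AddSubgroup.index_pi, Int.index_zmultiples]

lemma finiteIndex_singleLattice [Fintype ι] (hω : ∀ i, 0 < ω i) :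
    (singleLattice ω).FiniteIndex :=
  ⟨by rw [index_singleLattice]; exact (Finset.prod_pos fun i _ => hω i).ne'⟩

end singleLattice

lemma AddSubmonoid.mem_of_forall_dvd [Finite ι] [DecidableEq ι] {S : AddSubmonoid (ι → ℕ)}
    {ω : ι → ℕ} (hS : ∀ i, Pi.single i (ω i) ∈ S) {w : ι → ℕ} (hw : ∀ i, ω i ∣ w i) :
    w ∈ S :=
  AddSubmonoid.pi_mem_of_single_mem w fun i => by
    obtain ⟨c, hc⟩ := hw i
    rw [hc, mul_comm, ← smul_eq_mul, Pi.single_smul]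
    exact nsmul_mem (hS i) c

lemma AddSubgroup.exists_sub_mem_of_mem_closure {G : Type*} [AddCommGroup G] {H : AddSubgroup G}
    [H.FiniteIndex] {M : AddSubmonoid G} {z : G} (hz : z ∈ AddSubgroup.closure (M : Set G)) :
    ∃ m ∈ M, m - z ∈ H := by
  set π := QuotientAddGroup.mk' H
  have hπz : π z ∈ AddSubmonoid.closure (M.map π : Set (G ⧸ H)) := by
    rw [AddSubmonoid.coe_map, ← AddSubgroup.closure_toAddSubmonoid_of_finite,
      ← AddMonoidHom.map_closure]
    exact AddSubgroup.mem_map_of_mem π hz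
  obtain ⟨m, hm, hmz⟩ := AddSubmonoid.closure_eq (M.map π) ▸ hπz
  exact ⟨m, hm, (QuotientAddGroup.eq_iff_sub_mem).mp hmz⟩

def aperySet [DecidableEq ι] (S : AddSubmonoid (ι → ℕ)) (ω : ι → ℕ) : Set (ι → ℕ) :=
  {s | s ∈ S ∧ ∀ i, ∀ t ∈ S, t + Pi.single i (ω i) ≠ s}

section aperySet

variable [DecidableEq ι] {S : AddSubmonoid (ι → ℕ)} {ω : ι → ℕ}

lemma mem_aperySet_iff {s : ι → ℕ} :
    s ∈ aperySet S ω ↔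
      s ∈ S ∧ ∀ i, ¬∃ t ∈ S, natCastPi ι t = natCastPi ι s - Pi.single i (ω i : ℤ) := by
  simp only [aperySet, natCastPi_eq_sub_single_iff, Set.mem_ofPred_eq, not_exists, not_and, ne_eq]

lemma exists_mem_aperySet_sub_mem [Finite ι] (hω : ∀ i, 0 < ω i) {s : ι → ℕ} (hs : s ∈ S) :
    ∃ s₀ ∈ aperySet S ω, natCastPi ι s₀ - natCastPi ι s ∈ singleLattice ω := by
  induction s using WellFoundedLT.induction with
  | _ s ih =>
    by_cases h : s ∈ aperySet S ω
    · exact ⟨s, h, by simp⟩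
    obtain ⟨i, t, ht, rfl⟩ : ∃ i, ∃ t ∈ S, t + Pi.single i (ω i) = s := by
      simpa [aperySet, hs] using h
    obtain ⟨s₀, hs₀, hs₀t⟩ := ih t (lt_add_of_pos_right t (Pi.single_pos.mpr (hω i))) ht
    refine ⟨s₀, hs₀, ?_⟩
    rw [map_add, natCastPi_single, ← sub_sub]
    exact sub_mem hs₀t (single_mem_singleLattice i)

lemma eq_of_le_of_sub_mem_singleLattice [Finite ι] (hS : ∀ i, Pi.single i (ω i) ∈ S)
    {s s' : ι → ℕ} (hs : s ∈ aperySet S ω) (hs' : s' ∈ aperySet S ω) (hle : s ≤ s')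
    (hss' : natCastPi ι s' - natCastPi ι s ∈ singleLattice ω) : s = s' := by
  obtain ⟨u, rfl⟩ := exists_add_of_le hle
  have hu : ∀ k, ω k ∣ u k := natCastPi_mem_singleLattice_iff.mp (by simpa using hss')
  by_contra hne
  obtain ⟨i, hi⟩ := Function.ne_iff.mp fun hu0 : u = 0 => hne (by simp [hu0])
  have hωi : ω i ≤ u i := Nat.le_of_dvd (Nat.pos_of_ne_zero hi) (hu i)
  have hle_u : Pi.single i (ω i) ≤ u := fun k => by
    rcases eq_or_ne k i with rfl | hk <;> simp [*]
  obtain ⟨w, rfl⟩ : ∃ w, u = w + Pi.single i (ω i) :=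
    ⟨u - Pi.single i (ω i), (tsub_add_cancel_of_le hle_u).symm⟩
  have hw : ∀ k, ω k ∣ w k := fun k => (Nat.dvd_add_left (dvd_single_apply ω i k)).mp (hu k)
  exact hs'.2 i (s + w) (S.add_mem hs.1 (AddSubmonoid.mem_of_forall_dvd hS hw)) (add_assoc _ _ _)

lemma aperySet_finite [Fintype ι] (hS : ∀ i, Pi.single i (ω i) ∈ S) (hω : ∀ i, 0 < ω i) :
    (aperySet S ω).Finite := by
  have := finiteIndex_singleLattice hω
  let π : (ι → ℕ) → (ι → ℤ) ⧸ singleLattice ω := fun s => natCastPi ι s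
  refine Set.Finite.of_finite_fibers π (Set.toFinite _) fun x _ => ?_
  refine IsAntichain.finite_of_partiallyWellOrderedOn ?_ (Set.isPWO_of_wellQuasiOrderedLE _)
  rintro s ⟨hs, rfl⟩ s' ⟨hs', hss'⟩ hne hle
  exact hne (eq_of_le_of_sub_mem_singleLattice hS hs hs' hle
    (QuotientAddGroup.eq_iff_sub_mem.mp hss'))

lemma singleLattice_le_closure [Finite ι] (hS : ∀ i, Pi.single i (ω i) ∈ S) :
    singleLattice ω ≤ AddSubgroup.closure (S.map (natCastPi ι)) := by
  rw [← closure_range_single_eq_singleLattice, AddSubgroup.closure_le]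
  rintro _ ⟨i, rfl⟩
  exact AddSubgroup.subset_closure ⟨_, hS i, natCastPi_single i (ω i)⟩

lemma exists_mem_aperySet_sub_mem_of_mem_closure [Fintype ι] (hω : ∀ i, 0 < ω i) {z : ι → ℤ}
    (hz : z ∈ AddSubgroup.closure (S.map (natCastPi ι) : Set (ι → ℤ))) :
    ∃ s₀ ∈ aperySet S ω, natCastPi ι s₀ - z ∈ singleLattice ω := by
  have := finiteIndex_singleLattice hω
  obtain ⟨_, ⟨s, hs, rfl⟩, hsz⟩ :=
    AddSubgroup.exists_sub_mem_of_mem_closure (H := singleLattice ω) hz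
  obtain ⟨s₀, hs₀, hs₀s⟩ := exists_mem_aperySet_sub_mem hω hs
  exact ⟨s₀, hs₀, by simpa using add_mem hs₀s hsz⟩

lemma relIndex_le_ncard_aperySet [Fintype ι] (hS : ∀ i, Pi.single i (ω i) ∈ S)
    (hω : ∀ i, 0 < ω i) :
    (singleLattice ω).relIndex (AddSubgroup.closure (S.map (natCastPi ι))) ≤
      (aperySet S ω).ncard := by
  set Z := AddSubgroup.closure (S.map (natCastPi ι) : Set (ι → ℤ))
  have := (aperySet_finite hS hω).to_subtype
  let f : aperySet S ω → Z ⧸ (singleLattice ω).addSubgroupOf Z := fun s =>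
    (⟨natCastPi ι s, AddSubgroup.subset_closure ⟨s, s.2.1, rfl⟩⟩ : Z)
  have hf : Function.Surjective f := by
    rintro ⟨z⟩
    obtain ⟨s₀, hs₀, hs₀z⟩ := exists_mem_aperySet_sub_mem_of_mem_closure hω z.2
    exact ⟨⟨s₀, hs₀⟩, QuotientAddGroup.eq_iff_sub_mem.mpr hs₀z⟩
  rw [← Nat.card_coe_set_eq, AddSubgroup.relIndex, AddSubgroup.index_eq_card]
  exact Nat.card_le_card_of_surjective f hf

end aperySet

theorem stmt_1_general (d n : ℕ) (hdn : d ≤ n)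
    (ω : Fin d → ℕ) (hω : ∀ i, 0 < ω i)
    (a : Fin n → (Fin d → ℕ))
    (ha : ∀ (i : Fin d) (j : Fin n), (j : ℕ) = n - d + (i : ℕ) →
      a j = fun k => if k = i then ω i else 0)
    (S : AddSubmonoid (Fin d → ℕ))
    (hS : S = AddSubmonoid.closure (Set.range a))
    (S₀ : Set (Fin d → ℕ))
    (hS₀ : S₀ = {s | s ∈ S ∧ ∀ i : Fin d,
      ¬ ∃ t ∈ S, (fun k => (t k : ℤ)) =
        fun k => (s k : ℤ) - (if k = i then (ω i : ℤ) else 0)})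
    (ZS : AddSubgroup (Fin d → ℤ))
    (hZS : ZS = AddSubgroup.closure {v | ∃ s ∈ S, v = fun k => (s k : ℤ)})
    (H : AddSubgroup (Fin d → ℤ))
    (hH : H = AddSubgroup.closure
      {v | ∃ i : Fin d, v = fun k => if k = i then (ω i : ℤ) else 0}) :
    ZS.index ≠ 0 ∧
    H ≤ ZS ∧
    H.relIndex ZS = (∏ i, ω i) / ZS.index ∧
    (∀ z ∈ ZS, ∃ s₀ ∈ S₀, (fun k => ((s₀ k : ℤ))) - z ∈ H) ∧
    (∏ i, ω i) / ZS.index ≤ S₀.ncard := by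
  have hsingle : ∀ i, Pi.single i (ω i) ∈ S := fun i => by
    have hj : n - d + (i : ℕ) < n := by omega
    rw [hS, funext fun k => Pi.single_apply i (ω i) k, ← ha i ⟨_, hj⟩ rfl]
    exact AddSubmonoid.subset_closure (Set.mem_range_self _)
  have hH' : H = singleLattice ω := by
    rw [hH, ← closure_range_single_eq_singleLattice]
    congr 1; ext v; simp [funext_iff, Pi.single_apply, eq_comm]
  have hZS' : ZS = AddSubgroup.closure (S.map (natCastPi (Fin d))) := by
    rw [hZS]
    congr 1; ext v; simp [funext_iff, eq_comm]
  have hS₀' : S₀ = aperySet S ω := by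
    ext s
    rw [hS₀, mem_aperySet_iff]
    simp [funext_iff, Pi.single_apply]
  have hLZ : H ≤ ZS := by
    rw [hH', hZS']
    exact singleLattice_le_closure hsingle
  have hrel : H.relIndex ZS * ZS.index = ∏ i, ω i := by
    rw [AddSubgroup.relIndex_mul_index hLZ, hH', index_singleLattice]
  have hZ : ZS.index ≠ 0 :=
    right_ne_zero_of_mul (hrel ▸ (Finset.prod_pos fun i _ => hω i).ne')
  have hD : H.relIndex ZS = (∏ i, ω i) / ZS.index :=
    (Nat.div_eq_of_eq_mul_left (Nat.pos_of_ne_zero hZ) hrel.symm).symm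
  refine ⟨hZ, hLZ, hD, ?_, hD ▸ ?_⟩
  · rw [hH', hZS', hS₀']
    exact fun z hz => exists_mem_aperySet_sub_mem_of_mem_closure hω hz
  · rw [hH', hZS', hS₀']
    exact relIndex_le_ncard_aperySet hsingle hω

/-- With `S ⊆ ℕ^d` the simplicial affine semigroup and `ℤS ⊆ ℤ^d` the
group it generates: `ℤS` has finite index in `ℤ^d`, the subgroup `H` generated by
`ω_{n-d+1}e₁, …, ω_n e_d` satisfies `H ≤ ℤS` and has index
`D = (ω_{n-d+1}⋯ω_n)/[ℤ^d : ℤS]` in `ℤS`, every coset of `H` contained in `ℤS`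
contains an element of `S₀`, and `#S₀ ≥ D`. -/
theorem stmt_1 (d n : ℕ) (hd : 1 ≤ d) (hdn : d ≤ n)
    (ω : Fin d → ℕ) (hω : ∀ i, 0 < ω i)
    (a : Fin n → (Fin d → ℕ))
    (ha : ∀ (i : Fin d) (j : Fin n), (j : ℕ) = n - d + (i : ℕ) →
      a j = fun k => if k = i then ω i else 0)
    (S : AddSubmonoid (Fin d → ℕ))
    (hS : S = AddSubmonoid.closure (Set.range a))
    (S₀ : Set (Fin d → ℕ))
    (hS₀ : S₀ = {s | s ∈ S ∧ ∀ i : Fin d,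
      ¬ ∃ t ∈ S, (fun k => (t k : ℤ)) =
        fun k => (s k : ℤ) - (if k = i then (ω i : ℤ) else 0)})
    (ZS : AddSubgroup (Fin d → ℤ))
    (hZS : ZS = AddSubgroup.closure {v | ∃ s ∈ S, v = fun k => (s k : ℤ)})
    (H : AddSubgroup (Fin d → ℤ))
    (hH : H = AddSubgroup.closure
      {v | ∃ i : Fin d, v = fun k => if k = i then (ω i : ℤ) else 0}) :
    ZS.index ≠ 0 ∧
    H ≤ ZS ∧
    H.relIndex ZS = (∏ i, ω i) / ZS.index ∧
    (∀ z ∈ ZS, ∃ s₀ ∈ S₀, (fun k => ((s₀ k : ℤ))) - z ∈ H) ∧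
    (∏ i, ω i) / ZS.index ≤ S₀.ncard :=
  stmt_1_general d n hdn ω hω a ha S hS S₀ hS₀ ZS hZS H hH
end

section
/- The set Δ = {s ∈ S : s − a_{n−1} ∈ S, s − a_n ∈ S and s − a_{n−1} − a_n ∉ S} is finite with exactly #S₀ − D elements, where D = ω_{n−1}·ω_n/[ℤ² : ℤS]. In particular Δ is empty if and only if #S₀ = D (the combinatorial criterion for K[S] to be Cohen–Macaulay). -/
/-!
Cut `S` along the residue classes modulo the lattice `ℤa_{n-1} + ℤa_n = ω_{n-1}ℤ × ω_nℤ`. In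
lattice coordinates, the part of `S` in a class met by `S` is a nonempty upper set of `ℤ²` that is
bounded below, i.e. a staircase; its minimal points are the elements of `S₀` in that class and its
outer corners are the elements of `Δ` in that class. A staircase has exactly one more minimal point
than outer corners, so `#S₀ = #Δ + #(classes met by S)`. These classes form the image of `S` in
`ℤ/ω_{n-1} × ℤ/ω_n`, a submonoid of a finite group and hence the image of the subgroup `ℤS`,
whose order is `ω_{n-1}ω_n / [ℤ² : ℤS]`.
-/

namespace SimplicialSemigroup

open Set

section Translation

variable {G H : Type*} [AddGroup G] [AddGroup H]

def apery (T : Set G) (v w : G) : Set G :=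
  {x | x ∈ T ∧ x - v ∉ T ∧ x - w ∉ T}

def corners (T : Set G) (v w : G) : Set G :=
  {x | x ∈ T ∧ x - v ∈ T ∧ x - w ∈ T ∧ x - v - w ∉ T}

variable {g : H → G} {v w : H} {v' w' : G}

theorem image_apery_preimage (T : Set G) (hv : ∀ x, g (x - v) = g x - v')
    (hw : ∀ x, g (x - w) = g x - w') :
    g '' apery (g ⁻¹' T) v w = apery T v' w' ∩ range g := by
  ext y
  constructor
  · rintro ⟨x, hx, rfl⟩
    simp_all [apery]
  · rintro ⟨hy, x, rfl⟩
    exact ⟨x, by simpa only [apery, mem_ofPred_eq, mem_preimage, hv, hw] using hy, rfl⟩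

theorem image_corners_preimage (T : Set G) (hv : ∀ x, g (x - v) = g x - v')
    (hw : ∀ x, g (x - w) = g x - w') :
    g '' corners (g ⁻¹' T) v w = corners T v' w' ∩ range g := by
  ext y
  constructor
  · rintro ⟨x, hx, rfl⟩
    simp_all [corners]
  · rintro ⟨hy, x, rfl⟩
    exact ⟨x, by simpa only [corners, mem_ofPred_eq, mem_preimage, hv, hw] using hy, rfl⟩

end Translation

section Staircase

def staircase (j₀ : ℤ) (f : ℤ → ℤ) : Set (ℤ × ℤ) :=
  {p | j₀ ≤ p.2 ∧ f p.2 ≤ p.1}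

def descents (j₀ : ℤ) (f : ℤ → ℤ) : Set ℤ :=
  {j | j₀ < j ∧ f j < f (j - 1)}

variable {j₀ : ℤ} {f : ℤ → ℤ}

theorem apery_staircase :
    apery (staircase j₀ f) (1, 0) (0, 1) = (fun j ↦ (f j, j)) '' insert j₀ (descents j₀ f) := by
  ext ⟨i, j⟩
  simp only [apery, staircase, descents, mem_ofPred_eq, mem_image, mem_insert_iff, Prod.mk_sub_mk,
    sub_zero, Prod.mk.injEq]
  constructor
  · rintro ⟨⟨hj, hi⟩, h₁, h₂⟩
    refine ⟨j, ?_, by omega, rfl⟩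
    by_cases hj₀ : j = j₀
    · exact .inl hj₀
    · exact .inr ⟨by omega, by omega⟩
  · rintro ⟨j, hj, rfl, rfl⟩
    omega

theorem corners_staircase :
    corners (staircase j₀ f) (1, 0) (0, 1) = (fun j ↦ (f (j - 1), j)) '' descents j₀ f := by
  ext ⟨i, j⟩
  simp only [corners, staircase, descents, mem_ofPred_eq, mem_image, Prod.mk_sub_mk, sub_zero,
    Prod.mk.injEq]
  constructor
  · rintro ⟨-, ⟨hj, hi⟩, ⟨hj', hi'⟩, h⟩
    exact ⟨j, ⟨by omega, by omega⟩, by omega, rfl⟩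
  · rintro ⟨j, ⟨hj, hf⟩, rfl, rfl⟩
    omega

theorem finite_descents (hf : Antitone f) (hbdd : BddBelow (range f)) :
    (descents j₀ f).Finite := by
  obtain ⟨m, hm⟩ := hbdd
  have hanti : StrictAntiOn f (descents j₀ f) := fun j _ k hk hjk ↦
    hk.2.trans_le (hf (by omega))
  refine Finite.of_finite_image ((finite_Icc m (f j₀)).subset ?_) hanti.injOn
  rintro _ ⟨j, hj, rfl⟩
  exact ⟨hm (mem_range_self j), hf hj.1.le⟩

theorem finite_apery_staircase (hf : Antitone f) (hbdd : BddBelow (range f)) :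
    (apery (staircase j₀ f) (1, 0) (0, 1)).Finite := by
  rw [apery_staircase]
  exact ((finite_descents hf hbdd).insert j₀).image _

theorem encard_apery_staircase :
    (apery (staircase j₀ f) (1, 0) (0, 1)).encard
      = (corners (staircase j₀ f) (1, 0) (0, 1)).encard + 1 := by
  have hinj {h : ℤ → ℤ} : Function.Injective (fun j ↦ (h j, j)) := fun _ _ e ↦ congrArg Prod.snd e
  rw [apery_staircase, corners_staircase, hinj.encard_image, hinj.encard_image,
    encard_insert_of_notMem (fun h ↦ lt_irrefl _ h.1), add_comm]

theorem add_nsmul_mem {M : Type*} [AddMonoid M] {A : Set M} {v : M} (h : ∀ p ∈ A, p + v ∈ A)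
    {p : M} (hp : p ∈ A) (k : ℕ) : p + k • v ∈ A := by
  induction k with
  | zero => simpa
  | succ k ih => rw [succ_nsmul, ← add_assoc]; exact h _ ih

theorem isUpperSet_of_add_mem {A : Set (ℤ × ℤ)} (h₁ : ∀ p ∈ A, p + (1, 0) ∈ A)
    (h₂ : ∀ p ∈ A, p + (0, 1) ∈ A) : IsUpperSet A := by
  intro p q hpq hp
  have hq : q = p + (q.1 - p.1).toNat • (1, 0) + (q.2 - p.2).toNat • (0, 1) := by
    obtain ⟨h₁, h₂⟩ := hpq
    ext <;> simp <;> omega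
  rw [hq]
  exact add_nsmul_mem h₂ (add_nsmul_mem h₁ hp _) _

theorem exists_eq_staircase {A : Set (ℤ × ℤ)} (hne : A.Nonempty) (hbdd : BddBelow A)
    (hA : IsUpperSet A) : ∃ j₀ f, Antitone f ∧ BddBelow (range f) ∧ A = staircase j₀ f := by
  obtain ⟨b, hb⟩ := hbdd
  have hbdd₂ : BddBelow (Prod.snd '' A) := ⟨b.2, by rintro _ ⟨p, hp, rfl⟩; exact (hb hp).2⟩
  set j₀ := sInf (Prod.snd '' A)
  obtain ⟨p₀, hp₀, hj₀⟩ : j₀ ∈ Prod.snd '' A := Int.csInf_mem (hne.image _) hbdd₂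
  -- Rows below `j₀` are empty; reading them off row `j₀` keeps `f` antitone on all of `ℤ`.
  let row (j : ℤ) : Set ℤ := {i | (i, max j j₀) ∈ A}
  have row_nonempty (j : ℤ) : (row j).Nonempty :=
    ⟨p₀.1, hA (show p₀ ≤ (p₀.1, max j j₀) from ⟨le_rfl, by simp [← hj₀]⟩) hp₀⟩
  have row_bdd (j : ℤ) : BddBelow (row j) := ⟨b.1, fun i hi ↦ (hb hi).1⟩
  let f (j : ℤ) : ℤ := sInf (row j)
  refine ⟨j₀, f, fun j k hjk ↦ ?_, ⟨b.1, ?_⟩, ?_⟩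
  · refine le_csInf (row_nonempty j) fun i hi ↦ csInf_le (row_bdd k) ?_
    exact hA (show (i, max j j₀) ≤ (i, max k j₀) from ⟨le_rfl, max_le_max_right _ hjk⟩) hi
  · rintro _ ⟨j, rfl⟩
    exact le_csInf (row_nonempty j) fun i hi ↦ (hb hi).1
  · ext ⟨i, j⟩
    constructor
    · intro h
      have hj : j₀ ≤ j := csInf_le hbdd₂ ⟨_, h, rfl⟩
      refine ⟨hj, csInf_le (row_bdd j) ?_⟩
      simpa [row, max_eq_left hj] using h
    · rintro ⟨hj, hi⟩
      exact hA (show (f j, max j j₀) ≤ (i, j) from ⟨hi, by simp [max_eq_left hj]⟩)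
        (Int.csInf_mem (row_nonempty j) (row_bdd j))

theorem finite_apery_and_encard_of_isUpperSet {A : Set (ℤ × ℤ)} (hne : A.Nonempty)
    (hbdd : BddBelow A) (hA : IsUpperSet A) :
    (apery A (1, 0) (0, 1)).Finite ∧
      (apery A (1, 0) (0, 1)).encard = (corners A (1, 0) (0, 1)).encard + 1 := by
  obtain ⟨j₀, f, hf, hbdd', rfl⟩ := exists_eq_staircase hne hbdd hA
  exact ⟨finite_apery_staircase hf hbdd', encard_apery_staircase⟩

end Staircase

theorem encard_eq_finsum_encard_fiber {α β : Type*} [Finite β] (r : α → β) (X : Set α) :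
    X.encard = ∑ᶠ b, (X ∩ r ⁻¹' {b}).encard := by
  rw [← encard_iUnion_of_finite]
  · congr
    ext x
    simp
  · intro b b' hbb'
    exact (disjoint_singleton.2 hbb').preimage r |>.inter_left' X |>.inter_right' X

theorem _root_.AddSubmonoid.card_map_mul_index_closure {G K : Type*} [AddGroup G] [AddGroup K]
    [Finite K] (M : AddSubmonoid G) {φ : G →+ K} (hφ : Function.Surjective φ)
    (hker : φ.ker ≤ AddSubgroup.closure M) :
    Nat.card (M.map φ) * (AddSubgroup.closure (M : Set G)).index = Nat.card K := by
  have hmap : ((AddSubgroup.closure (M : Set G)).map φ).toAddSubmonoid = M.map φ := by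
    rw [AddMonoidHom.map_closure, AddSubgroup.closure_toAddSubmonoid_of_finite,
      ← AddSubmonoid.coe_map, AddSubmonoid.closure_eq]
  rw [← AddSubgroup.index_map_eq _ hφ hker, ← hmap]
  exact AddSubgroup.card_mul_index _

section Residues

variable (ω₁ ω₂ : ℕ)

def residue : ℤ × ℤ →+ ZMod ω₁ × ZMod ω₂ :=
  (Int.castAddHom _).prodMap (Int.castAddHom _)

@[simp]
theorem residue_apply (x : ℤ × ℤ) : residue ω₁ ω₂ x = ((x.1 : ZMod ω₁), (x.2 : ZMod ω₂)) := rfl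

theorem residue_surjective : Function.Surjective (residue ω₁ ω₂) :=
  Prod.map_surjective.2 ⟨ZMod.intCast_surjective, ZMod.intCast_surjective⟩

theorem residue_preimage_residue (c : ℤ × ℤ) :
    residue ω₁ ω₂ ⁻¹' {residue ω₁ ω₂ c} = range fun p ↦ c + ((ω₁ : ℤ), (ω₂ : ℤ)) * p := by
  ext x
  simp only [mem_preimage, mem_singleton_iff, residue_apply, Prod.ext_iff,
    ZMod.intCast_eq_intCast_iff_dvd_sub, mem_range, Prod.fst_add, Prod.snd_add, Prod.fst_mul,
    Prod.snd_mul]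
  constructor
  · rintro ⟨⟨k, hk⟩, ⟨l, hl⟩⟩
    exact ⟨(-k, -l), by linarith, by linarith⟩
  · rintro ⟨p, h₁, h₂⟩
    exact ⟨⟨-p.1, by linarith⟩, ⟨-p.2, by linarith⟩⟩

variable {ω₁ ω₂} {T : Set (ℤ × ℤ)}

theorem finite_apery_inter_fiber_and_encard (hω₁ : 0 < ω₁) (hω₂ : 0 < ω₂) (hbdd : BddBelow T)
    (h₁ : ∀ x ∈ T, x + ((ω₁ : ℤ), 0) ∈ T) (h₂ : ∀ x ∈ T, x + (0, (ω₂ : ℤ)) ∈ T)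
    {c : ℤ × ℤ} (hc : c ∈ T) :
    (apery T ((ω₁ : ℤ), 0) (0, (ω₂ : ℤ)) ∩ residue ω₁ ω₂ ⁻¹' {residue ω₁ ω₂ c}).Finite ∧
      (apery T ((ω₁ : ℤ), 0) (0, (ω₂ : ℤ)) ∩ residue ω₁ ω₂ ⁻¹' {residue ω₁ ω₂ c}).encard =
        (corners T ((ω₁ : ℤ), 0) (0, (ω₂ : ℤ)) ∩ residue ω₁ ω₂ ⁻¹' {residue ω₁ ω₂ c}).encard
          + 1 := by
  set g : ℤ × ℤ → ℤ × ℤ := fun p ↦ c + ((ω₁ : ℤ), (ω₂ : ℤ)) * p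
  have hg_inj : Function.Injective g := by
    intro p q hpq
    simp only [g, add_right_inj, Prod.ext_iff, Prod.fst_mul, Prod.snd_mul] at hpq
    exact Prod.ext (by simpa [hω₁.ne'] using hpq.1) (by simpa [hω₂.ne'] using hpq.2)
  have hg_add (p q : ℤ × ℤ) : g (p + q) = g p + ((ω₁ : ℤ), (ω₂ : ℤ)) * q := by
    simp only [g, mul_add, add_assoc]
  have hg_sub (p q : ℤ × ℤ) : g (p - q) = g p - ((ω₁ : ℤ), (ω₂ : ℤ)) * q := by
    simp only [g, mul_sub, add_sub_assoc]
  obtain ⟨b, hb⟩ := hbdd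
  -- `b ≤ c` as `c ∈ T`, and `ω₁ * p.1 ≤ p.1` when `p.1 < 0`
  have hA : BddBelow (g ⁻¹' T) := by
    refine ⟨b - c, fun p hp ↦ ⟨?_, ?_⟩⟩
    · have := (hb hp).1; have := (hb hc).1
      simp only [g, Prod.fst_add, Prod.fst_mul, Prod.fst_sub] at *
      rcases le_or_gt 0 p.1 with h | h <;> nlinarith
    · have := (hb hp).2; have := (hb hc).2
      simp only [g, Prod.snd_add, Prod.snd_mul, Prod.snd_sub] at *
      rcases le_or_gt 0 p.2 with h | h <;> nlinarith
  obtain ⟨hfin, hcard⟩ := finite_apery_and_encard_of_isUpperSet (A := g ⁻¹' T)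
    ⟨0, by simpa [g] using hc⟩ hA <| isUpperSet_of_add_mem
      (fun p hp ↦ by simpa [hg_add] using h₁ _ hp) (fun p hp ↦ by simpa [hg_add] using h₂ _ hp)
  have hv (p : ℤ × ℤ) : g (p - (1, 0)) = g p - ((ω₁ : ℤ), 0) := by simp [hg_sub]
  have hw (p : ℤ × ℤ) : g (p - (0, 1)) = g p - (0, (ω₂ : ℤ)) := by simp [hg_sub]
  rw [residue_preimage_residue, ← image_apery_preimage T hv hw, ← image_corners_preimage T hv hw,
    hg_inj.encard_image, hg_inj.encard_image]
  exact ⟨hfin.image g, hcard⟩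

theorem finite_apery_and_encard (hω₁ : 0 < ω₁) (hω₂ : 0 < ω₂) (hbdd : BddBelow T)
    (h₁ : ∀ x ∈ T, x + ((ω₁ : ℤ), 0) ∈ T) (h₂ : ∀ x ∈ T, x + (0, (ω₂ : ℤ)) ∈ T) :
    (apery T ((ω₁ : ℤ), 0) (0, (ω₂ : ℤ))).Finite ∧
      (apery T ((ω₁ : ℤ), 0) (0, (ω₂ : ℤ))).encard =
        (corners T ((ω₁ : ℤ), 0) (0, (ω₂ : ℤ))).encard + (residue ω₁ ω₂ '' T).encard := by
  have : NeZero ω₁ := ⟨hω₁.ne'⟩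
  have : NeZero ω₂ := ⟨hω₂.ne'⟩
  set r := residue ω₁ ω₂
  set P := apery T ((ω₁ : ℤ), 0) (0, (ω₂ : ℤ))
  set Q := corners T ((ω₁ : ℤ), 0) (0, (ω₂ : ℤ))
  have fiber (b : ZMod ω₁ × ZMod ω₂) : (P ∩ r ⁻¹' {b}).Finite ∧
      (P ∩ r ⁻¹' {b}).encard = (Q ∩ r ⁻¹' {b}).encard + (r '' T ∩ {b}).encard := by
    by_cases hb : b ∈ r '' T
    · obtain ⟨c, hc, rfl⟩ := hb
      rw [inter_singleton_of_mem (mem_image_of_mem r hc), encard_singleton]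
      exact finite_apery_inter_fiber_and_encard hω₁ hω₂ hbdd h₁ h₂ hc
    · have hP : P ∩ r ⁻¹' {b} = ∅ :=
        eq_empty_of_forall_notMem fun x ⟨hx, hxb⟩ ↦ hb ⟨x, hx.1, hxb⟩
      have hQ : Q ∩ r ⁻¹' {b} = ∅ :=
        eq_empty_of_forall_notMem fun x ⟨hx, hxb⟩ ↦ hb ⟨x, hx.1, hxb⟩
      simp [hP, hQ, hb]
  refine ⟨?_, ?_⟩
  · refine (finite_iUnion fun b ↦ (fiber b).1).subset fun x hx ↦ ?_
    exact mem_iUnion.2 ⟨r x, hx, rfl⟩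
  · rw [encard_eq_finsum_encard_fiber r P, encard_eq_finsum_encard_fiber r Q,
      encard_eq_finsum_encard_fiber id (r '' T), ← finsum_add_distrib (toFinite _) (toFinite _)]
    exact finsum_congr fun b ↦ (fiber b).2

theorem finite_corners_and_ncard_add_ncard (hω₁ : 0 < ω₁) (hω₂ : 0 < ω₂) (hbdd : BddBelow T)
    (h₁ : ∀ x ∈ T, x + ((ω₁ : ℤ), 0) ∈ T) (h₂ : ∀ x ∈ T, x + (0, (ω₂ : ℤ)) ∈ T) :
    (corners T ((ω₁ : ℤ), 0) (0, (ω₂ : ℤ))).Finite ∧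
      (corners T ((ω₁ : ℤ), 0) (0, (ω₂ : ℤ))).ncard + (residue ω₁ ω₂ '' T).ncard =
        (apery T ((ω₁ : ℤ), 0) (0, (ω₂ : ℤ))).ncard := by
  have : NeZero ω₁ := ⟨hω₁.ne'⟩
  have : NeZero ω₂ := ⟨hω₂.ne'⟩
  obtain ⟨hfin, hcard⟩ := finite_apery_and_encard hω₁ hω₂ hbdd h₁ h₂
  have hQ : (corners T ((ω₁ : ℤ), 0) (0, (ω₂ : ℤ))).Finite :=
    finite_of_encard_le_coe (le_of_le_of_eq le_self_add hcard.symm |>.trans hfin.encard_eq_coe.le)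
  refine ⟨hQ, Nat.cast_injective (R := ℕ∞) ?_⟩
  push_cast
  rw [hQ.cast_ncard_eq, (toFinite _).cast_ncard_eq, hfin.cast_ncard_eq, hcard]

theorem ncard_residue_image_mul_index (hω₁ : 0 < ω₁) (hω₂ : 0 < ω₂) (M : AddSubmonoid (ℤ × ℤ))
    (h₁ : ((ω₁ : ℤ), 0) ∈ M) (h₂ : (0, (ω₂ : ℤ)) ∈ M) :
    (residue ω₁ ω₂ '' M).ncard * (AddSubgroup.closure (M : Set (ℤ × ℤ))).index = ω₁ * ω₂ := by
  have : NeZero ω₁ := ⟨hω₁.ne'⟩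
  have : NeZero ω₂ := ⟨hω₂.ne'⟩
  have hker : (residue ω₁ ω₂).ker ≤ AddSubgroup.closure M := by
    intro x hx
    obtain ⟨p, rfl⟩ : x ∈ range fun p ↦ 0 + ((ω₁ : ℤ), (ω₂ : ℤ)) * p := by
      rw [← residue_preimage_residue]
      simpa using hx
    have hp : 0 + ((ω₁ : ℤ), (ω₂ : ℤ)) * p = p.1 • ((ω₁ : ℤ), 0) + p.2 • (0, (ω₂ : ℤ)) := by
      ext <;> simp [mul_comm]
    simp only [hp]
    exact add_mem (zsmul_mem (AddSubgroup.subset_closure h₁) _)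
      (zsmul_mem (AddSubgroup.subset_closure h₂) _)
  have := M.card_map_mul_index_closure (residue_surjective ω₁ ω₂) hker
  rwa [Nat.card_prod, Nat.card_zmod, Nat.card_zmod, ← SetLike.coe_sort_coe, Nat.card_coe_set_eq,
    AddSubmonoid.coe_map] at this

end Residues

section NatPoints

def castProd : ℕ × ℕ →+ ℤ × ℤ :=
  (Nat.castAddMonoidHom ℤ).prodMap (Nat.castAddMonoidHom ℤ)

@[simp]
theorem castProd_apply (s : ℕ × ℕ) : castProd s = ((s.1 : ℤ), (s.2 : ℤ)) := rfl

theorem castProd_injective : Function.Injective castProd := fun s t hst ↦ by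
  simpa [Prod.ext_iff] using hst

variable {ω₁ ω₂ : ℕ} {S : AddSubmonoid (ℕ × ℕ)}

theorem finite_preimage_corners_and_ncard (hω₁ : 0 < ω₁) (hω₂ : 0 < ω₂) (h₁ : (ω₁, 0) ∈ S)
    (h₂ : (0, ω₂) ∈ S) :
    (castProd ⁻¹' corners (S.map castProd) ((ω₁ : ℤ), 0) (0, (ω₂ : ℤ))).Finite ∧
      (castProd ⁻¹' corners (S.map castProd) ((ω₁ : ℤ), 0) (0, (ω₂ : ℤ))).ncard +
          ω₁ * ω₂ / (AddSubgroup.closure (S.map castProd : Set (ℤ × ℤ))).index =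
        (castProd ⁻¹' apery (S.map castProd) ((ω₁ : ℤ), 0) (0, (ω₂ : ℤ))).ncard := by
  set M := S.map castProd
  have hM₁ : ((ω₁ : ℤ), 0) ∈ M := ⟨(ω₁, 0), h₁, by simp⟩
  have hM₂ : (0, (ω₂ : ℤ)) ∈ M := ⟨(0, ω₂), h₂, by simp⟩
  have hbdd : BddBelow (M : Set (ℤ × ℤ)) :=
    ⟨0, by rintro _ ⟨s, -, rfl⟩; exact ⟨by simp, by simp⟩⟩
  obtain ⟨hfin, hcard⟩ := finite_corners_and_ncard_add_ncard hω₁ hω₂ hbdd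
    (fun _ hx ↦ add_mem hx hM₁) (fun _ hx ↦ add_mem hx hM₂)
  have hcount := ncard_residue_image_mul_index hω₁ hω₂ M hM₁ hM₂
  have hD : ω₁ * ω₂ / (AddSubgroup.closure (M : Set (ℤ × ℤ))).index = (residue ω₁ ω₂ '' M).ncard :=
    Nat.div_eq_of_eq_mul_left (Nat.pos_of_mul_pos_left (hcount ▸ Nat.mul_pos hω₁ hω₂)) hcount.symm
  have hM : (M : Set (ℤ × ℤ)) ⊆ range castProd := by
    rw [AddSubmonoid.coe_map]
    exact image_subset_range _ _
  rw [hD, ncard_preimage_of_injective_subset_range castProd_injective fun x hx ↦ hM hx.1,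
    ncard_preimage_of_injective_subset_range castProd_injective fun x hx ↦ hM hx.1]
  exact ⟨hfin.preimage castProd_injective.injOn, hcard⟩

end NatPoints

end SimplicialSemigroup

theorem stmt_2_general (n : ℕ) (hn : 2 ≤ n)
    (ω₁ ω₂ : ℕ) (hω₁ : 0 < ω₁) (hω₂ : 0 < ω₂)
    (a : Fin n → ℕ × ℕ)
    (ha₁ : ∀ j : Fin n, (j : ℕ) = n - 2 → a j = (ω₁, 0))
    (ha₂ : ∀ j : Fin n, (j : ℕ) = n - 1 → a j = (0, ω₂))
    (S : AddSubmonoid (ℕ × ℕ))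
    (hS : S = AddSubmonoid.closure (Set.range a))
    (ZS : AddSubgroup (ℤ × ℤ))
    (hZS : ZS = AddSubgroup.closure {v | ∃ s ∈ S, v = ((s.1 : ℤ), (s.2 : ℤ))})
    (S₀ : Set (ℕ × ℕ))
    (hS₀ : S₀ = {s | s ∈ S ∧
      (¬ ∃ t ∈ S, ((t.1 : ℤ), (t.2 : ℤ)) = ((s.1 : ℤ) - (ω₁ : ℤ), (s.2 : ℤ))) ∧
      (¬ ∃ t ∈ S, ((t.1 : ℤ), (t.2 : ℤ)) = ((s.1 : ℤ), (s.2 : ℤ) - (ω₂ : ℤ)))})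
    (Δ : Set (ℕ × ℕ))
    (hΔ : Δ = {s | s ∈ S ∧
      (∃ t ∈ S, ((t.1 : ℤ), (t.2 : ℤ)) = ((s.1 : ℤ) - (ω₁ : ℤ), (s.2 : ℤ))) ∧
      (∃ t ∈ S, ((t.1 : ℤ), (t.2 : ℤ)) = ((s.1 : ℤ), (s.2 : ℤ) - (ω₂ : ℤ))) ∧
      (¬ ∃ t ∈ S, ((t.1 : ℤ), (t.2 : ℤ)) = ((s.1 : ℤ) - (ω₁ : ℤ), (s.2 : ℤ) - (ω₂ : ℤ)))}) :
    Δ.Finite ∧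
    Δ.ncard + ω₁ * ω₂ / ZS.index = S₀.ncard ∧
    (Δ = ∅ ↔ S₀.ncard = ω₁ * ω₂ / ZS.index) := by
  open SimplicialSemigroup in
  have h₁ : ((ω₁, 0) : ℕ × ℕ) ∈ S := hS ▸ AddSubmonoid.subset_closure ⟨⟨n - 2, by omega⟩, ha₁ _ rfl⟩
  have h₂ : ((0, ω₂) : ℕ × ℕ) ∈ S := hS ▸ AddSubmonoid.subset_closure ⟨⟨n - 1, by omega⟩, ha₂ _ rfl⟩
  have hZS' : ZS = AddSubgroup.closure (S.map castProd) := by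
    rw [hZS, AddSubmonoid.coe_map]
    congr
    ext
    simp [eq_comm]
  have hS₀' : S₀ = castProd ⁻¹' apery (S.map castProd) ((ω₁ : ℤ), 0) (0, (ω₂ : ℤ)) := by
    ext s
    simp only [hS₀, apery, Set.mem_preimage, Set.mem_ofPred_eq, SetLike.mem_coe,
      AddSubmonoid.mem_map_iff_mem castProd_injective]
    simp only [AddSubmonoid.mem_map, castProd_apply, Prod.mk_sub_mk, sub_zero]
  have hΔ' : Δ = castProd ⁻¹' corners (S.map castProd) ((ω₁ : ℤ), 0) (0, (ω₂ : ℤ)) := by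
    ext s
    simp only [hΔ, corners, Set.mem_preimage, Set.mem_ofPred_eq, SetLike.mem_coe,
      AddSubmonoid.mem_map_iff_mem castProd_injective]
    simp only [AddSubmonoid.mem_map, castProd_apply, Prod.mk_sub_mk, sub_zero]
  obtain ⟨hΔfin, hmain⟩ := hZS' ▸ hS₀' ▸ hΔ' ▸ finite_preimage_corners_and_ncard hω₁ hω₂ h₁ h₂
  refine ⟨hΔfin, hmain, ?_⟩
  rw [← hmain, ← Set.ncard_eq_zero hΔfin]
  omega

/-- For a two-dimensional simplicial affine semigroup `S ⊆ ℕ²`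
(with `a_{n-1} = (ω_{n-1},0)`, `a_n = (0,ω_n)`), the set
`Δ = {s ∈ S : s - a_{n-1} ∈ S, s - a_n ∈ S, s - a_{n-1} - a_n ∉ S}` is finite with
exactly `#S₀ - D` elements, where `D = ω_{n-1}·ω_n/[ℤ² : ℤS]`; in particular
`Δ = ∅ ↔ #S₀ = D`. -/
theorem stmt_2 (n : ℕ) (hn : 2 ≤ n)
    (ω₁ ω₂ : ℕ) (hω₁ : 0 < ω₁) (hω₂ : 0 < ω₂)
    (a : Fin n → ℕ × ℕ)
    (ha₁ : ∀ j : Fin n, (j : ℕ) = n - 2 → a j = (ω₁, 0))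
    (ha₂ : ∀ j : Fin n, (j : ℕ) = n - 1 → a j = (0, ω₂))
    (S : AddSubmonoid (ℕ × ℕ))
    (hS : S = AddSubmonoid.closure (Set.range a))
    (ZS : AddSubgroup (ℤ × ℤ))
    (hZS : ZS = AddSubgroup.closure {v | ∃ s ∈ S, v = ((s.1 : ℤ), (s.2 : ℤ))})
    (hidx : ZS.index ≠ 0)
    (S₀ : Set (ℕ × ℕ))
    (hS₀ : S₀ = {s | s ∈ S ∧
      (¬ ∃ t ∈ S, ((t.1 : ℤ), (t.2 : ℤ)) = ((s.1 : ℤ) - (ω₁ : ℤ), (s.2 : ℤ))) ∧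
      (¬ ∃ t ∈ S, ((t.1 : ℤ), (t.2 : ℤ)) = ((s.1 : ℤ), (s.2 : ℤ) - (ω₂ : ℤ)))})
    (Δ : Set (ℕ × ℕ))
    (hΔ : Δ = {s | s ∈ S ∧
      (∃ t ∈ S, ((t.1 : ℤ), (t.2 : ℤ)) = ((s.1 : ℤ) - (ω₁ : ℤ), (s.2 : ℤ))) ∧
      (∃ t ∈ S, ((t.1 : ℤ), (t.2 : ℤ)) = ((s.1 : ℤ), (s.2 : ℤ) - (ω₂ : ℤ))) ∧
      (¬ ∃ t ∈ S, ((t.1 : ℤ), (t.2 : ℤ)) = ((s.1 : ℤ) - (ω₁ : ℤ), (s.2 : ℤ) - (ω₂ : ℤ)))}) :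
    Δ.Finite ∧
    Δ.ncard + ω₁ * ω₂ / ZS.index = S₀.ncard ∧
    (Δ = ∅ ↔ S₀.ncard = ω₁ * ω₂ / ZS.index) :=
  stmt_2_general n hn ω₁ ω₂ hω₁ hω₂ a ha₁ ha₂ S hS ZS hZS S₀ hS₀ Δ hΔ
end

section
/- The set S' = {b_C + λ₁·ω_{n−d+1}e₁ + ⋯ + λ_d·ω_n e_d : C an ∼-equivalence class of S₀, λ₁, …, λ_d ∈ ℕ} contains S and is closed under addition, i.e., S' is an additive submonoid of ℕ^d containing S. (S' is the semigroup defining the Macaulayfication K[S'] of K[S].) -/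
/-!
Subtracting the generators `ω_i e_i` as long as one stays in `S` reduces every `s ∈ S` to some
`u ∈ S₀` with `u ≤ s` and `u ≡ s` coordinatewise modulo `ω`; this already gives `S ⊆ S'`.
For closedness it suffices to find, for classes `C` and `D`, a class `E` with
`b_E ≤ b_C + b_D` and `b_E ≡ b_C + b_D`. Take `E` the class of a reduction of `s + t`
(`s ∈ C`, `t ∈ D`). The congruence is automatic, and for the inequality in coordinate `k`
reduce `s' + t'`, where `s' ∈ C` and `t' ∈ D` attain the minima in coordinate `k`: the result
lies in `E` and is at most `b_C k + b_D k` there.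
-/

theorem Nat.exists_eq_add_mul_iff {b x w : ℕ} :
    (∃ m, x = b + m * w) ↔ b ≤ x ∧ b ≡ x [MOD w] := by
  constructor
  · rintro ⟨m, rfl⟩
    exact ⟨Nat.le_add_right _ _, Nat.modEq_add_mul_modulus_iff.2 rfl⟩
  · rintro ⟨hle, hmod⟩
    refine ⟨(x - b) / w, ?_⟩
    rw [Nat.div_mul_cancel ((Nat.modEq_iff_dvd' hle).1 hmod)]
    omega

namespace Macaulayfication

variable {ι : Type*}

theorem exists_eq_add_mul_iff_forall {b x w : ι → ℕ} :
    (∃ lam : ι → ℕ, x = b + fun k => lam k * w k) ↔ ∀ k, b k ≤ x k ∧ b k ≡ x k [MOD w k] := by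
  simp only [funext_iff, Pi.add_apply, ← Nat.exists_eq_add_mul_iff]
  exact (Classical.skolem (p := fun k m => x k = b k + m * w k)).symm

noncomputable def coordMin (C : Set (ι → ℕ)) : ι → ℕ :=
  fun k => sInf ((fun t => t k) '' C)

theorem coordMin_le {C : Set (ι → ℕ)} {t : ι → ℕ} (ht : t ∈ C) (k : ι) : coordMin C k ≤ t k :=
  Nat.sInf_le ⟨t, ht, rfl⟩

theorem exists_mem_apply_eq_coordMin {C : Set (ι → ℕ)} (hC : C.Nonempty) (k : ι) :
    ∃ t ∈ C, t k = coordMin C k :=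
  Nat.sInf_mem (hC.image _)

variable [DecidableEq ι]

def scaledBasisLattice (ω : ι → ℕ) : AddSubgroup (ι → ℤ) :=
  AddSubgroup.closure {v | ∃ i, v = fun k => if k = i then (ω i : ℤ) else 0}

theorem mem_scaledBasisLattice_iff [Fintype ι] {ω : ι → ℕ} {v : ι → ℤ} :
    v ∈ scaledBasisLattice ω ↔ ∀ k, (ω k : ℤ) ∣ v k := by
  constructor
  · intro hv
    let L : AddSubgroup (ι → ℤ) :=
      { carrier := {v | ∀ k, (ω k : ℤ) ∣ v k}
        zero_mem' := fun _ => dvd_zero _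
        add_mem' := fun ha hb k => dvd_add (ha k) (hb k)
        neg_mem' := fun ha k => (ha k).neg_right }
    refine (AddSubgroup.closure_le L).2 ?_ hv
    rintro _ ⟨i, rfl⟩ k
    dsimp only
    split_ifs <;> simp_all
  · intro hv
    have hsum : v = ∑ i, (v i / ω i) • fun k => if k = i then (ω i : ℤ) else 0 := by
      ext k
      simp [Finset.sum_apply, Int.ediv_mul_cancel (hv k)]
    have hgen : ∀ i, (fun k => if k = i then (ω i : ℤ) else 0) ∈ scaledBasisLattice ω :=
      fun i => AddSubgroup.subset_closure ⟨i, rfl⟩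
    rw [hsum]
    exact AddSubgroup.sum_mem _ fun i _ => AddSubgroup.zsmul_mem _ (hgen i) _

theorem sub_mem_scaledBasisLattice_iff [Fintype ι] {ω s t : ι → ℕ} :
    (fun k => (t k : ℤ) - (s k : ℤ)) ∈ scaledBasisLattice ω ↔ ∀ k, s k ≡ t k [MOD ω k] := by
  simp only [mem_scaledBasisLattice_iff, Nat.modEq_iff_dvd]

/-- The set `S₀`. -/
def reducedPart (S : AddSubmonoid (ι → ℕ)) (ω : ι → ℕ) : Set (ι → ℕ) :=
  {s | s ∈ S ∧ ∀ i, ¬ ∃ t ∈ S, (fun k => (t k : ℤ)) =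
    fun k => (s k : ℤ) - (if k = i then (ω i : ℤ) else 0)}

def residueClass (S : AddSubmonoid (ι → ℕ)) (ω s : ι → ℕ) : Set (ι → ℕ) :=
  {t | t ∈ reducedPart S ω ∧ (fun k => (t k : ℤ) - (s k : ℤ)) ∈ scaledBasisLattice ω}

def residueClasses (S : AddSubmonoid (ι → ℕ)) (ω : ι → ℕ) : Set (Set (ι → ℕ)) :=
  {C | ∃ s ∈ reducedPart S ω, C = residueClass S ω s}

/-- The semigroup `S'` of the Macaulayfication `K[S']` of `K[S]`. -/
def macaulayfication (S : AddSubmonoid (ι → ℕ)) (ω : ι → ℕ) : Set (ι → ℕ) :=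
  {x | ∃ C ∈ residueClasses S ω, ∃ lam : ι → ℕ, x = coordMin C + fun k => lam k * ω k}

variable {S : AddSubmonoid (ι → ℕ)} {ω : ι → ℕ}

theorem apply_eq_add_of_natCast_eq_sub {t u : ι → ℕ} {i : ι}
    (h : (fun k => (t k : ℤ)) = fun k => (u k : ℤ) - if k = i then (ω i : ℤ) else 0) (k : ι) :
    u k = t k + (if k = i then 1 else 0) * ω k := by
  have hk := congrFun h k
  split_ifs at hk ⊢ with hki
  · subst hki; omega
  · omega

variable [Fintype ι]

/-- Among the elements of `S` below `s` and congruent to `s`, one of minimal coordinate sum is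
reduced. -/
theorem exists_mem_reducedPart_le_modEq (hω : ∀ i, 0 < ω i) {s : ι → ℕ}
    (hs : s ∈ S) : ∃ u ∈ reducedPart S ω, u ≤ s ∧ ∀ k, u k ≡ s k [MOD ω k] := by
  obtain ⟨u, ⟨huS, hus, hmod⟩, hmin⟩ := (measure fun t : ι → ℕ => ∑ k, t k).wf.has_min
    {t | t ∈ S ∧ t ≤ s ∧ ∀ k, t k ≡ s k [MOD ω k]} ⟨s, hs, le_rfl, fun _ => rfl⟩
  refine ⟨u, ⟨huS, ?_⟩, hus, hmod⟩
  rintro i ⟨t, htS, ht⟩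
  have hu := apply_eq_add_of_natCast_eq_sub ht
  have htu : t ≤ u := fun k => (hu k).symm ▸ Nat.le_add_right _ _
  have htu_mod : ∀ k, t k ≡ u k [MOD ω k] := fun k =>
    (hu k).symm ▸ Nat.modEq_add_mul_modulus_iff.2 rfl
  refine hmin t ⟨htS, htu.trans hus, fun k => (htu_mod k).trans (hmod k)⟩ ?_
  refine Finset.sum_lt_sum (fun k _ => htu k) ⟨i, Finset.mem_univ _, ?_⟩
  rw [hu i, if_pos rfl, one_mul]
  exact Nat.lt_add_of_pos_right (hω i)

theorem mem_residueClass_iff {s t : ι → ℕ} :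
    t ∈ residueClass S ω s ↔ t ∈ reducedPart S ω ∧ ∀ k, s k ≡ t k [MOD ω k] :=
  and_congr_right fun _ => sub_mem_scaledBasisLattice_iff

theorem self_mem_residueClass {s : ι → ℕ} (hs : s ∈ reducedPart S ω) : s ∈ residueClass S ω s :=
  mem_residueClass_iff.2 ⟨hs, fun _ => rfl⟩

theorem coordMin_residueClass_le {s : ι → ℕ} (hs : s ∈ reducedPart S ω) (k : ι) :
    coordMin (residueClass S ω s) k ≤ s k :=
  coordMin_le (self_mem_residueClass hs) k

theorem coordMin_residueClass_modEq {s : ι → ℕ} (hs : s ∈ reducedPart S ω) (k : ι) :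
    coordMin (residueClass S ω s) k ≡ s k [MOD ω k] := by
  obtain ⟨t, ht, htk⟩ := exists_mem_apply_eq_coordMin ⟨s, self_mem_residueClass hs⟩ k
  rw [← htk]
  exact ((mem_residueClass_iff.1 ht).2 k).symm

theorem subset_macaulayfication (hω : ∀ i, 0 < ω i) :
    (S : Set (ι → ℕ)) ⊆ macaulayfication S ω := by
  intro x hx
  obtain ⟨u, hu, hux, hmod⟩ := exists_mem_reducedPart_le_modEq hω hx
  exact ⟨_, ⟨u, hu, rfl⟩, exists_eq_add_mul_iff_forall.2 fun k =>
    ⟨(coordMin_residueClass_le hu k).trans (hux k),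
      (coordMin_residueClass_modEq hu k).trans (hmod k)⟩⟩

theorem exists_coordMin_residueClass_le_add_modEq (hω : ∀ i, 0 < ω i) {s t : ι → ℕ}
    (hs : s ∈ reducedPart S ω) (ht : t ∈ reducedPart S ω) :
    ∃ u ∈ reducedPart S ω, ∀ k,
      coordMin (residueClass S ω u) k ≤
          coordMin (residueClass S ω s) k + coordMin (residueClass S ω t) k ∧
        coordMin (residueClass S ω u) k ≡
          coordMin (residueClass S ω s) k + coordMin (residueClass S ω t) k [MOD ω k] := by
  obtain ⟨u, hu, -, hmod⟩ := exists_mem_reducedPart_le_modEq hω (S.add_mem hs.1 ht.1)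
  refine ⟨u, hu, fun k => ⟨?_, ?_⟩⟩
  · obtain ⟨s', hs', hs'k⟩ := exists_mem_apply_eq_coordMin ⟨s, self_mem_residueClass hs⟩ k
    obtain ⟨t', ht', ht'k⟩ := exists_mem_apply_eq_coordMin ⟨t, self_mem_residueClass ht⟩ k
    rw [mem_residueClass_iff] at hs' ht'
    obtain ⟨u', hu', hu'le, hu'mod⟩ :=
      exists_mem_reducedPart_le_modEq hω (S.add_mem hs'.1.1 ht'.1.1)
    have hu'E : u' ∈ residueClass S ω u := mem_residueClass_iff.2
      ⟨hu', fun j => (hmod j).trans (((hs'.2 j).add (ht'.2 j)).trans (hu'mod j).symm)⟩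
    calc coordMin (residueClass S ω u) k ≤ u' k := coordMin_le hu'E k
      _ ≤ s' k + t' k := hu'le k
      _ = _ := by rw [hs'k, ht'k]
  · exact (coordMin_residueClass_modEq hu k).trans ((hmod k).trans
      ((coordMin_residueClass_modEq hs k).add (coordMin_residueClass_modEq ht k)).symm)

theorem add_mem_macaulayfication (hω : ∀ i, 0 < ω i) {x y : ι → ℕ}
    (hx : x ∈ macaulayfication S ω) (hy : y ∈ macaulayfication S ω) :
    x + y ∈ macaulayfication S ω := by
  obtain ⟨_, ⟨s, hs, rfl⟩, hx⟩ := hx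
  obtain ⟨_, ⟨t, ht, rfl⟩, hy⟩ := hy
  rw [exists_eq_add_mul_iff_forall] at hx hy
  obtain ⟨u, hu, hle⟩ := exists_coordMin_residueClass_le_add_modEq hω hs ht
  exact ⟨_, ⟨u, hu, rfl⟩, exists_eq_add_mul_iff_forall.2 fun k =>
    ⟨(hle k).1.trans (add_le_add (hx k).1 (hy k).1), (hle k).2.trans ((hx k).2.add (hy k).2)⟩⟩

end Macaulayfication

open Macaulayfication in
theorem stmt_3_general (d : ℕ)
    (ω : Fin d → ℕ) (hω : ∀ i, 0 < ω i)
    (S : AddSubmonoid (Fin d → ℕ))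
    (S₀ : Set (Fin d → ℕ))
    (hS₀ : S₀ = {s | s ∈ S ∧ ∀ i : Fin d,
      ¬ ∃ t ∈ S, (fun k => (t k : ℤ)) =
        fun k => (s k : ℤ) - (if k = i then (ω i : ℤ) else 0)})
    (H : AddSubgroup (Fin d → ℤ))
    (hH : H = AddSubgroup.closure
      {v | ∃ i : Fin d, v = fun k => if k = i then (ω i : ℤ) else 0})
    (classes : Set (Set (Fin d → ℕ)))
    (hclasses : classes = {C | ∃ s ∈ S₀,
      C = {t | t ∈ S₀ ∧ (fun k => (t k : ℤ) - (s k : ℤ)) ∈ H}})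
    (b : Set (Fin d → ℕ) → (Fin d → ℕ))
    (hb : ∀ C, b C = fun k => sInf ((fun t => t k) '' C))
    (S' : Set (Fin d → ℕ))
    (hS' : S' = {x | ∃ C ∈ classes, ∃ lam : Fin d → ℕ,
      x = b C + fun k => lam k * ω k}) :
    (↑S ⊆ S') ∧ (∀ x ∈ S', ∀ y ∈ S', x + y ∈ S') := by
  subst hS₀ hH hclasses hS'
  obtain rfl : b = coordMin := funext hb
  exact ⟨subset_macaulayfication hω, fun x hx y hy => add_mem_macaulayfication hω hx hy⟩

/-- Let `S₀` be as before, `∼` the congruence modulo the subgroup `H`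
generated by `ω_{n-d+1}e₁, …, ω_n e_d`, and for each `∼`-equivalence class `C` of `S₀`
let `b_C` be the coordinatewise minimum of `C`. Then the set
`S' = {b_C + λ₁·ω_{n-d+1}e₁ + ⋯ + λ_d·ω_n e_d}` contains `S` and is closed under
addition (so `S'` is an additive submonoid of `ℕ^d` containing `S`). -/
theorem stmt_3 (d n : ℕ) (hd : 1 ≤ d) (hdn : d ≤ n)
    (ω : Fin d → ℕ) (hω : ∀ i, 0 < ω i)
    (a : Fin n → (Fin d → ℕ))
    (ha : ∀ (i : Fin d) (j : Fin n), (j : ℕ) = n - d + (i : ℕ) →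
      a j = fun k => if k = i then ω i else 0)
    (S : AddSubmonoid (Fin d → ℕ))
    (hS : S = AddSubmonoid.closure (Set.range a))
    (S₀ : Set (Fin d → ℕ))
    (hS₀ : S₀ = {s | s ∈ S ∧ ∀ i : Fin d,
      ¬ ∃ t ∈ S, (fun k => (t k : ℤ)) =
        fun k => (s k : ℤ) - (if k = i then (ω i : ℤ) else 0)})
    (H : AddSubgroup (Fin d → ℤ))
    (hH : H = AddSubgroup.closure
      {v | ∃ i : Fin d, v = fun k => if k = i then (ω i : ℤ) else 0})
    (classes : Set (Set (Fin d → ℕ)))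
    (hclasses : classes = {C | ∃ s ∈ S₀,
      C = {t | t ∈ S₀ ∧ (fun k => (t k : ℤ) - (s k : ℤ)) ∈ H}})
    (b : Set (Fin d → ℕ) → (Fin d → ℕ))
    (hb : ∀ C, b C = fun k => sInf ((fun t => t k) '' C))
    (S' : Set (Fin d → ℕ))
    (hS' : S' = {x | ∃ C ∈ classes, ∃ lam : Fin d → ℕ,
      x = b C + fun k => lam k * ω k}) :
    (↑S ⊆ S') ∧ (∀ x ∈ S', ∀ y ∈ S', x + y ∈ S') :=
  stmt_3_general d ω hω S S₀ hS₀ H hH classes hclasses b hb S' hS'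
end

section
/- With S' = {b_C + λ₁·ω_{n−d+1}e₁ + ⋯ + λ_d·ω_n e_d : C an ∼-equivalence class of S₀, λ₁, …, λ_d ∈ ℕ} and B = {b_C : C an ∼-equivalence class of S₀}, one has B = {b ∈ S' : b − ω_{n−d+i}e_i ∉ S' for all i = 1, …, d}, and B has exactly D = (ω_{n−d+1}⋯ω_n)/[ℤ^d : ℤS] elements. (By the Cohen–Macaulayness criterion this says K[S'] is Cohen–Macaulay.) -/
/-!
Reduce modulo the lattice `H = ⊕ ℤ ω_k e_k`, i.e. pass to `∏ ℤ/ω_k`. All members of a class are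
congruent mod `H`, and so is the coordinatewise minimum `b_C`, because each of its coordinates is
attained by a member; hence `C ↦ b_C mod H` is injective. So every element of
`S' = B + ∑ ℕ ω_k e_k` has a unique such expression, and `B` is exactly the set of elements of `S'`
from which no `ω_i e_i` can be removed.

For the count, `B`, `S₀` and `S` have the same residues (subtract generators `ω_i e_i` inside `S`
until none fits), and the residues of `S` form a submonoid of a finite group, hence a subgroup: the
image of `ℤS`. Its order is `[ℤ^d : H] / [ℤ^d : ℤS] = (∏ ω_k) / [ℤ^d : ℤS]`, since `H ≤ ℤS`.
-/

open Function

namespace AffineSemigroup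

section Residues

variable {ι : Type*} (ω : ι → ℕ)

/-- Reduction modulo the lattice spanned by the `ω k • Pi.single k 1`, whose quotient is modelled
as `∀ k, ZMod (ω k)`. -/
def residue : (ι → ℕ) →+ ∀ k, ZMod (ω k) :=
  AddMonoidHom.pi fun k => (Nat.castAddMonoidHom _).comp (Pi.evalAddMonoidHom _ k)

def intResidue : (ι → ℤ) →+ ∀ k, ZMod (ω k) :=
  AddMonoidHom.pi fun k => (Int.castAddHom _).comp (Pi.evalAddMonoidHom _ k)

@[simp]
theorem residue_apply (x : ι → ℕ) (k : ι) : residue ω x k = x k := rfl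

@[simp]
theorem intResidue_apply (v : ι → ℤ) (k : ι) : intResidue ω v k = v k := rfl

theorem intResidue_natCast (x : ι → ℕ) : intResidue ω (fun k => (x k : ℤ)) = residue ω x := by
  funext k; simp

theorem intResidue_surjective : Surjective (intResidue ω) := fun r =>
  ⟨fun k => (r k).cast, funext fun k => by simp⟩

theorem residue_mul_self (lam : ι → ℕ) : residue ω (fun k => lam k * ω k) = 0 := by
  funext k; simp

variable [DecidableEq ι]

theorem residue_single_self (i : ι) : residue ω (Pi.single i (ω i)) = 0 := by
  funext k
  by_cases hk : k = i
  · subst hk; simp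
  · simp [hk]

theorem closure_single_eq_ker [Fintype ι] :
    AddSubgroup.closure {v | ∃ i, v = fun k => if k = i then (ω i : ℤ) else 0} =
      (intResidue ω).ker := by
  refine le_antisymm ((AddSubgroup.closure_le _).2 ?_) fun v hv => ?_
  · rintro _ ⟨i, rfl⟩
    funext k
    by_cases hk : k = i
    · subst hk; simp
    · simp [hk]
  · have hdvd : ∀ k, (ω k : ℤ) ∣ v k := fun k =>
      (ZMod.intCast_zmod_eq_zero_iff_dvd _ _).1 (congrFun hv k)
    rw [← Finset.univ_sum_single v]
    refine AddSubgroup.sum_mem _ fun k _ => ?_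
    obtain ⟨c, hc⟩ := hdvd k
    rw [hc, mul_comm, ← smul_eq_mul, Pi.single_smul]
    refine AddSubgroup.zsmul_mem _ (AddSubgroup.subset_closure ?_) _
    exact ⟨k, funext <| Pi.single_apply k _⟩

theorem sub_mem_closure_single_iff [Fintype ι] (s t : ι → ℕ) :
    (fun k => (t k : ℤ) - s k) ∈
        AddSubgroup.closure {v | ∃ i, v = fun k => if k = i then (ω i : ℤ) else 0} ↔
      residue ω t = residue ω s := by
  rw [← intResidue_natCast, ← intResidue_natCast, ← sub_eq_zero, ← map_sub,
    closure_single_eq_ker, AddMonoidHom.mem_ker]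
  rfl

theorem natCast_eq_sub_single_iff {t x : ι → ℕ} {i : ι} :
    ((fun k => (t k : ℤ)) = fun k => (x k : ℤ) - if k = i then (ω i : ℤ) else 0) ↔
      x = t + Pi.single i (ω i) := by
  simp only [funext_iff, Pi.add_apply, Pi.single_apply]
  refine forall_congr' fun k => ?_
  split_ifs <;> omega

end Residues
section Reduced

variable {ι : Type*} [DecidableEq ι] (ω : ι → ℕ)

/-- The paper's `S₀`, for an arbitrary `S`. -/
def reduced (S : Set (ι → ℕ)) : Set (ι → ℕ) :=
  {s | s ∈ S ∧ ∀ i, ¬∃ t ∈ S, s = t + Pi.single i (ω i)}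

theorem setOf_natCast_sub_single_eq_reduced (S : Set (ι → ℕ)) :
    {s | s ∈ S ∧ ∀ i, ¬∃ t ∈ S,
      (fun k => (t k : ℤ)) = fun k => (s k : ℤ) - if k = i then (ω i : ℤ) else 0} =
      reduced ω S := by
  simp only [natCast_eq_sub_single_iff]
  rfl

variable {ω}

theorem exists_mem_reduced_residue_eq [Finite ι] (hω : ∀ i, 0 < ω i) {S : Set (ι → ℕ)}
    {s : ι → ℕ} (hs : s ∈ S) : ∃ u ∈ reduced ω S, residue ω u = residue ω s := by
  induction s using WellFoundedLT.induction with
  | _ s ih =>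
  by_cases hred : ∀ i, ¬∃ t ∈ S, s = t + Pi.single i (ω i)
  · exact ⟨s, ⟨hs, hred⟩, rfl⟩
  push Not at hred
  obtain ⟨i, t, ht, rfl⟩ := hred
  obtain ⟨u, hu, hut⟩ := ih t (lt_add_of_pos_right t (Pi.single_pos.2 (hω i))) ht
  exact ⟨u, hu, by rw [hut, map_add, residue_single_self, add_zero]⟩

theorem residue_image_reduced [Finite ι] (hω : ∀ i, 0 < ω i) (S : Set (ι → ℕ)) :
    residue ω '' reduced ω S = residue ω '' S := by
  refine (Set.image_mono fun s hs => hs.1).antisymm ?_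
  rintro _ ⟨s, hs, rfl⟩
  obtain ⟨u, hu, hus⟩ := exists_mem_reduced_residue_eq hω hs
  exact ⟨u, hu, hus⟩

theorem reduced_translates_eq (hω : ∀ i, 0 < ω i) {T : Set (ι → ℕ)}
    (hT : Set.InjOn (residue ω) T) :
    reduced ω {x | ∃ t ∈ T, ∃ lam : ι → ℕ, x = t + fun k => lam k * ω k} = T := by
  ext x
  constructor
  · rintro ⟨⟨t, ht, lam, rfl⟩, hmin⟩
    suffices lam = 0 by simpa [this]
    by_contra! hlam
    obtain ⟨i, hi⟩ := Function.ne_iff.mp hlam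
    refine hmin i ⟨t + fun k => update lam i (lam i - 1) k * ω k, ⟨t, ht, _, rfl⟩, ?_⟩
    funext k
    by_cases hk : k = i
    · subst hk
      obtain ⟨m, hm⟩ := Nat.exists_eq_add_one_of_ne_zero hi
      simp only [Pi.add_apply, update_self, Pi.single_eq_same, hm, Nat.add_sub_cancel]
      ring
    · simp [hk]
  · intro hx
    refine ⟨⟨x, hx, 0, by ext; simp⟩, ?_⟩
    rintro i ⟨y, ⟨t, ht, lam, rfl⟩, hxy⟩
    obtain rfl : t = x := hT ht hx (by simp [hxy, residue_single_self, residue_mul_self])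
    have hxi := congrFun hxy i
    simp only [Pi.add_apply, Pi.single_eq_same] at hxi
    have := hω i
    omega

end Reduced
section Classes

variable {ι : Type*} (ω : ι → ℕ)

noncomputable def coordInf (C : Set (ι → ℕ)) : ι → ℕ := fun k => sInf ((fun t => t k) '' C)

def residueClasses (S₀ : Set (ι → ℕ)) : Set (Set (ι → ℕ)) :=
  {C | ∃ s ∈ S₀, C = {t | t ∈ S₀ ∧ residue ω t = residue ω s}}

variable {ω}

theorem residue_coordInf {C : Set (ι → ℕ)}
    (hC : ∀ s ∈ C, ∀ t ∈ C, residue ω s = residue ω t) {s : ι → ℕ} (hs : s ∈ C) :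
    residue ω (coordInf C) = residue ω s := by
  funext k
  obtain ⟨t, ht, htk⟩ := Nat.sInf_mem (⟨s k, s, hs, rfl⟩ : ((fun t => t k) '' C).Nonempty)
  rw [residue_apply, coordInf, ← htk, ← residue_apply, hC t ht s hs]

theorem residue_coordInf_class {S₀ : Set (ι → ℕ)} {s : ι → ℕ} (hs : s ∈ S₀) :
    residue ω (coordInf {t | t ∈ S₀ ∧ residue ω t = residue ω s}) = residue ω s :=
  residue_coordInf (fun _ ht _ ht' => ht.2.trans ht'.2.symm) ⟨hs, rfl⟩

theorem injOn_residue_coordInf (S₀ : Set (ι → ℕ)) :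
    Set.InjOn (residue ω) (coordInf '' residueClasses ω S₀) := by
  rintro _ ⟨_, ⟨s, hs, rfl⟩, rfl⟩ _ ⟨_, ⟨s', hs', rfl⟩, rfl⟩ h
  rw [residue_coordInf_class hs, residue_coordInf_class hs'] at h
  simp only [h]

theorem residue_image_coordInf (S₀ : Set (ι → ℕ)) :
    residue ω '' (coordInf '' residueClasses ω S₀) = residue ω '' S₀ := by
  ext r
  constructor
  · rintro ⟨_, ⟨_, ⟨s, hs, rfl⟩, rfl⟩, rfl⟩
    exact ⟨s, hs, (residue_coordInf_class hs).symm⟩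
  · rintro ⟨s, hs, rfl⟩
    exact ⟨_, ⟨_, ⟨s, hs, rfl⟩, rfl⟩, residue_coordInf_class hs⟩

end Classes

section Counting

variable {ι : Type*} [Fintype ι] {ω : ι → ℕ}

theorem residue_image_eq_map (hω : ∀ i, 0 < ω i) (S : AddSubmonoid (ι → ℕ)) :
    residue ω '' S = (AddSubgroup.closure {v | ∃ s ∈ S, v = fun k => (s k : ℤ)}).map
      (intResidue ω) := by
  have : ∀ k, NeZero (ω k) := fun k => ⟨(hω k).ne'⟩
  have himage : intResidue ω '' {v | ∃ s ∈ S, v = fun k => (s k : ℤ)} = S.map (residue ω) := by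
    ext
    simp [intResidue_natCast]
  -- in the finite group `∀ k, ZMod (ω k)` the submonoid `residue ω '' S` is already a subgroup
  rw [AddMonoidHom.map_closure, ← AddSubgroup.coe_toAddSubmonoid,
    AddSubgroup.closure_toAddSubmonoid_of_finite, himage, AddSubmonoid.closure_eq,
    AddSubmonoid.coe_map]

theorem card_map_intResidue_mul_index {G : AddSubgroup (ι → ℤ)} (hG : (intResidue ω).ker ≤ G) :
    Nat.card (G.map (intResidue ω)) * G.index = ∏ k, ω k := by
  rw [← G.index_map_eq (intResidue_surjective ω) hG, AddSubgroup.card_mul_index,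
    Nat.card_pi]
  simp only [Nat.card_zmod]

end Counting

end AffineSemigroup

open AffineSemigroup

theorem stmt_4_general (d n : ℕ) (hdn : d ≤ n)
    (ω : Fin d → ℕ) (hω : ∀ i, 0 < ω i)
    (a : Fin n → (Fin d → ℕ))
    (ha : ∀ (i : Fin d) (j : Fin n), (j : ℕ) = n - d + (i : ℕ) →
      a j = fun k => if k = i then ω i else 0)
    (S : AddSubmonoid (Fin d → ℕ))
    (hS : S = AddSubmonoid.closure (Set.range a))
    (ZS : AddSubgroup (Fin d → ℤ))
    (hZS : ZS = AddSubgroup.closure {v | ∃ s ∈ S, v = fun k => (s k : ℤ)})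
    (S₀ : Set (Fin d → ℕ))
    (hS₀ : S₀ = {s | s ∈ S ∧ ∀ i : Fin d,
      ¬ ∃ t ∈ S, (fun k => (t k : ℤ)) =
        fun k => (s k : ℤ) - (if k = i then (ω i : ℤ) else 0)})
    (H : AddSubgroup (Fin d → ℤ))
    (hH : H = AddSubgroup.closure
      {v | ∃ i : Fin d, v = fun k => if k = i then (ω i : ℤ) else 0})
    (classes : Set (Set (Fin d → ℕ)))
    (hclasses : classes = {C | ∃ s ∈ S₀,
      C = {t | t ∈ S₀ ∧ (fun k => (t k : ℤ) - (s k : ℤ)) ∈ H}})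
    (b : Set (Fin d → ℕ) → (Fin d → ℕ))
    (hb : ∀ C, b C = fun k => sInf ((fun t => t k) '' C))
    (S' : Set (Fin d → ℕ))
    (hS' : S' = {x | ∃ C ∈ classes, ∃ lam : Fin d → ℕ,
      x = b C + fun k => lam k * ω k}) :
    b '' classes = {x | x ∈ S' ∧ ∀ i : Fin d,
      ¬ ∃ t ∈ S', (fun k => (t k : ℤ)) =
        fun k => (x k : ℤ) - (if k = i then (ω i : ℤ) else 0)} ∧
    (b '' classes).ncard = (∏ i, ω i) / ZS.index := by
  have hωS : ∀ i, Pi.single i (ω i) ∈ S := fun i => by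
    rw [hS, funext (Pi.single_apply i (ω i)), ← ha i ⟨n - d + i, by omega⟩ rfl]
    exact AddSubmonoid.subset_closure (Set.mem_range_self _)
  obtain rfl : b = coordInf := funext hb
  obtain rfl : S₀ = reduced ω S := hS₀.trans (setOf_natCast_sub_single_eq_reduced ω S)
  obtain rfl : classes = residueClasses ω (reduced ω S) := by
    simp only [hclasses, hH, sub_mem_closure_single_iff]
    rfl
  have hinj := injOn_residue_coordInf (ω := ω) (reduced ω S)
  have hker : (intResidue ω).ker ≤ ZS := by
    rw [← closure_single_eq_ker, hZS, AddSubgroup.closure_le]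
    rintro _ ⟨i, rfl⟩
    exact AddSubgroup.subset_closure ⟨_, hωS i, funext fun k => by simp [Pi.single_apply]⟩
  have hcard : (coordInf '' residueClasses ω (reduced ω S)).ncard =
      Nat.card (ZS.map (intResidue ω)) := by
    rw [← hinj.ncard_image, residue_image_coordInf, residue_image_reduced hω,
      residue_image_eq_map hω, ← hZS]
    exact (Nat.card_coe_set_eq _).symm
  have hmul := card_map_intResidue_mul_index hker
  refine ⟨?_, ?_⟩
  · rw [setOf_natCast_sub_single_eq_reduced, hS', ← reduced_translates_eq hω hinj]
    simp only [Set.exists_mem_image]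
  · rw [hcard]
    exact Nat.eq_div_of_mul_eq_left
      (right_ne_zero_of_mul (hmul ▸ (Finset.prod_pos fun i _ => hω i).ne')) hmul

/-- With `S'` the Macaulayfication semigroup and
`B = {b_C : C a ∼-class of S₀}`, one has
`B = {b ∈ S' : b - ω_{n-d+i}e_i ∉ S' for all i}` and
`#B = D = (ω_{n-d+1}⋯ω_n)/[ℤ^d : ℤS]` (the Cohen–Macaulayness criterion for `K[S']`). -/
theorem stmt_4 (d n : ℕ) (hd : 1 ≤ d) (hdn : d ≤ n)
    (ω : Fin d → ℕ) (hω : ∀ i, 0 < ω i)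
    (a : Fin n → (Fin d → ℕ))
    (ha : ∀ (i : Fin d) (j : Fin n), (j : ℕ) = n - d + (i : ℕ) →
      a j = fun k => if k = i then ω i else 0)
    (S : AddSubmonoid (Fin d → ℕ))
    (hS : S = AddSubmonoid.closure (Set.range a))
    (ZS : AddSubgroup (Fin d → ℤ))
    (hZS : ZS = AddSubgroup.closure {v | ∃ s ∈ S, v = fun k => (s k : ℤ)})
    (hidx : ZS.index ≠ 0)
    (S₀ : Set (Fin d → ℕ))
    (hS₀ : S₀ = {s | s ∈ S ∧ ∀ i : Fin d,
      ¬ ∃ t ∈ S, (fun k => (t k : ℤ)) =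
        fun k => (s k : ℤ) - (if k = i then (ω i : ℤ) else 0)})
    (H : AddSubgroup (Fin d → ℤ))
    (hH : H = AddSubgroup.closure
      {v | ∃ i : Fin d, v = fun k => if k = i then (ω i : ℤ) else 0})
    (classes : Set (Set (Fin d → ℕ)))
    (hclasses : classes = {C | ∃ s ∈ S₀,
      C = {t | t ∈ S₀ ∧ (fun k => (t k : ℤ) - (s k : ℤ)) ∈ H}})
    (b : Set (Fin d → ℕ) → (Fin d → ℕ))
    (hb : ∀ C, b C = fun k => sInf ((fun t => t k) '' C))
    (S' : Set (Fin d → ℕ))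
    (hS' : S' = {x | ∃ C ∈ classes, ∃ lam : Fin d → ℕ,
      x = b C + fun k => lam k * ω k}) :
    b '' classes = {x | x ∈ S' ∧ ∀ i : Fin d,
      ¬ ∃ t ∈ S', (fun k => (t k : ℤ)) =
        fun k => (x k : ℤ) - (if k = i then (ω i : ℤ) else 0)} ∧
    (b '' classes).ncard = (∏ i, ω i) / ZS.index :=
  stmt_4_general d n hdn ω hω a ha S hS ZS hZS S₀ hS₀ H hH classes hclasses b hb S' hS'
end

section
/- Let K be a field, let d ≥ 2, and let M ⊆ K[y_1, …, y_d] be an ideal generated by monomials. If for every i ∈ {1, …, d} there exists a monomial y^α ∈ M with y_i ∤ y^α (i.e., α_i = 0), then the Krull dimension of the quotient ring K[y_1, …, y_d]/M is at most d − 2. -/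
/-!
Every prime `P ⊇ M` contains two distinct variables: some monomial of `M` lies in `P`, so one
of its variables `y_a` does, and a monomial of `M` avoiding `y_a` then puts a second variable
`y_b` into `P`. Hence `K[y]/P` is a quotient of a polynomial ring in `d - 2` variables and has
dimension at most `d - 2`. The dimension of `K[y]/M` is the supremum of the dimensions of the
`K[y]/P` over the primes `P ⊇ M`, since every chain of primes lies above its smallest member.
-/

open MvPolynomial

section KrullDim

variable {A : Type*} [CommRing A]

lemma ringKrullDim_quotient_eq_coheight (p : PrimeSpectrum A) :
    ringKrullDim (A ⧸ p.asIdeal) = Order.coheight p := by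
  rw [ringKrullDim_quotient, Order.coheight_eq_krullDim_Ici]
  have hset : PrimeSpectrum.zeroLocus (p.asIdeal : Set A) = Set.Ici p := by
    ext q
    simp [PrimeSpectrum.mem_zeroLocus, ← PrimeSpectrum.asIdeal_le_asIdeal]
  rw [hset]

lemma ringKrullDim_le_of_forall_isPrime {n : WithBot ℕ∞}
    (h : ∀ p : Ideal A, p.IsPrime → ringKrullDim (A ⧸ p) ≤ n) : ringKrullDim A ≤ n := by
  rw [ringKrullDim, Order.krullDim_eq_iSup_coheight]
  refine iSup_le fun p => ?_
  rw [← ringKrullDim_quotient_eq_coheight]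
  exact h p.asIdeal p.isPrime

lemma ringKrullDim_quotient_le_of_forall_isPrime {I : Ideal A} {n : WithBot ℕ∞}
    (h : ∀ p : Ideal A, p.IsPrime → I ≤ p → ringKrullDim (A ⧸ p) ≤ n) :
    ringKrullDim (A ⧸ I) ≤ n := by
  refine ringKrullDim_le_of_forall_isPrime fun q hq => ?_
  let p := q.comap (Ideal.Quotient.mk I)
  have hIp : I ≤ p := fun x hx => by simp [p, Ideal.Quotient.eq_zero_iff_mem.mpr hx]
  calc ringKrullDim ((A ⧸ I) ⧸ q)
      ≤ ringKrullDim (A ⧸ p) := ringKrullDim_le_of_surjective _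
        (Ideal.quotientMap_surjective (H := le_rfl) Ideal.Quotient.mk_surjective)
    _ ≤ n := h p (Ideal.IsPrime.comap _) hIp

end KrullDim

namespace MvPolynomial

variable {σ R : Type*} [CommRing R]

lemma exists_X_mem_of_monomial_mem {P : Ideal (MvPolynomial σ R)} [P.IsPrime]
    {α : σ →₀ ℕ} (h : monomial α (1 : R) ∈ P) : ∃ i, α i ≠ 0 ∧ X i ∈ P := by
  rw [monomial_eq, map_one, one_mul, Finsupp.prod, Ideal.IsPrime.prod_mem_iff] at h
  obtain ⟨i, hi, hXi⟩ := h
  exact ⟨i, Finsupp.mem_support_iff.mp hi,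
    Ideal.IsPrime.mem_of_pow_mem inferInstance _ hXi⟩

lemma aeval_X_notMem_surjective (I : Ideal (MvPolynomial σ R)) :
    Function.Surjective
      (aeval fun i : {i // X i ∉ I} => Ideal.Quotient.mk I (X (i : σ)) :
        MvPolynomial {i // X i ∉ I} R →ₐ[R] MvPolynomial σ R ⧸ I) := by
  classical
  let ψ : MvPolynomial σ R →ₐ[R] MvPolynomial {i // X i ∉ I} R :=
    aeval fun i => if h : X i ∈ I then 0 else X ⟨i, h⟩
  have hcomp : (aeval fun i : {i // X i ∉ I} => Ideal.Quotient.mk I (X (i : σ))).comp ψ =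
      Ideal.Quotient.mkₐ R I := by
    refine algHom_ext fun i => ?_
    by_cases h : X i ∈ I
    · simp [ψ, h, Ideal.Quotient.eq_zero_iff_mem.mpr h]
    · simp [ψ, h]
  refine Function.Surjective.of_comp (g := ψ) ?_
  rw [← AlgHom.coe_comp, hcomp]
  exact Ideal.Quotient.mkₐ_surjective R I

lemma ringKrullDim_quotient_le [IsNoetherianRing R] [Finite σ] (I : Ideal (MvPolynomial σ R)) :
    ringKrullDim (MvPolynomial σ R ⧸ I) ≤ ringKrullDim R + Nat.card {i // X i ∉ I} := by
  rw [← ringKrullDim_of_isNoetherianRing]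
  exact ringKrullDim_le_of_surjective _ (aeval_X_notMem_surjective I)

lemma natCard_X_notMem_le [Finite σ] {P : Ideal (MvPolynomial σ R)} {a b : σ} (hab : a ≠ b)
    (ha : X a ∈ P) (hb : X b ∈ P) : Nat.card {i // X i ∉ P} ≤ Nat.card σ - 2 := by
  classical
  have := Fintype.ofFinite σ
  calc Nat.card {i // X i ∉ P} = (Finset.univ.filter fun i => X i ∉ P).card := by
        rw [Nat.card_eq_fintype_card, Fintype.card_subtype]
    _ ≤ ({a, b}ᶜ : Finset σ).card := Finset.card_le_card fun i hi => by
        simp only [Finset.mem_filter, Finset.mem_univ, true_and] at hi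
        simp only [Finset.mem_compl, Finset.mem_insert, Finset.mem_singleton, not_or]
        exact ⟨fun h => hi (h ▸ ha), fun h => hi (h ▸ hb)⟩
    _ = Nat.card σ - 2 := by
        rw [Finset.card_compl, Finset.card_pair hab, Nat.card_eq_fintype_card]

lemma exists_ne_X_mem_of_forall_monomial_mem [Nonempty σ] {M P : Ideal (MvPolynomial σ R)}
    [P.IsPrime] (hMP : M ≤ P) (hvar : ∀ i, ∃ α : σ →₀ ℕ, α i = 0 ∧ monomial α (1 : R) ∈ M) :
    ∃ a b : σ, a ≠ b ∧ X a ∈ P ∧ X b ∈ P := by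
  obtain ⟨α₀, -, hα₀⟩ := hvar (Classical.arbitrary σ)
  obtain ⟨a, -, ha⟩ := exists_X_mem_of_monomial_mem (hMP hα₀)
  obtain ⟨α, hαa, hα⟩ := hvar a
  obtain ⟨b, hαb, hb⟩ := exists_X_mem_of_monomial_mem (hMP hα)
  exact ⟨a, b, fun h => hαb (h ▸ hαa), ha, hb⟩

end MvPolynomial

theorem stmt_5_general (K : Type*) [Field K] (d : ℕ) (hd : 2 ≤ d)
    (M : Ideal (MvPolynomial (Fin d) K))
    (hvar : ∀ i : Fin d, ∃ α : Fin d →₀ ℕ,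
      α i = 0 ∧ MvPolynomial.monomial α (1 : K) ∈ M) :
    ringKrullDim (MvPolynomial (Fin d) K ⧸ M) ≤ ((d - 2 : ℕ) : WithBot (WithTop ℕ)) := by
  have : Nonempty (Fin d) := ⟨⟨0, by omega⟩⟩
  refine ringKrullDim_quotient_le_of_forall_isPrime fun P _ hMP => ?_
  obtain ⟨a, b, hab, ha, hb⟩ := exists_ne_X_mem_of_forall_monomial_mem hMP hvar
  calc ringKrullDim (MvPolynomial (Fin d) K ⧸ P)
      ≤ ringKrullDim K + Nat.card {i // X i ∉ P} := ringKrullDim_quotient_le P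
    _ ≤ ((d - 2 : ℕ) : WithBot ℕ∞) := by
        rw [ringKrullDim_eq_zero_of_field, zero_add]
        exact_mod_cast Nat.card_fin d ▸ natCard_X_notMem_le hab ha hb

/-- Let `M ⊆ K[y_1,…,y_d]` be a monomial ideal (`d ≥ 2`). If for every
`i` there is a monomial `y^α ∈ M` with `y_i ∤ y^α` (i.e. `α i = 0`), then the Krull
dimension of `K[y_1,…,y_d]/M` is at most `d - 2`. -/
theorem stmt_5 (K : Type*) [Field K] (d : ℕ) (hd : 2 ≤ d)
    (M : Ideal (MvPolynomial (Fin d) K))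
    (hmono : ∃ G : Set (Fin d →₀ ℕ),
      M = Ideal.span ((fun α => MvPolynomial.monomial α (1 : K)) '' G))
    (hvar : ∀ i : Fin d, ∃ α : Fin d →₀ ℕ,
      α i = 0 ∧ MvPolynomial.monomial α (1 : K) ∈ M) :
    ringKrullDim (MvPolynomial (Fin d) K ⧸ M) ≤ ((d - 2 : ℕ) : WithBot (WithTop ℕ)) :=
  stmt_5_general K d hd M hvar
end

section
/- With q = ⌊(m_1 − 1)/(n − 1)⌋ and l = m_1 − q(n − 1) ∈ {1, …, n−1}, the following hold: (a) q + d + 1 = min{b ∈ ℤ⁺ : b·m_1 ∈ ℕm_2 + ⋯ + ℕm_n}; (b) q + 1 = min{b ∈ ℤ⁺ : b·m_n ∈ ℕm_1 + ⋯ + ℕm_{n−1}}; (c) (q + d)·a_1 + a_i = a_{l+i} + q·a_n + d·a_{n+1} in ℕ² for all i ∈ {1, …, n − l}. -/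
/-!
Writing `mᵢ = m₁ + (i - 1) d`, a combination `∑ cᵢ mᵢ` equals `s m₁ + t d` with `s = ∑ cᵢ` and
`t = ∑ cᵢ (i - 1)`, and the range of the indices bounds `t` in terms of `s`. An equality
`b m₁ = s m₁ + t d` (resp. `b mₙ = s m₁ + t d`) reduces to `x m₁ = y d`, so by coprimality
`x = k d` and `y = k m₁` with `k ≥ 1`. Then `y ≥ m₁ > q (n - 1)` together with the bound on `t`
gives `s > q` (resp. `b > q`), and in (a) also `b - s ≥ d`. The minima are attained by
`(q + d + 1) m₁ = m_{l+1} + q mₙ` and `(q + 1) mₙ = (q + d) m₁ + m_{n-l}`, and (c) is a direct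
computation from `m₁ = q (n - 1) + l`.
-/

open Finset

theorem Nat.Coprime.exists_eq_mul_of_mul_eq_mul {m d x y : ℕ} (h : m.Coprime d)
    (hxy : x * m = y * d) : ∃ k, x = k * d ∧ y = k * m := by
  obtain rfl | hm := m.eq_zero_or_pos
  · obtain rfl : d = 1 := Nat.coprime_zero_left d |>.mp h
    exact ⟨x, by simp, by simpa using hxy.symm⟩
  obtain ⟨k, rfl⟩ : m ∣ y := h.dvd_of_dvd_mul_right ⟨x, by rw [← hxy, mul_comm]⟩
  refine ⟨k, Nat.eq_of_mul_eq_mul_right hm ?_, mul_comm m k⟩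
  rw [hxy]; ring

theorem exists_sum_mul_eq_mul_add_mul {ι R : Type*} [DecidableEq ι] [Semiring R]
    {s : Finset ι} {j k : ι} (hj : j ∈ s) (hk : k ∈ s) (f : ι → R) (u v : R) :
    ∃ c : ι → R, ∑ i ∈ s, c i * f i = u * f j + v * f k :=
  ⟨Pi.single j u + Pi.single k v, by
    simp [add_mul, sum_add_distrib, Pi.single_apply, hj, hk]⟩

theorem sum_mul_le_mul_sum {ι : Type*} {s : Finset ι} {f : ι → ℕ} {K : ℕ}
    (hf : ∀ i ∈ s, f i ≤ K) (c : ι → ℕ) : ∑ i ∈ s, c i * f i ≤ K * ∑ i ∈ s, c i := by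
  rw [mul_sum]
  exact sum_le_sum fun i hi => by rw [mul_comm K]; exact Nat.mul_le_mul_left _ (hf i hi)

theorem mul_sum_le_sum_mul {ι : Type*} {s : Finset ι} {f : ι → ℕ} {K : ℕ}
    (hf : ∀ i ∈ s, K ≤ f i) (c : ι → ℕ) : K * ∑ i ∈ s, c i ≤ ∑ i ∈ s, c i * f i := by
  rw [mul_sum]
  exact sum_le_sum fun i hi => by rw [mul_comm K]; exact Nat.mul_le_mul_left _ (hf i hi)

theorem add_add_one_le_of_mul_eq {m₁ d e q b s t : ℕ} (hcop : m₁.Coprime d) (hq : q * e < m₁)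
    (hb : 0 < b) (h : b * m₁ = s * m₁ + t * d) (hst : s ≤ t) (hts : t ≤ e * s) :
    q + d + 1 ≤ b := by
  obtain ⟨u, rfl⟩ : ∃ u, b = s + u :=
    Nat.exists_eq_add_of_le (Nat.le_of_mul_le_mul_right (h ▸ Nat.le_add_right _ _) (by omega))
  obtain ⟨k, rfl, rfl⟩ := hcop.exists_eq_mul_of_mul_eq_mul (by linarith : u * m₁ = t * d)
  obtain rfl | hk := k.eq_zero_or_pos
  · simp_all
  have hqs : q < s := Nat.lt_of_mul_lt_mul_right (a := e) <| by
    calc q * e < m₁ := hq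
      _ ≤ k * m₁ := Nat.le_mul_of_pos_left m₁ hk
      _ ≤ s * e := by rw [mul_comm s]; exact hts
  have : d ≤ k * d := Nat.le_mul_of_pos_left d hk
  omega

theorem add_one_le_of_mul_eq {m₁ d e q b s t : ℕ} (hcop : m₁.Coprime d) (hd : 0 < d)
    (hq : q * e < m₁) (hb : 0 < b) (h : b * (m₁ + e * d) = s * m₁ + t * d)
    (hts : t + s ≤ e * s) : q + 1 ≤ b := by
  obtain ⟨u, rfl⟩ : ∃ u, s = b + u := Nat.exists_eq_add_of_le <| by
    by_contra! hsb
    have h1 := Nat.mul_le_mul_right (m₁ + e * d) (Nat.succ_le_of_lt hsb)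
    have h2 := Nat.mul_le_mul_right d (le_of_add_le_left hts)
    nlinarith
  have hbe : b * e * d = u * m₁ + t * d := by linarith
  obtain ⟨v, hv⟩ : ∃ v, b * e = t + v :=
    Nat.exists_eq_add_of_le (Nat.le_of_mul_le_mul_right (hbe ▸ Nat.le_add_left _ _) hd)
  obtain ⟨k, rfl, rfl⟩ :=
    hcop.exists_eq_mul_of_mul_eq_mul (by rw [hv, add_mul] at hbe; linarith : u * m₁ = v * d)
  obtain rfl | hk := k.eq_zero_or_pos
  · nlinarith
  refine Nat.lt_of_mul_lt_mul_right (a := e) ?_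
  calc q * e < m₁ := hq
    _ ≤ k * m₁ := Nat.le_mul_of_pos_left m₁ hk
    _ ≤ b * e := by omega

def arithSeq (m₁ d i : ℕ) : ℕ := m₁ + (i - 1) * d

section arithSeq

variable {m₁ d n q l : ℕ}

theorem sum_mul_arithSeq (s : Finset ℕ) (c : ℕ → ℕ) :
    ∑ i ∈ s, c i * arithSeq m₁ d i = (∑ i ∈ s, c i) * m₁ + (∑ i ∈ s, c i * (i - 1)) * d := by
  simp only [arithSeq, sum_mul, ← sum_add_distrib]
  exact sum_congr rfl fun i _ => by ring

theorem arithSeq_sub_arithSeq {j k : ℕ} (hj : 1 ≤ j) (hjk : j ≤ k) :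
    arithSeq m₁ d k - arithSeq m₁ d j = (k - j) * d := by
  simp only [arithSeq, Nat.add_sub_add_left, ← Nat.sub_mul]
  congr 1; omega

theorem isLeast_mul_arithSeq_one (hcop : m₁.Coprime d) (hm₁ : m₁ = q * (n - 1) + l)
    (hl : 0 < l) (hln : l < n) :
    IsLeast {b : ℕ | 0 < b ∧
      ∃ c : ℕ → ℕ, b * arithSeq m₁ d 1 = ∑ i ∈ Icc 2 n, c i * arithSeq m₁ d i} (q + d + 1) := by
  refine ⟨⟨by omega, ?_⟩, ?_⟩
  · obtain ⟨c, hc⟩ := exists_sum_mul_eq_mul_add_mul (s := Icc 2 n) (j := l + 1) (k := n)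
      (by simp; omega) (by simp; omega) (arithSeq m₁ d) 1 q
    refine ⟨c, (hc.trans ?_).symm⟩
    simp only [arithSeq, Nat.add_sub_cancel, Nat.sub_self, hm₁]
    ring
  · rintro b ⟨hb, c, hc⟩
    rw [sum_mul_arithSeq, arithSeq, Nat.sub_self, zero_mul, add_zero] at hc
    refine add_add_one_le_of_mul_eq (e := n - 1) hcop (by nlinarith) hb hc ?_ ?_
    · simpa using mul_sum_le_sum_mul (f := fun i => i - 1) (K := 1)
        (fun i hi => by simp at hi; omega) c
    · exact sum_mul_le_mul_sum (fun i hi => by simp at hi; omega) c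

theorem isLeast_mul_arithSeq_last (hcop : m₁.Coprime d) (hd : 0 < d)
    (hm₁ : m₁ = q * (n - 1) + l) (hl : 0 < l) (hln : l < n) :
    IsLeast {b : ℕ | 0 < b ∧
      ∃ c : ℕ → ℕ, b * arithSeq m₁ d n = ∑ i ∈ Icc 1 (n - 1), c i * arithSeq m₁ d i}
      (q + 1) := by
  refine ⟨⟨by omega, ?_⟩, ?_⟩
  · obtain ⟨c, hc⟩ := exists_sum_mul_eq_mul_add_mul (s := Icc 1 (n - 1)) (j := 1) (k := n - l)
      (by simp; omega) (by simp; omega) (arithSeq m₁ d) (q + d) 1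
    refine ⟨c, (hc.trans ?_).symm⟩
    obtain ⟨w, rfl⟩ : ∃ w, n = l + w + 1 := ⟨n - l - 1, by omega⟩
    simp only [arithSeq, Nat.add_sub_cancel, Nat.sub_self, show l + w + 1 - l - 1 = w by omega,
      hm₁]
    ring
  · rintro b ⟨hb, c, hc⟩
    rw [sum_mul_arithSeq, arithSeq] at hc
    refine add_one_le_of_mul_eq (e := n - 1) hcop hd (by nlinarith) hb hc ?_
    obtain ⟨k, rfl⟩ : ∃ k, n = k + 2 := ⟨n - 2, by omega⟩
    have := sum_mul_le_mul_sum (s := Icc 1 (k + 1)) (f := fun i => i - 1) (K := k)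
      (fun i hi => by simp at hi; omega) c
    rw [show k + 2 - 1 = k + 1 by omega]
    linarith

end arithSeq

theorem smul_add_eq_add_smul_add_smul {m₁ d n q l i : ℕ} {a : ℕ → ℕ × ℕ}
    (ha : ∀ j, a j = if j = n + 1 then (0, arithSeq m₁ d n)
      else (arithSeq m₁ d j, arithSeq m₁ d n - arithSeq m₁ d j))
    (hm₁ : m₁ = q * (n - 1) + l) (hi : 1 ≤ i) (hin : i ≤ n - l) :
    (q + d) • a 1 + a i = a (l + i) + q • a n + d • a (n + 1) := by
  have ha' : ∀ j, 1 ≤ j → j ≤ n → a j = (m₁ + (j - 1) * d, (n - j) * d) := fun j hj hjn => by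
    rw [ha, if_neg (by omega), arithSeq_sub_arithSeq hj hjn, arithSeq]
  rw [ha' 1 le_rfl (by omega), ha' i hi (by omega), ha' (l + i) (by omega) (by omega),
    ha' n (by omega) le_rfl, ha, if_pos rfl, arithSeq]
  simp only [Prod.smul_mk, smul_eq_mul, Prod.mk_add_mk, Prod.mk.injEq, Nat.sub_self]
  subst hm₁
  zify [show 1 ≤ n by omega, show l + i ≤ n by omega, show 1 ≤ l + i by omega, hi,
    show i ≤ n by omega]
  constructor <;> ring

/-- For the arithmetic sequence `m_i = m_1 + (i-1)d` with
`gcd(m_1,d)=1`, `q = ⌊(m_1-1)/(n-1)⌋` and `l = m_1 - q(n-1)`: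
(a) `q+d+1` is the least positive `b` with `b·m_1 ∈ ℕm_2 + ⋯ + ℕm_n`;
(b) `q+1` is the least positive `b` with `b·m_n ∈ ℕm_1 + ⋯ + ℕm_{n-1}`;
(c) `(q+d)·a_1 + a_i = a_{l+i} + q·a_n + d·a_{n+1}` for all `1 ≤ i ≤ n-l`. -/
theorem stmt_6 (n m₁ d : ℕ) (hn : 2 ≤ n) (hm₁ : 0 < m₁) (hd : 0 < d)
    (hgcd : Nat.gcd m₁ d = 1)
    (m : ℕ → ℕ) (hm : ∀ i, m i = m₁ + (i - 1) * d)
    (a : ℕ → ℕ × ℕ)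
    (ha : ∀ i, a i = if i = n + 1 then (0, m n) else (m i, m n - m i))
    (q l : ℕ) (hq : q = (m₁ - 1) / (n - 1)) (hl : l = m₁ - q * (n - 1)) :
    IsLeast {b : ℕ | 0 < b ∧
      ∃ c : ℕ → ℕ, b * m 1 = ∑ i ∈ Finset.Icc 2 n, c i * m i} (q + d + 1) ∧
    IsLeast {b : ℕ | 0 < b ∧
      ∃ c : ℕ → ℕ, b * m n = ∑ i ∈ Finset.Icc 1 (n - 1), c i * m i} (q + 1) ∧
    (∀ i, 1 ≤ i → i ≤ n - l →
      (q + d) • a 1 + a i = a (l + i) + q • a n + d • a (n + 1)) := by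
  obtain rfl : m = arithSeq m₁ d := funext hm
  have hq_le : q * (n - 1) ≤ m₁ - 1 := hq ▸ Nat.div_mul_le_self _ _
  have hq_lt : m₁ - 1 < q * (n - 1) + (n - 1) := hq ▸ Nat.lt_div_mul_add (by omega)
  have hm₁_eq : m₁ = q * (n - 1) + l := by omega
  exact ⟨isLeast_mul_arithSeq_one hgcd hm₁_eq (by omega) (by omega),
    isLeast_mul_arithSeq_last hgcd hd hm₁_eq (by omega) (by omega),
    fun i hi hin => smul_add_eq_add_smul_add_smul ha hm₁_eq hi hin⟩
end

section
/- For every r ∈ {2, …, n−1}, one has m_r ∈ Σ_{i ∈ {1,…,n}\{r}} ℕm_i (i.e., m_r is a nonnegative integer combination of the remaining m_i) if and only if r > m_1. -/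
/-!
Write a combination `∑ cᵢ mᵢ` as `k m₁ + S d` with `k = ∑ cᵢ`. Comparing with `m_r = m₁ + (r-1) d`
modulo `d` and using `gcd(m₁, d) = 1` gives `k ≡ 1 (mod d)`. A single summand (`k = 1`) would be
`m_r` itself and `k = 0` gives `0`, so `k ≥ d + 1`, whence `m₁ + (r-1) d ≥ (d+1) m₁`, i.e. `r > m₁`. Conversely, for
`r > m₁` one has `m_r = d m₁ + m_{r - m₁}`.
-/

open Finset

namespace arithSeq

variable {m₁ d : ℕ}

theorem inj (hd : 0 < d) {i j : ℕ} (hi : i ≠ 0) (hj : j ≠ 0)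
    (h : arithSeq m₁ d i = arithSeq m₁ d j) : i = j := by
  have := Nat.eq_of_mul_eq_mul_right hd (Nat.add_left_cancel h)
  omega

theorem sum_mul (s : Finset ℕ) (c : ℕ → ℕ) :
    ∑ i ∈ s, c i * arithSeq m₁ d i = (∑ i ∈ s, c i) * m₁ + (∑ i ∈ s, c i * (i - 1)) * d := by
  rw [Finset.sum_mul, Finset.sum_mul, ← sum_add_distrib]
  exact sum_congr rfl fun i _ => by rw [arithSeq]; ring

theorem eq_mul_one_add_sub {r : ℕ} (h : m₁ < r) :
    arithSeq m₁ d r = d * arithSeq m₁ d 1 + arithSeq m₁ d (r - m₁) := by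
  obtain ⟨s, rfl⟩ := Nat.exists_eq_add_of_lt h
  simp only [arithSeq, Nat.sub_self, zero_mul, add_zero, show m₁ + s + 1 - 1 = m₁ + s by omega,
    show m₁ + s + 1 - m₁ - 1 = s by omega]
  ring

end arithSeq

theorem Finset.exists_sum_mul_eq_of_sum_eq_one {ι : Type*} {s : Finset ι} {c f : ι → ℕ}
    (h : ∑ i ∈ s, c i = 1) : ∃ j ∈ s, ∑ i ∈ s, c i * f i = f j := by
  classical
  obtain ⟨j, hj, hcj⟩ := exists_ne_zero_of_sum_ne_zero (h ▸ one_ne_zero)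
  have hsplit := sum_erase_add s c hj
  have hcj : c j = 1 := by omega
  have hrest : ∀ i ∈ s.erase j, c i = 0 := sum_eq_zero_iff.mp (by omega)
  refine ⟨j, hj, ?_⟩
  rw [sum_eq_single_of_mem j hj fun i hi hij => by rw [hrest i (mem_erase.mpr ⟨hij, hi⟩), zero_mul],
    hcj, one_mul]

theorem Finset.exists_eq_sum_mul_of_mem {ι : Type*} [DecidableEq ι] {s : Finset ι} {i j : ι}
    (hi : i ∈ s) (hj : j ∈ s) (a : ℕ) (f : ι → ℕ) :
    ∃ c : ι → ℕ, a * f i + f j = ∑ k ∈ s, c k * f k := by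
  refine ⟨Pi.single i a + Pi.single j 1, ?_⟩
  simp only [Pi.add_apply, add_mul, sum_add_distrib, Pi.single_apply, ite_mul, zero_mul, one_mul,
    sum_ite_eq', hi, hj, if_true]

theorem le_of_add_mul_eq_of_coprime {m₁ d k a b : ℕ} (hcop : Nat.Coprime m₁ d) (hk : 2 ≤ k)
    (h : m₁ + a * d = k * m₁ + b * d) : m₁ ≤ a := by
  obtain ⟨j, rfl⟩ := Nat.exists_eq_add_of_le' hk
  have h' : (j + 1) * m₁ + b * d = a * d := by linarith
  have hdvd : d ∣ j + 1 :=
    hcop.symm.dvd_of_dvd_mul_right <| (Nat.dvd_add_left (dvd_mul_left d b)).mp (h' ▸ dvd_mul_left d a)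
  have hdle : d ≤ j + 1 := Nat.le_of_dvd j.succ_pos hdvd
  refine Nat.le_of_mul_le_mul_right ?_ (Nat.pos_of_dvd_of_pos hdvd j.succ_pos)
  calc m₁ * d ≤ (j + 1) * m₁ := by rw [mul_comm]; exact Nat.mul_le_mul_right m₁ hdle
    _ ≤ a * d := by omega

theorem lt_of_eq_sum_mul_arithSeq {m₁ d r : ℕ} (hm₁ : 0 < m₁) (hd : 0 < d)
    (hcop : Nat.Coprime m₁ d) {s : Finset ℕ} (hs₀ : 0 ∉ s) (hr : r ∉ s) (hr₀ : r ≠ 0) {c : ℕ → ℕ}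
    (h : arithSeq m₁ d r = ∑ i ∈ s, c i * arithSeq m₁ d i) : m₁ < r := by
  have hkS : m₁ + (r - 1) * d = _ := h.trans (arithSeq.sum_mul s c)
  rcases lt_trichotomy (∑ i ∈ s, c i) 1 with hk | hk | hk
  · rw [Nat.lt_one_iff.mp hk, zero_mul, zero_add] at hkS
    have hS : ∑ i ∈ s, c i * (i - 1) = 0 :=
      sum_eq_zero fun i hi => by rw [(sum_eq_zero_iff.mp (Nat.lt_one_iff.mp hk)) i hi, zero_mul]
    rw [hS, zero_mul] at hkS
    omega
  · obtain ⟨j, hj, hsum⟩ := exists_sum_mul_eq_of_sum_eq_one (f := arithSeq m₁ d) hk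
    have := arithSeq.inj hd hr₀ (ne_of_mem_of_not_mem hj hs₀) (h.trans hsum)
    exact absurd (this ▸ hj) hr
  · have := le_of_add_mul_eq_of_coprime hcop hk hkS
    omega

theorem stmt_7_general (n m₁ d : ℕ) (hm₁ : 0 < m₁) (hd : 0 < d)
    (hgcd : Nat.gcd m₁ d = 1)
    (m : ℕ → ℕ) (hm : ∀ i, m i = m₁ + (i - 1) * d)
    (r : ℕ) (hr₁ : 2 ≤ r) (hr₂ : r ≤ n - 1) :
    (∃ c : ℕ → ℕ, m r = ∑ i ∈ (Finset.Icc 1 n).erase r, c i * m i) ↔ m₁ < r := by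
  obtain rfl : m = arithSeq m₁ d := funext hm
  constructor
  · rintro ⟨c, hc⟩
    exact lt_of_eq_sum_mul_arithSeq hm₁ hd hgcd (by simp) (by simp) (by omega) hc
  · intro hlt
    rw [arithSeq.eq_mul_one_add_sub hlt]
    exact exists_eq_sum_mul_of_mem (by simp; omega) (by simp; omega) d _

/-- For the arithmetic sequence `m_i = m_1 + (i-1)d` with
`gcd(m_1,d)=1` and `n ≥ 3`: for `r ∈ {2, …, n-1}`, `m_r` is a nonnegative integer
combination of the remaining `m_i` if and only if `r > m_1`. -/
theorem stmt_7 (n m₁ d : ℕ) (hn : 3 ≤ n) (hm₁ : 0 < m₁) (hd : 0 < d)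
    (hgcd : Nat.gcd m₁ d = 1)
    (m : ℕ → ℕ) (hm : ∀ i, m i = m₁ + (i - 1) * d)
    (r : ℕ) (hr₁ : 2 ≤ r) (hr₂ : r ≤ n - 1) :
    (∃ c : ℕ → ℕ, m r = ∑ i ∈ (Finset.Icc 1 n).erase r, c i * m i) ↔ m₁ < r :=
  stmt_7_general n m₁ d hm₁ hd hgcd m hm r hr₁ hr₂
end

section
/- Suppose 2 ≤ m_1. Then S \ P_2 = {μ·a_1 + a_2 + λ·a_{n+1} : 0 ≤ μ ≤ q + d − 1 + ε, λ ∈ ℕ}, where ε = 1 if l = n − 1 and ε = 0 otherwise. -/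
/-!
The shear `(x, y) ↦ (x, x + y)` is injective on `ℕ²` and sends `aᵢ` (`i ≤ n`) to
`(m₁ + (i - 1) d, mₙ)` and `aₙ₊₁` to `(0, mₙ)`. So a sum of generators is recorded by the number
`k` of summands among `a₁, …, aₙ`, the total `t` of their indices minus one, and the number `λ`
of copies of `aₙ₊₁`: its image is `(k m₁ + t d, (k + λ) mₙ)`. With all generators the pairs
`(k, t)` that occur are those with `t ≤ k (n - 1)`; without `a₂` they are those that moreover
have `t ≠ 1`, because for `n ≥ 4` every other such `t` is a sum of `k` numbers from
`{0, 2, 3, …, n - 1}`. Hence `S \ P₂` consists of elements with `t = 1`, namely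
`μ a₁ + a₂ + λ aₙ₊₁` with `k = μ + 1`, that admit no second description with `t ≠ 1`. Since
`gcd(m₁, d) = 1`, the other solutions of `k' m₁ + t' d = (μ + 1) m₁ + d` are
`(k', t') = (μ + 1 - j d, 1 + j m₁)` with `j ≥ 1`; the cheapest one, `j = 1` with `d` more copies
of `aₙ₊₁`, is admissible exactly when `m₁ < (μ + 1 - d)(n - 1)`, i.e. when
`μ ≥ ⌊m₁ / (n - 1)⌋ + d`, and `⌊m₁ / (n - 1)⌋ = q + ε`.
-/

def shear : ℕ × ℕ →+ ℕ × ℕ :=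
  (AddMonoidHom.fst ℕ ℕ).prod (AddMonoidHom.fst ℕ ℕ + AddMonoidHom.snd ℕ ℕ)

@[simp]
lemma shear_apply (x : ℕ × ℕ) : shear x = (x.1, x.1 + x.2) := rfl

lemma shear_injective : Function.Injective shear := by
  intro x y h
  simp only [shear_apply, Prod.mk.injEq] at h
  exact Prod.ext h.1 (by omega)

/-- A triple `(k, t, λ)` counts `k` generators among `a₁, …, aₙ` whose indices minus one add up
to `t`, together with `λ` copies of `aₙ₊₁`. -/
def countMap (n m₁ d : ℕ) : ℕ × ℕ × ℕ →+ ℕ × ℕ where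
  toFun w := (w.1 * m₁ + w.2.1 * d, (w.1 + w.2.2) * (m₁ + (n - 1) * d))
  map_zero' := by simp
  map_add' v w := by ext <;> simp only [Prod.fst_add, Prod.snd_add] <;> ring

@[simp]
lemma countMap_apply (n m₁ d k t lam : ℕ) :
    countMap n m₁ d (k, t, lam) = (k * m₁ + t * d, (k + lam) * (m₁ + (n - 1) * d)) := rfl

lemma countMap_add_left (n m₁ d k t lam : ℕ) :
    countMap n m₁ d (k + d, t, lam) = countMap n m₁ d (k, t + m₁, lam + d) := by
  simp only [countMap_apply, Prod.mk.injEq]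
  constructor <;> ring

def genCounts (n i : ℕ) : ℕ × ℕ × ℕ := if i = n + 1 then (0, 0, 1) else (1, i - 1, 0)

lemma genCounts_of_le {n i : ℕ} (hi : i ≤ n) : genCounts n i = (1, i - 1, 0) :=
  if_neg (by omega)

lemma genCounts_self_add_one (n : ℕ) : genCounts n (n + 1) = (0, 0, 1) := if_pos rfl

def countCone (n : ℕ) : AddSubmonoid (ℕ × ℕ × ℕ) where
  carrier := {w | w.2.1 ≤ w.1 * (n - 1)}
  add_mem' {v w} hv hw := by
    simp only [Set.mem_ofPred_eq, Prod.fst_add, Prod.snd_add, add_mul] at *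
    omega
  zero_mem' := by simp

@[simp]
lemma mem_countCone {n : ℕ} {w : ℕ × ℕ × ℕ} : w ∈ countCone n ↔ w.2.1 ≤ w.1 * (n - 1) :=
  Iff.rfl

def countConeNeOne (n : ℕ) : AddSubmonoid (ℕ × ℕ × ℕ) where
  carrier := {w | w.2.1 ≤ w.1 * (n - 1) ∧ w.2.1 ≠ 1}
  add_mem' {v w} hv hw := by
    simp only [Set.mem_ofPred_eq, Prod.fst_add, Prod.snd_add, add_mul] at *
    omega
  zero_mem' := by simp

@[simp]
lemma mem_countConeNeOne {n : ℕ} {w : ℕ × ℕ × ℕ} :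
    w ∈ countConeNeOne n ↔ w.2.1 ≤ w.1 * (n - 1) ∧ w.2.1 ≠ 1 :=
  Iff.rfl

lemma closure_genCounts_le_countCone (n : ℕ) :
    AddSubmonoid.closure (genCounts n '' Set.Icc 1 (n + 1)) ≤ countCone n := by
  rw [AddSubmonoid.closure_le]
  rintro _ ⟨i, ⟨-, hi⟩, rfl⟩
  rcases (show i ≤ n ∨ i = n + 1 by omega) with hi | rfl
  · simp only [SetLike.mem_coe, genCounts_of_le hi, mem_countCone, one_mul]
    omega
  · simp [genCounts_self_add_one]

lemma mk_zero_mem_closure_genCounts {n : ℕ} (hn : 4 ≤ n) :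
    ∀ k t, t ≤ k * (n - 1) → t ≠ 1 →
      (k, t, 0) ∈ AddSubmonoid.closure (genCounts n '' (Set.Icc 1 (n + 1) \ {2}))
  | 0, t, ht, _ => by
    obtain rfl : t = 0 := by simpa using ht
    exact AddSubmonoid.zero_mem _
  | k + 1, t, ht, ht₁ => by
    have hk : k * (n - 1) = 0 ∨ n - 1 ≤ k * (n - 1) := by
      rcases k with _ | k
      · left; simp
      · right; exact Nat.le_mul_of_pos_left _ (Nat.succ_pos k)
    rw [add_one_mul] at ht
    -- every `t ≠ 1` splits off a part `j ∈ {0, 2, …, n - 1}` leaving a remainder `≠ 1`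
    obtain ⟨j, hj₁, hjn, hjt, hrest, hrest₁⟩ :
        ∃ j, j ≠ 1 ∧ j ≤ n - 1 ∧ j ≤ t ∧ t - j ≤ k * (n - 1) ∧ t - j ≠ 1 := by
      by_cases h : t ≤ n - 1
      · exact ⟨t, ht₁, h, le_rfl, by omega, by omega⟩
      by_cases h' : t = n
      · exact ⟨n - 2, by omega, by omega, by omega, by omega, by omega⟩
      · exact ⟨n - 1, by omega, le_rfl, by omega, by omega, by omega⟩
    have hsplit : (k + 1, t, 0) = genCounts n (j + 1) + (k, t - j, 0) := by
      rw [genCounts_of_le (by omega)]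
      ext <;> simp <;> omega
    rw [hsplit]
    refine AddSubmonoid.add_mem _ (AddSubmonoid.subset_closure ⟨j + 1, ⟨?_, ?_⟩, rfl⟩)
      (mk_zero_mem_closure_genCounts hn k (t - j) hrest hrest₁)
    · simp only [Set.mem_Icc]; omega
    · simp only [Set.mem_singleton_iff]; omega

lemma closure_genCounts_eq_countConeNeOne {n : ℕ} (hn : 4 ≤ n) :
    AddSubmonoid.closure (genCounts n '' (Set.Icc 1 (n + 1) \ {2})) = countConeNeOne n := by
  apply le_antisymm
  · rw [AddSubmonoid.closure_le]
    rintro _ ⟨i, ⟨⟨hi₁, hi⟩, hi₂⟩, rfl⟩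
    rw [Set.mem_singleton_iff] at hi₂
    rcases (show i ≤ n ∨ i = n + 1 by omega) with hi | rfl
    · simp only [SetLike.mem_coe, genCounts_of_le hi, mem_countConeNeOne, one_mul]
      omega
    · simp [genCounts_self_add_one]
  · rintro ⟨k, t, lam⟩ ⟨ht, ht₁⟩
    have hsplit : (k, t, lam) = (k, t, 0) + lam • genCounts n (n + 1) := by
      simp [genCounts_self_add_one]
    rw [hsplit]
    refine AddSubmonoid.add_mem _ (mk_zero_mem_closure_genCounts hn k t ht ht₁)
      (AddSubmonoid.nsmul_mem _ (AddSubmonoid.subset_closure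
        (Set.mem_image_of_mem _ (show n + 1 ∈ Set.Icc 1 (n + 1) \ {2} by simp; omega))) _)

lemma exists_of_mul_add_eq {m₁ d k₁ k₂ t : ℕ} (hm₁ : 2 ≤ m₁) (hcop : Nat.Coprime m₁ d)
    (h : k₁ * m₁ + d = k₂ * m₁ + t * d) (ht : t ≠ 1) :
    ∃ j, 1 ≤ j ∧ k₁ = k₂ + j * d ∧ t = 1 + j * m₁ := by
  have hd : d ≠ 0 := by
    rintro rfl
    rw [Nat.coprime_zero_right] at hcop
    omega
  have hz : ((k₁ : ℤ) - k₂) * m₁ = ((t : ℤ) - 1) * d := by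
    have := congrArg (Nat.cast : ℕ → ℤ) h
    push_cast at this
    linarith
  obtain ⟨j, hj⟩ : (d : ℤ) ∣ (k₁ : ℤ) - k₂ :=
    (Nat.isCoprime_iff_coprime.mpr hcop.symm).dvd_of_dvd_mul_right ⟨(t : ℤ) - 1, by linarith⟩
  have htj : (t : ℤ) - 1 = j * m₁ := by
    rw [hj] at hz
    have hd' : (d : ℤ) ≠ 0 := by exact_mod_cast hd
    apply mul_left_cancel₀ hd'
    linarith
  have hj₁ : 1 ≤ j := by
    by_contra! hj
    rcases (show j = 0 ∨ j ≤ -1 by omega) with rfl | hj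
    · exact ht (by omega)
    · nlinarith
  lift j to ℕ using (by omega)
  refine ⟨j, by exact_mod_cast hj₁, ?_, ?_⟩
  · have : (k₁ : ℤ) = k₂ + j * d := by linarith
    exact_mod_cast this
  · have : (t : ℤ) = 1 + j * m₁ := by linarith
    exact_mod_cast this

/-- The paper's `q + ε` is `⌊m₁ / (n - 1)⌋`. -/
lemma div_add_ite_eq_div {m : ℕ} (N : ℕ) (hm : 0 < m) :
    (m - 1) / N + (if m - (m - 1) / N * N = N then 1 else 0) = m / N := by
  rcases Nat.eq_zero_or_pos N with rfl | hN
  · simp; omega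
  have hdiv := Nat.div_add_mod (m - 1) N
  have hmod := Nat.mod_lt (m - 1) hN
  set q := (m - 1) / N
  rw [mul_comm] at hdiv
  symm
  split_ifs with h
  · exact Nat.div_eq_of_lt_le (by rw [add_one_mul]; omega) (by rw [add_one_mul, add_one_mul]; omega)
  · rw [add_zero]
    exact Nat.div_eq_of_lt_le (by omega) (by rw [add_one_mul]; omega)

lemma nsmul_add_mem_closure {n : ℕ} {a : ℕ → ℕ × ℕ} (hn : 1 ≤ n) (μ lam : ℕ) :
    μ • a 1 + a 2 + lam • a (n + 1) ∈ AddSubmonoid.closure (a '' Set.Icc 1 (n + 1)) := by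
  have hgen : ∀ i ∈ Set.Icc 1 (n + 1), a i ∈ AddSubmonoid.closure (a '' Set.Icc 1 (n + 1)) :=
    fun i hi => AddSubmonoid.subset_closure (Set.mem_image_of_mem a hi)
  exact add_mem (add_mem (nsmul_mem (hgen 1 (by simp)) _) (hgen 2 (by simp; omega)))
    (nsmul_mem (hgen (n + 1) (by simp)) _)

lemma shear_eq_countMap_genCounts {n m₁ d : ℕ} {m : ℕ → ℕ} (hm : ∀ i, m i = m₁ + (i - 1) * d)
    {a : ℕ → ℕ × ℕ} (ha : ∀ i, a i = if i = n + 1 then (0, m n) else (m i, m n - m i)) :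
    ∀ i ∈ Set.Icc 1 (n + 1), shear (a i) = countMap n m₁ d (genCounts n i) := by
  rintro i ⟨-, hi⟩
  rcases (show i ≤ n ∨ i = n + 1 by omega) with hi | rfl
  · have hmi : m i ≤ m n := by
      rw [hm, hm]
      exact Nat.add_le_add_left (Nat.mul_le_mul_right d (by omega : i - 1 ≤ n - 1)) m₁
    rw [ha, if_neg (by omega), genCounts_of_le hi]
    simp only [shear_apply, countMap_apply, Prod.mk.injEq, Nat.add_sub_cancel' hmi]
    simp only [hm]
    constructor <;> ring
  · simp [ha, hm n, genCounts_self_add_one]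

section Generators

variable {n m₁ d : ℕ} {a : ℕ → ℕ × ℕ}
  (ha : ∀ i ∈ Set.Icc 1 (n + 1), shear (a i) = countMap n m₁ d (genCounts n i))
include ha

lemma mem_closure_image_iff {J : Set ℕ} (hJ : J ⊆ Set.Icc 1 (n + 1)) (x : ℕ × ℕ) :
    x ∈ AddSubmonoid.closure (a '' J) ↔
      ∃ w ∈ AddSubmonoid.closure (genCounts n '' J), countMap n m₁ d w = shear x := by
  have himage : shear '' (a '' J) = countMap n m₁ d '' (genCounts n '' J) := by
    rw [Set.image_image, Set.image_image]
    exact Set.image_congr fun i hi => ha i (hJ hi)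
  rw [← AddSubmonoid.mem_map_iff_mem shear_injective, AddMonoidHom.map_mclosure, himage,
    ← AddMonoidHom.map_mclosure, AddSubmonoid.mem_map]

lemma shear_nsmul_add (hn : 2 ≤ n) (μ lam : ℕ) :
    shear (μ • a 1 + a 2 + lam • a (n + 1)) = countMap n m₁ d (μ + 1, 1, lam) := by
  rw [map_add, map_add, map_nsmul, map_nsmul, ha 1 (by simp), ha 2 (by simp; omega),
    ha (n + 1) (by simp), ← map_nsmul, ← map_nsmul, ← map_add, ← map_add]
  rw [genCounts_of_le (by omega), genCounts_of_le hn, genCounts_self_add_one]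
  ext <;> simp [add_comm]

lemma nsmul_add_mem_closure_iff (hn : 4 ≤ n) (hm₁ : 2 ≤ m₁) (hcop : Nat.Coprime m₁ d)
    (μ lam : ℕ) :
    μ • a 1 + a 2 + lam • a (n + 1) ∈ AddSubmonoid.closure (a '' (Set.Icc 1 (n + 1) \ {2})) ↔
      m₁ / (n - 1) + d ≤ μ := by
  have hn₁ : 0 < n - 1 := by omega
  rw [mem_closure_image_iff ha Set.sdiff_subset, closure_genCounts_eq_countConeNeOne hn,
    shear_nsmul_add ha (by omega)]
  constructor
  · rintro ⟨⟨k, t, lam'⟩, ⟨ht, ht₁⟩, heq⟩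
    simp only [countMap_apply, Prod.mk.injEq] at ht ht₁ heq
    obtain ⟨j, hj, hkj, rfl⟩ :=
      exists_of_mul_add_eq (k₁ := μ + 1) (k₂ := k) hm₁ hcop (by linarith [heq.1]) ht₁
    have hk : m₁ / (n - 1) < k := (Nat.div_lt_iff_lt_mul hn₁).mpr (by nlinarith)
    have hjd : d ≤ j * d := Nat.le_mul_of_pos_left d hj
    omega
  · intro h
    have hdμ : d ≤ μ := (Nat.le_add_left d _).trans h
    have hk : m₁ < (μ + 1 - d) * (n - 1) := (Nat.div_lt_iff_lt_mul hn₁).mp (by omega)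
    refine ⟨(μ + 1 - d, 1 + m₁, lam + d),
      ⟨show 1 + m₁ ≤ (μ + 1 - d) * (n - 1) by omega, show 1 + m₁ ≠ 1 by omega⟩, ?_⟩
    rw [← countMap_add_left, Nat.sub_add_cancel (by omega : d ≤ μ + 1)]

lemma exists_eq_nsmul_add_of_notMem (hn : 4 ≤ n) {x : ℕ × ℕ}
    (hxS : x ∈ AddSubmonoid.closure (a '' Set.Icc 1 (n + 1)))
    (hxP : x ∉ AddSubmonoid.closure (a '' (Set.Icc 1 (n + 1) \ {2}))) :
    ∃ μ lam : ℕ, x = μ • a 1 + a 2 + lam • a (n + 1) := by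
  obtain ⟨⟨k, t, lam⟩, hw, hwx⟩ := (mem_closure_image_iff ha subset_rfl x).mp hxS
  have ht : t ≤ k * (n - 1) := closure_genCounts_le_countCone n hw
  by_cases ht₁ : t = 1
  · subst ht₁
    have hk : k ≠ 0 := by
      rintro rfl
      simp at ht
    obtain ⟨μ, rfl⟩ := Nat.exists_eq_add_one_of_ne_zero hk
    exact ⟨μ, lam, shear_injective (by rw [shear_nsmul_add ha (by omega), hwx])⟩
  · refine absurd ((mem_closure_image_iff ha Set.sdiff_subset x).mpr ⟨(k, t, lam), ?_, hwx⟩) hxP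
    rw [closure_genCounts_eq_countConeNeOne hn]
    exact ⟨ht, ht₁⟩

end Generators

theorem stmt_8_general (n m₁ d : ℕ) (hn : 4 ≤ n) (hm₁ : 2 ≤ m₁)
    (hgcd : Nat.gcd m₁ d = 1)
    (m : ℕ → ℕ) (hm : ∀ i, m i = m₁ + (i - 1) * d)
    (a : ℕ → ℕ × ℕ)
    (ha : ∀ i, a i = if i = n + 1 then (0, m n) else (m i, m n - m i))
    (S : AddSubmonoid (ℕ × ℕ))
    (hS : S = AddSubmonoid.closure (a '' Set.Icc 1 (n + 1)))
    (P₂ : AddSubmonoid (ℕ × ℕ))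
    (hP₂ : P₂ = AddSubmonoid.closure (a '' (Set.Icc 1 (n + 1) \ {2})))
    (q l ε : ℕ) (hq : q = (m₁ - 1) / (n - 1)) (hl : l = m₁ - q * (n - 1))
    (hε : ε = if l = n - 1 then 1 else 0) :
    (S : Set (ℕ × ℕ)) \ (P₂ : Set (ℕ × ℕ)) =
      {x | ∃ μ lam : ℕ, μ < q + d + ε ∧ x = μ • a 1 + a 2 + lam • a (n + 1)} := by
  have hqε : q + ε = m₁ / (n - 1) := by
    rw [hε, hl, hq]
    exact div_add_ite_eq_div (m := m₁) (n - 1) (by omega)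
  have hshear := shear_eq_countMap_genCounts hm ha
  subst hS hP₂
  ext x
  simp only [Set.mem_sdiff, SetLike.mem_coe, Set.mem_ofPred_eq]
  constructor
  · rintro ⟨hxS, hxP⟩
    obtain ⟨μ, lam, rfl⟩ := exists_eq_nsmul_add_of_notMem hshear hn hxS hxP
    rw [nsmul_add_mem_closure_iff hshear hn hm₁ hgcd] at hxP
    exact ⟨μ, lam, by omega, rfl⟩
  · rintro ⟨μ, lam, hμ, rfl⟩
    refine ⟨?_, by rw [nsmul_add_mem_closure_iff hshear hn hm₁ hgcd]; omega⟩
    exact nsmul_add_mem_closure (by omega) μ lam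

/-- For the projective monomial curve associated to an arithmetic
sequence with `m_1 ≥ 2`, `S \ P_2 = {μ·a_1 + a_2 + λ·a_{n+1} : 0 ≤ μ ≤ q+d-1+ε, λ ∈ ℕ}`,
where `ε = 1` if `l = n-1` and `ε = 0` otherwise (here `μ ≤ q+d-1+ε` is written
`μ < q+d+ε`). -/
theorem stmt_8 (n m₁ d : ℕ) (hn : 4 ≤ n) (hm₁ : 2 ≤ m₁) (hd : 0 < d)
    (hgcd : Nat.gcd m₁ d = 1)
    (m : ℕ → ℕ) (hm : ∀ i, m i = m₁ + (i - 1) * d)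
    (a : ℕ → ℕ × ℕ)
    (ha : ∀ i, a i = if i = n + 1 then (0, m n) else (m i, m n - m i))
    (S : AddSubmonoid (ℕ × ℕ))
    (hS : S = AddSubmonoid.closure (a '' Set.Icc 1 (n + 1)))
    (P₂ : AddSubmonoid (ℕ × ℕ))
    (hP₂ : P₂ = AddSubmonoid.closure (a '' (Set.Icc 1 (n + 1) \ {2})))
    (q l ε : ℕ) (hq : q = (m₁ - 1) / (n - 1)) (hl : l = m₁ - q * (n - 1))
    (hε : ε = if l = n - 1 then 1 else 0) :
    (S : Set (ℕ × ℕ)) \ (P₂ : Set (ℕ × ℕ)) =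
      {x | ∃ μ lam : ℕ, μ < q + d + ε ∧ x = μ • a 1 + a 2 + lam • a (n + 1)} :=
  stmt_8_general n m₁ d hn hm₁ hgcd m hm a ha S hS P₂ hP₂ q l ε hq hl hε
end

section
/- Suppose m_1 = 1 (so 2 > m_1). Then S \ P_2 = {μ·a_1 + a_2 + λ·a_{n+1} : 0 ≤ μ ≤ d − 1 and 0 ≤ λ ≤ d − 1}. -/
/-!
All generators have coordinate sum `N = m_n`, and with `m₁ = 1` a sum of `k` generators
`a_{i₁}, …, a_{i_k}` with `i_j ≤ n` has first coordinate `k + s d`, where `s = ∑ (i_j - 1)`.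
Hence membership in `S` or `P₂` only depends on `(k, s)` and the degree: `s` ranges over
`[0, k (n - 1)]` for `S` and, since `n ≥ 4`, over `{0} ∪ [2, k (n - 1)]` for `P₂`. So an element of
`S \ P₂` has `s = 1`, i.e. is `μ • a₁ + a₂ + λ • a_{n+1}`, and the relations
`d • a₁ + a₂ = a₃ + d • a_{n+1}` and `a₂ + d • a_{n+1} = (d + 1) • a₁` force `μ, λ < d`.
-/

open Set

namespace ArithSeqCurve

/-- `(k, s) ∈ indexSums J` iff `s` is a sum of `k` elements of `J`. -/
def indexSums (J : Set ℕ) : AddSubmonoid (ℕ × ℕ) :=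
  AddSubmonoid.closure ((fun j => (1, j)) '' J)

theorem snd_le_of_mem_indexSums {c : ℕ} {J : Set ℕ} (hJ : J ⊆ Iic c) {p : ℕ × ℕ}
    (hp : p ∈ indexSums J) : p.2 ≤ p.1 * c := by
  induction hp using AddSubmonoid.closure_induction with
  | mem p hp =>
    obtain ⟨j, hj, rfl⟩ := hp
    simpa using hJ hj
  | zero => simp
  | add p q _ _ hp hq =>
    simp only [Prod.fst_add, Prod.snd_add, add_mul]
    omega

theorem snd_ne_one_of_mem_indexSums {J : Set ℕ} (hJ : 1 ∉ J) {p : ℕ × ℕ}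
    (hp : p ∈ indexSums J) : p.2 ≠ 1 := by
  induction hp using AddSubmonoid.closure_induction with
  | mem p hp =>
    obtain ⟨j, hj, rfl⟩ := hp
    exact fun h => hJ (h ▸ hj)
  | zero => simp
  | add p q _ _ hp hq =>
    simp only [Prod.snd_add]
    omega

theorem mk_mem_indexSums {J : Set ℕ} {j : ℕ} (hj : j ∈ J) : ((1 : ℕ), j) ∈ indexSums J :=
  AddSubmonoid.subset_closure ⟨j, hj, rfl⟩

theorem mk_zero_mem_indexSums {J : Set ℕ} (hJ : 0 ∈ J) (k : ℕ) : (k, 0) ∈ indexSums J := by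
  simpa using nsmul_mem (mk_mem_indexSums hJ) k

theorem mk_mem_indexSums_of_two_le {c : ℕ} (hc : 3 ≤ c) {k s : ℕ} (hs : 2 ≤ s)
    (hsk : s ≤ k * c) : (k, s) ∈ indexSums (Iic c \ {1}) := by
  have hmem : ∀ {j}, j ≤ c → j ≠ 1 → ((1 : ℕ), j) ∈ indexSums (Iic c \ {1}) :=
    fun hj hj1 => mk_mem_indexSums ⟨hj, hj1⟩
  have hzero := mk_zero_mem_indexSums (J := Iic c \ {1}) ⟨Nat.zero_le c, zero_ne_one⟩
  induction k generalizing s with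
  | zero => omega
  | succ k ih =>
    rw [add_one_mul] at hsk
    by_cases hsc : s ≤ c
    · rw [show (k + 1, s) = ((1 : ℕ), s) + (k, 0) by ext <;> simp [add_comm]]
      exact add_mem (hmem hsc (by omega)) (hzero k)
    obtain ⟨k, rfl⟩ : ∃ k', k = k' + 1 := Nat.exists_eq_add_one.2 (by rcases k with _ | k <;> omega)
    by_cases hsc1 : s = c + 1
    · rw [show (k + 1 + 1, s) = ((1 : ℕ), c - 1) + ((1 : ℕ), 2) + (k, 0) by ext <;> simp <;> omega]
      exact add_mem (add_mem (hmem (by omega) (by omega)) (hmem (by omega) (by omega))) (hzero k)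
    · rw [show (k + 1 + 1, s) = ((1 : ℕ), c) + (k + 1, s - c) by ext <;> simp <;> omega]
      exact add_mem (hmem le_rfl (by omega)) (ih (by omega) (by omega))

theorem mem_indexSums_iff {c : ℕ} (hc : 3 ≤ c) {p : ℕ × ℕ} :
    p ∈ indexSums (Iic c \ {1}) ↔ p.2 = 0 ∨ 2 ≤ p.2 ∧ p.2 ≤ p.1 * c := by
  constructor
  · intro hp
    have := snd_le_of_mem_indexSums sdiff_subset hp
    have := snd_ne_one_of_mem_indexSums (fun h => h.2 rfl) hp
    omega
  · rintro (h | ⟨hs, hsk⟩)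
    · simpa [← h] using mk_zero_mem_indexSums (J := Iic c \ {1}) ⟨Nat.zero_le c, zero_ne_one⟩ p.1
    · exact mk_mem_indexSums_of_two_le hc hs hsk

variable (c d : ℕ)

/-- With `c = n - 1` and `m₁ = 1`, `gen c d j = a_{j+1}` for `j ≤ c` and `genTop c d = a_{n+1}`. -/
def gen (j : ℕ) : ℕ × ℕ := (1 + j * d, (c - j) * d)

def genTop : ℕ × ℕ := (0, 1 + c * d)

def gens (J : Set ℕ) : Set (ℕ × ℕ) := insert (genTop c d) (gen c d '' J)

variable {c d}

theorem gen_mem_closure_gens {J : Set ℕ} {j : ℕ} (hj : j ∈ J) :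
    gen c d j ∈ AddSubmonoid.closure (gens c d J) :=
  AddSubmonoid.subset_closure (mem_insert_of_mem _ ⟨j, hj, rfl⟩)

theorem genTop_mem_closure_gens (J : Set ℕ) : genTop c d ∈ AddSubmonoid.closure (gens c d J) :=
  AddSubmonoid.subset_closure (mem_insert _ _)

theorem gen_fst_add_snd {j : ℕ} (hj : j ≤ c) : (gen c d j).1 + (gen c d j).2 = 1 + c * d := by
  have : (c - j) * d + j * d = c * d := by rw [← add_mul, Nat.sub_add_cancel hj]
  simp only [gen]
  omega

theorem exists_of_mem_closure_gens {J : Set ℕ} (hJ : J ⊆ Iic c) {x : ℕ × ℕ}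
    (hx : x ∈ AddSubmonoid.closure (gens c d J)) :
    ∃ k s l, (k, s) ∈ indexSums J ∧ x.1 = k + s * d ∧ x.1 + x.2 = (k + l) * (1 + c * d) := by
  induction hx using AddSubmonoid.closure_induction with
  | mem x hx =>
    rcases hx with rfl | ⟨j, hj, rfl⟩
    · exact ⟨0, 0, 1, zero_mem _, by simp [genTop], by simp [genTop]⟩
    · exact ⟨1, j, 0, mk_mem_indexSums hj, by simp [gen], by simpa using gen_fst_add_snd (hJ hj)⟩
  | zero => exact ⟨0, 0, 0, zero_mem _, by simp, by simp⟩
  | add x y _ _ hx hy =>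
    obtain ⟨k, s, l, hks, hx1, hx2⟩ := hx
    obtain ⟨k', s', l', hks', hy1, hy2⟩ := hy
    refine ⟨k + k', s + s', l + l', add_mem hks hks', ?_, ?_⟩
    · simp only [Prod.fst_add, hx1, hy1]
      ring
    · simp only [Prod.fst_add, Prod.snd_add]
      linear_combination hx2 + hy2

theorem exists_mem_closure_gens_of_mem_indexSums {J : Set ℕ} (hJ : J ⊆ Iic c) {p : ℕ × ℕ}
    (hp : p ∈ indexSums J) :
    ∃ y ∈ AddSubmonoid.closure (gens c d J),
      y.1 = p.1 + p.2 * d ∧ y.1 + y.2 = p.1 * (1 + c * d) := by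
  induction hp using AddSubmonoid.closure_induction with
  | mem p hp =>
    obtain ⟨j, hj, rfl⟩ := hp
    exact ⟨gen c d j, gen_mem_closure_gens hj, by simp [gen],
      by simpa using gen_fst_add_snd (hJ hj)⟩
  | zero => exact ⟨0, zero_mem _, by simp, by simp⟩
  | add p q _ _ hp hq =>
    obtain ⟨y, hy, hy1, hy2⟩ := hp
    obtain ⟨z, hz, hz1, hz2⟩ := hq
    refine ⟨y + z, add_mem hy hz, ?_, ?_⟩
    · simp only [Prod.fst_add, Prod.snd_add, hy1, hz1]
      ring
    · simp only [Prod.fst_add, Prod.snd_add]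
      linear_combination hy2 + hz2

theorem mem_closure_gens_iff {J : Set ℕ} (hJ : J ⊆ Iic c) {x : ℕ × ℕ} :
    x ∈ AddSubmonoid.closure (gens c d J) ↔
      ∃ k s l, (k, s) ∈ indexSums J ∧ x.1 = k + s * d ∧ x.1 + x.2 = (k + l) * (1 + c * d) := by
  refine ⟨exists_of_mem_closure_gens hJ, fun ⟨k, s, l, hks, hx1, hx2⟩ => ?_⟩
  obtain ⟨y, hy, hy1, hy2⟩ := exists_mem_closure_gens_of_mem_indexSums (d := d) hJ hks
  convert add_mem hy (nsmul_mem (genTop_mem_closure_gens J) l) using 1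
  ext
  · simp [genTop, hx1, hy1]
  · simp only [genTop, Prod.snd_add, Prod.smul_mk, smul_eq_mul]
    linear_combination hx2 - hy2 - hx1 + hy1

theorem exists_eq_of_mem_diff (hc : 3 ≤ c) {x : ℕ × ℕ}
    (hxS : x ∈ AddSubmonoid.closure (gens c d (Iic c)))
    (hxP : x ∉ AddSubmonoid.closure (gens c d (Iic c \ {1}))) :
    ∃ μ l, μ < d ∧ l < d ∧ x = μ • gen c d 0 + gen c d 1 + l • genTop c d := by
  obtain ⟨k, s, l, hks, hx1, hx2⟩ := (mem_closure_gens_iff le_rfl).1 hxS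
  have hsk : s ≤ k * c := snd_le_of_mem_indexSums le_rfl hks
  have notP : ∀ k' s' l', (s' = 0 ∨ 2 ≤ s' ∧ s' ≤ k' * c) → x.1 = k' + s' * d →
      x.1 + x.2 = (k' + l') * (1 + c * d) → False := fun k' s' l' hks' h1 h2 =>
    hxP ((mem_closure_gens_iff sdiff_subset).2 ⟨k', s', l', (mem_indexSums_iff hc).2 hks', h1, h2⟩)
  have hs : s = 1 := by
    by_contra hs
    exact notP k s l (by omega) hx1 hx2
  subst hs
  obtain ⟨μ, rfl⟩ : ∃ μ, k = μ + 1 :=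
    Nat.exists_eq_add_one.2 (Nat.pos_of_ne_zero (by rintro rfl; simp at hsk))
  have hμ : μ < d := by
    by_contra hμ
    refine notP (μ + 1 - d) 2 (l + d) (Or.inr ⟨le_rfl, ?_⟩) (by omega) (by rw [hx2]; congr 1; omega)
    have := Nat.mul_le_mul (by omega : 1 ≤ μ + 1 - d) hc
    omega
  have hl : l < d := by
    by_contra hl
    exact notP (μ + 1 + d) 0 (l - d) (Or.inl rfl) (by omega) (by rw [hx2]; congr 1; omega)
  obtain ⟨c, rfl⟩ : ∃ c', c = c' + 1 := ⟨c - 1, by omega⟩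
  refine ⟨μ, l, hμ, hl, Prod.ext (by simp [gen, genTop, hx1]; ring) ?_⟩
  simp only [gen, genTop, Prod.snd_add, Prod.smul_mk, smul_eq_mul, Nat.sub_zero,
    Nat.add_sub_cancel]
  linear_combination hx2 - hx1

theorem notMem_closure_gens_of_lt (hc : 3 ≤ c) {μ l : ℕ} (hμ : μ < d) (hl : l < d) :
    μ • gen c d 0 + gen c d 1 + l • genTop c d ∉ AddSubmonoid.closure (gens c d (Iic c \ {1})) := by
  intro hP
  obtain ⟨k, s, l', hks, h1, h2⟩ := (mem_closure_gens_iff sdiff_subset).1 hP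
  have hc' := (mem_indexSums_iff hc).1 hks
  obtain ⟨c, rfl⟩ : ∃ c', c = c' + 1 := ⟨c - 1, by omega⟩
  simp only [gen, genTop, Prod.fst_add, Prod.snd_add, Prod.smul_mk, smul_eq_mul, Nat.sub_zero,
    Nat.add_sub_cancel] at h1 h2 hc'
  have hdeg : μ + 1 + l = k + l' := by
    refine Nat.eq_of_mul_eq_mul_right (by positivity : 0 < 1 + (c + 1) * d) ?_
    rw [← h2]
    ring
  rcases hc' with rfl | ⟨hs, hsk⟩
  · omega
  · have := Nat.mul_le_mul_right d hs
    obtain rfl : k = 0 := by omega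
    omega

theorem mem_closure_gens_diff_iff (hc : 3 ≤ c) {x : ℕ × ℕ} :
    x ∈ (AddSubmonoid.closure (gens c d (Iic c)) : Set (ℕ × ℕ)) \
        AddSubmonoid.closure (gens c d (Iic c \ {1})) ↔
      ∃ μ l, μ < d ∧ l < d ∧ x = μ • gen c d 0 + gen c d 1 + l • genTop c d := by
  refine ⟨fun ⟨hxS, hxP⟩ => exists_eq_of_mem_diff hc hxS hxP, ?_⟩
  rintro ⟨μ, l, hμ, hl, rfl⟩
  refine ⟨?_, notMem_closure_gens_of_lt hc hμ hl⟩
  exact add_mem (add_mem (nsmul_mem (gen_mem_closure_gens (mem_Iic.2 (Nat.zero_le c))) μ)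
    (gen_mem_closure_gens (mem_Iic.2 (by omega)))) (nsmul_mem (genTop_mem_closure_gens _) l)

theorem image_eq_gens {a : ℕ → ℕ × ℕ} (ha : ∀ i, 1 ≤ i → i ≤ c + 1 → a i = gen c d (i - 1))
    (htop : a (c + 1 + 1) = genTop c d) {K : Set ℕ} (hK : c + 1 + 1 ∉ K) :
    a '' (Icc 1 (c + 1 + 1) \ K) = gens c d (Iic c \ {j | j + 1 ∈ K}) := by
  ext x
  constructor
  · rintro ⟨i, ⟨⟨hi1, hi2⟩, hiK⟩, rfl⟩
    rcases eq_or_lt_of_le hi2 with rfl | hi2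
    · exact htop ▸ mem_insert _ _
    · refine ha i hi1 (by omega) ▸ mem_insert_of_mem _ ⟨i - 1, ⟨mem_Iic.2 (by omega), ?_⟩, rfl⟩
      simpa [Nat.sub_add_cancel hi1] using hiK
  · rintro (rfl | ⟨j, ⟨hjc : j ≤ c, hjK⟩, rfl⟩)
    · exact ⟨c + 1 + 1, ⟨⟨by omega, le_rfl⟩, hK⟩, htop⟩
    · refine ⟨j + 1, ⟨⟨by omega, by omega⟩, hjK⟩, ?_⟩
      rw [ha (j + 1) (by omega) (by omega), Nat.add_sub_cancel]

end ArithSeqCurve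

open ArithSeqCurve in
theorem stmt_9_general (n m₁ d : ℕ) (hn : 4 ≤ n) (hm₁ : m₁ = 1)
    (m : ℕ → ℕ) (hm : ∀ i, m i = m₁ + (i - 1) * d)
    (a : ℕ → ℕ × ℕ)
    (ha : ∀ i, a i = if i = n + 1 then (0, m n) else (m i, m n - m i))
    (S : AddSubmonoid (ℕ × ℕ))
    (hS : S = AddSubmonoid.closure (a '' Set.Icc 1 (n + 1)))
    (P₂ : AddSubmonoid (ℕ × ℕ))
    (hP₂ : P₂ = AddSubmonoid.closure (a '' (Set.Icc 1 (n + 1) \ {2}))) :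
    (S : Set (ℕ × ℕ)) \ (P₂ : Set (ℕ × ℕ)) =
      {x | ∃ μ lam : ℕ, μ < d ∧ lam < d ∧ x = μ • a 1 + a 2 + lam • a (n + 1)} := by
  subst hm₁
  obtain ⟨c, rfl⟩ : ∃ c, n = c + 1 := ⟨n - 1, by omega⟩
  have hmn : m (c + 1) = 1 + c * d := by simp [hm]
  have hgen : ∀ i, 1 ≤ i → i ≤ c + 1 → a i = gen c d (i - 1) := by
    intro i hi1 hi2
    have : (i - 1) * d ≤ c * d := Nat.mul_le_mul_right d (by omega)
    rw [ha, if_neg (by omega), hmn, hm i, gen, Nat.sub_mul c (i - 1) d]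
    congr 1
    omega
  have htop : a (c + 1 + 1) = genTop c d := by rw [ha, if_pos rfl, hmn, genTop]
  have hS' : S = AddSubmonoid.closure (gens c d (Iic c)) := by
    rw [hS, ← sdiff_empty (s := Icc 1 _), image_eq_gens hgen htop (notMem_empty _)]
    simp
  have hP' : P₂ = AddSubmonoid.closure (gens c d (Iic c \ {1})) := by
    rw [hP₂, image_eq_gens hgen htop (by simp; omega)]
    simp
  ext x
  rw [hgen 1 le_rfl (by omega), hgen 2 (by omega) (by omega), htop, hS', hP']
  exact mem_closure_gens_diff_iff (by omega)

/-- For the projective monomial curve associated to an arithmetic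
sequence with `m_1 = 1`, `S \ P_2 = {μ·a_1 + a_2 + λ·a_{n+1} : 0 ≤ μ ≤ d-1, 0 ≤ λ ≤ d-1}`
(written with `μ < d`, `λ < d`). -/
theorem stmt_9 (n m₁ d : ℕ) (hn : 4 ≤ n) (hm₁ : m₁ = 1) (hd : 0 < d)
    (hgcd : Nat.gcd m₁ d = 1)
    (m : ℕ → ℕ) (hm : ∀ i, m i = m₁ + (i - 1) * d)
    (a : ℕ → ℕ × ℕ)
    (ha : ∀ i, a i = if i = n + 1 then (0, m n) else (m i, m n - m i))
    (S : AddSubmonoid (ℕ × ℕ))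
    (hS : S = AddSubmonoid.closure (a '' Set.Icc 1 (n + 1)))
    (P₂ : AddSubmonoid (ℕ × ℕ))
    (hP₂ : P₂ = AddSubmonoid.closure (a '' (Set.Icc 1 (n + 1) \ {2}))) :
    (S : Set (ℕ × ℕ)) \ (P₂ : Set (ℕ × ℕ)) =
      {x | ∃ μ lam : ℕ, μ < d ∧ lam < d ∧ x = μ • a 1 + a 2 + lam • a (n + 1)} :=
  stmt_9_general n m₁ d hn hm₁ m hm a ha S hS P₂ hP₂
end

section
/- Suppose 3 ≤ r ≤ n − 2 and r ≤ m_1. Then S \ P_r = {a_r + λ·a_{n+1} : λ ∈ ℕ}. -/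
/-!
Let `P` be generated by all `a_i` except `a_r`. Since `a_i + a_j` depends only on `i + j` for
`i, j ≤ n`, and every `j + r` with `1 ≤ j ≤ n` (including `j = r`) is also a sum `p + q` with
`p, q ∈ [1, n] \ {r}` because `3 ≤ r ≤ n - 2`, we get `a_j + a_r ∈ P`. So an element of `S` lies
in `P` as soon as it uses `a_r` together with `a_r` or with any `a_j`, `j ≤ n`, which leaves only
`a_r + λ a_{n+1}`. These are not in `P`: comparing first coordinates,
`m₁ + (r - 1) d = k m₁ + t d` with `k ≥ 2` would give `(k - 1) m₁ = (r - 1 - t) d`, so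
`m₁ ∣ r - 1 - t` by coprimality, which is impossible as `0 < r - 1 - t < m₁`.
-/

open Set

namespace AddSubmonoid

variable {M : Type*} [AddCommMonoid M] {s : Set M} {x y : M}

theorem eq_nsmul_or_add_mem_of_mem_closure (hy : y ∈ closure s)
    (hs : ∀ g ∈ s, g = y ∨ g + x ∈ closure s) {p : M} (hp : p ∈ closure s) :
    (∃ k : ℕ, p = k • y) ∨ p + x ∈ closure s := by
  induction hp using closure_induction with
  | mem g hg => exact (hs g hg).imp (fun h => ⟨1, by rw [h, one_smul]⟩) id
  | zero => exact Or.inl ⟨0, (zero_smul ℕ y).symm⟩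
  | add p q _ hq ihp ihq =>
    rcases ihp with ⟨k, rfl⟩ | hpx
    · rcases ihq with ⟨l, rfl⟩ | hqx
      · exact Or.inl ⟨k + l, (add_smul k l y).symm⟩
      · exact Or.inr (by rw [add_assoc]; exact add_mem (nsmul_mem hy k) hqx)
    · exact Or.inr (by rw [add_right_comm]; exact add_mem hpx hq)

theorem mem_closure_or_eq_add_nsmul_of_mem_closure_insert (hy : y ∈ closure s)
    (hxx : x + x ∈ closure s) (hs : ∀ g ∈ s, g = y ∨ g + x ∈ closure s) {z : M}
    (hz : z ∈ closure (insert x s)) : z ∈ closure s ∨ ∃ k : ℕ, z = x + k • y := by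
  rw [insert_eq, closure_union, mem_sup] at hz
  obtain ⟨_, hk, p, hp, rfl⟩ := hz
  obtain ⟨k, rfl⟩ := mem_closure_singleton.1 hk
  have hpair (j : ℕ) : j • x + j • x + p ∈ closure s := by
    rw [← nsmul_add]
    exact add_mem (nsmul_mem hxx j) hp
  obtain ⟨j, rfl | rfl⟩ := Nat.even_or_odd' k
  · left
    rw [two_mul, add_nsmul]
    exact hpair j
  · rw [add_nsmul, one_nsmul, two_mul, add_nsmul, add_right_comm]
    rcases eq_nsmul_or_add_mem_of_mem_closure hy hs (hpair j) with ⟨l, hl⟩ | h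
    · exact Or.inr ⟨l, by rw [hl, add_comm]⟩
    · exact Or.inl h

theorem closure_insert_diff_closure (hy : y ∈ closure s) (hxx : x + x ∈ closure s)
    (hs : ∀ g ∈ s, g = y ∨ g + x ∈ closure s) (hxy : ∀ k : ℕ, x + k • y ∉ closure s) :
    (closure (insert x s) : Set M) \ closure s = {z | ∃ k : ℕ, z = x + k • y} := by
  ext z
  constructor
  · rintro ⟨hz, hzs⟩
    exact (mem_closure_or_eq_add_nsmul_of_mem_closure_insert hy hxx hs hz).resolve_left hzs
  · rintro ⟨k, rfl⟩
    exact ⟨add_mem (subset_closure (mem_insert x s))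
      (nsmul_mem (closure_mono (subset_insert x s) hy) k), hxy k⟩

end AddSubmonoid

namespace Nat

theorem exists_eq_mul_add_mul_of_mem_closure {m₁ d j x : ℕ}
    (hx : x ∈ AddSubmonoid.closure {t | ∃ i ≠ j, t = m₁ + i * d}) :
    ∃ k t, x = k * m₁ + t * d ∧ (k = 0 → t = 0) ∧ ¬(k = 1 ∧ t = j) := by
  induction hx using AddSubmonoid.closure_induction with
  | mem _ hx =>
    obtain ⟨i, hij, rfl⟩ := hx
    exact ⟨1, i, by ring, by omega, by omega⟩
  | zero => exact ⟨0, 0, by ring, by omega, by omega⟩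
  | add _ _ _ _ ihx ihy =>
    obtain ⟨k, t, rfl, hk0, hk1⟩ := ihx
    obtain ⟨k', t', rfl, hk0', hk1'⟩ := ihy
    exact ⟨k + k', t + t', by ring, by omega, by omega⟩

theorem add_mul_notMem_closure {m₁ d j : ℕ} (hcop : Coprime m₁ d) (hd : 0 < d) (hj : j < m₁) :
    m₁ + j * d ∉ AddSubmonoid.closure {t | ∃ i ≠ j, t = m₁ + i * d} := by
  intro h
  obtain ⟨k, t, h, hk0, hk1⟩ := exists_eq_mul_add_mul_of_mem_closure h
  obtain rfl | rfl | ⟨k, rfl⟩ : k = 0 ∨ k = 1 ∨ ∃ k', k = k' + 2 := by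
    rcases k with _ | _ | k <;> simp
  · rw [hk0 rfl] at h
    omega
  · exact hk1 ⟨rfl, (Nat.eq_of_mul_eq_mul_right hd (by omega)).symm⟩
  · have htj : t ≤ j := Nat.le_of_mul_le_mul_right (by nlinarith) hd
    obtain ⟨s, rfl⟩ := Nat.exists_eq_add_of_le htj
    have hs : s * d = (k + 1) * m₁ := by linarith
    have hs0 : 0 < s := Nat.pos_of_ne_zero (by rintro rfl; nlinarith)
    have := Nat.le_of_dvd hs0 (hcop.dvd_of_dvd_mul_right ⟨k + 1, by rw [hs, mul_comm]⟩)
    omega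

end Nat

/-- `a_i = (m_i, m_n - m_i)` for `m_i = m₁ + (i - 1) d`, valid for `1 ≤ i ≤ n`. -/
def arithPoint (m₁ d n i : ℕ) : ℕ × ℕ := (m₁ + (i - 1) * d, (n - i) * d)

theorem arithPoint_add_arithPoint {m₁ d n i j p q : ℕ} (hi : i ∈ Icc 1 n) (hj : j ∈ Icc 1 n)
    (hp : p ∈ Icc 1 n) (hq : q ∈ Icc 1 n) (h : i + j = p + q) :
    arithPoint m₁ d n i + arithPoint m₁ d n j = arithPoint m₁ d n p + arithPoint m₁ d n q := by
  simp only [mem_Icc] at hi hj hp hq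
  have h₁ : (i - 1) + (j - 1) = (p - 1) + (q - 1) := by omega
  have h₂ : (n - i) + (n - j) = (n - p) + (n - q) := by omega
  simp only [arithPoint, Prod.mk_add_mk, add_add_add_comm _ _ m₁, ← add_mul, h₁, h₂]

theorem exists_add_eq_add_ne {n r j : ℕ} (hr : 3 ≤ r) (hrn : r ≤ n - 2) (hj : j ∈ Icc 1 n) :
    ∃ p q, p ∈ Icc 1 n ∧ q ∈ Icc 1 n ∧ p ≠ r ∧ q ≠ r ∧ j + r = p + q := by
  simp only [mem_Icc] at hj ⊢
  rcases Nat.lt_or_ge r j with hrj | hjr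
  · by_cases hjn : j = n
    · exact ⟨n - 1, r + 1, by omega⟩
    · exact ⟨j + 1, r - 1, by omega⟩
  · by_cases hj1 : j = 1
    · exact ⟨2, r - 1, by omega⟩
    · exact ⟨j - 1, r + 1, by omega⟩

section ArithmeticSequence

variable {n m₁ d r : ℕ} {m : ℕ → ℕ} {a : ℕ → ℕ × ℕ}

theorem apply_eq_arithPoint (hm : ∀ i, m i = m₁ + (i - 1) * d)
    (ha : ∀ i, a i = if i = n + 1 then (0, m n) else (m i, m n - m i)) {i : ℕ}
    (hi : i ∈ Icc 1 n) : a i = arithPoint m₁ d n i := by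
  simp only [mem_Icc] at hi
  rw [ha, if_neg (by omega), hm, hm, arithPoint]
  congr 1
  refine Nat.sub_eq_of_eq_add ?_
  rw [show n - 1 = (n - i) + (i - 1) by omega]
  ring

theorem apply_add_apply_mem_closure (hm : ∀ i, m i = m₁ + (i - 1) * d)
    (ha : ∀ i, a i = if i = n + 1 then (0, m n) else (m i, m n - m i))
    (hr₁ : 3 ≤ r) (hr₂ : r ≤ n - 2) {j : ℕ} (hj : j ∈ Icc 1 n) :
    a j + a r ∈ AddSubmonoid.closure (a '' (Icc 1 (n + 1) \ {r})) := by
  have hr : r ∈ Icc 1 n := by simp only [mem_Icc]; omega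
  obtain ⟨p, q, hp, hq, hpr, hqr, hjr⟩ := exists_add_eq_add_ne hr₁ hr₂ hj
  rw [apply_eq_arithPoint hm ha hj, apply_eq_arithPoint hm ha hr,
    arithPoint_add_arithPoint hj hr hp hq hjr, ← apply_eq_arithPoint hm ha hp,
    ← apply_eq_arithPoint hm ha hq]
  exact add_mem (AddSubmonoid.subset_closure ⟨p, ⟨Icc_subset_Icc_right n.le_succ hp, hpr⟩, rfl⟩)
    (AddSubmonoid.subset_closure ⟨q, ⟨Icc_subset_Icc_right n.le_succ hq, hqr⟩, rfl⟩)

theorem apply_add_nsmul_notMem_closure (hm : ∀ i, m i = m₁ + (i - 1) * d)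
    (ha : ∀ i, a i = if i = n + 1 then (0, m n) else (m i, m n - m i))
    (hd : 0 < d) (hgcd : Nat.gcd m₁ d = 1) (hr : r ∈ Icc 1 n) (hrm : r ≤ m₁) (k : ℕ) :
    a r + k • a (n + 1) ∉ AddSubmonoid.closure (a '' (Icc 1 (n + 1) \ {r})) := by
  intro hk
  have hr' := mem_Icc.1 hr
  have ha_top : a (n + 1) = (0, m n) := by rw [ha, if_pos rfl]
  have hsub : AddMonoidHom.fst ℕ ℕ '' (a '' (Icc 1 (n + 1) \ {r})) ⊆
      insert 0 {t | ∃ i ≠ r - 1, t = m₁ + i * d} := by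
    rintro _ ⟨_, ⟨j, ⟨hj, hjr⟩, rfl⟩, rfl⟩
    rw [mem_singleton_iff] at hjr
    rcases eq_or_ne j (n + 1) with rfl | hjn
    · simp [ha_top]
    · simp only [mem_Icc] at hj
      have hj' : j ∈ Icc 1 n := by simp only [mem_Icc]; omega
      exact Or.inr ⟨j - 1, by omega, by simp [apply_eq_arithPoint hm ha hj', arithPoint]⟩
  have hfst := AddSubmonoid.mem_map_of_mem (AddMonoidHom.fst ℕ ℕ) hk
  rw [AddMonoidHom.map_mclosure] at hfst
  refine Nat.add_mul_notMem_closure hgcd hd (show r - 1 < m₁ by omega) ?_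
  have := ((AddSubmonoid.closure_mono hsub).trans_eq (AddSubmonoid.closure_insert_zero _)) hfst
  simpa [apply_eq_arithPoint hm ha hr, ha_top, arithPoint] using this

end ArithmeticSequence

theorem stmt_10_general (n m₁ d : ℕ) (hd : 0 < d)
    (hgcd : Nat.gcd m₁ d = 1)
    (m : ℕ → ℕ) (hm : ∀ i, m i = m₁ + (i - 1) * d)
    (a : ℕ → ℕ × ℕ)
    (ha : ∀ i, a i = if i = n + 1 then (0, m n) else (m i, m n - m i))
    (S : AddSubmonoid (ℕ × ℕ))
    (hS : S = AddSubmonoid.closure (a '' Set.Icc 1 (n + 1)))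
    (r : ℕ) (hr₁ : 3 ≤ r) (hr₂ : r ≤ n - 2) (hrm : r ≤ m₁)
    (P : AddSubmonoid (ℕ × ℕ))
    (hP : P = AddSubmonoid.closure (a '' (Set.Icc 1 (n + 1) \ {r}))) :
    (S : Set (ℕ × ℕ)) \ (P : Set (ℕ × ℕ)) =
      {x | ∃ lam : ℕ, x = a r + lam • a (n + 1)} := by
  subst hS hP
  have hr : r ∈ Icc 1 n := by simp only [mem_Icc]; omega
  have himage : a '' Icc 1 (n + 1) = insert (a r) (a '' (Icc 1 (n + 1) \ {r})) := by
    rw [← image_insert_eq, insert_sdiff_singleton,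
      insert_eq_of_mem (Icc_subset_Icc_right n.le_succ hr)]
  rw [himage]
  refine AddSubmonoid.closure_insert_diff_closure
    (AddSubmonoid.subset_closure ⟨n + 1, ⟨by simp, by simp only [mem_singleton_iff]; omega⟩, rfl⟩)
    (apply_add_apply_mem_closure hm ha hr₁ hr₂ hr) ?_
    (apply_add_nsmul_notMem_closure hm ha hd hgcd hr hrm)
  rintro _ ⟨j, ⟨hj, -⟩, rfl⟩
  rcases eq_or_ne j (n + 1) with rfl | hjn
  · exact Or.inl rfl
  · refine Or.inr (apply_add_apply_mem_closure hm ha hr₁ hr₂ ?_)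
    simp only [mem_Icc] at hj ⊢
    omega

/-- For the projective monomial curve associated to an arithmetic
sequence, if `3 ≤ r ≤ n-2` and `r ≤ m_1`, then `S \ P_r = {a_r + λ·a_{n+1} : λ ∈ ℕ}`. -/
theorem stmt_10 (n m₁ d : ℕ) (hn : 4 ≤ n) (hm₁ : 0 < m₁) (hd : 0 < d)
    (hgcd : Nat.gcd m₁ d = 1)
    (m : ℕ → ℕ) (hm : ∀ i, m i = m₁ + (i - 1) * d)
    (a : ℕ → ℕ × ℕ)
    (ha : ∀ i, a i = if i = n + 1 then (0, m n) else (m i, m n - m i))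
    (S : AddSubmonoid (ℕ × ℕ))
    (hS : S = AddSubmonoid.closure (a '' Set.Icc 1 (n + 1)))
    (r : ℕ) (hr₁ : 3 ≤ r) (hr₂ : r ≤ n - 2) (hrm : r ≤ m₁)
    (P : AddSubmonoid (ℕ × ℕ))
    (hP : P = AddSubmonoid.closure (a '' (Set.Icc 1 (n + 1) \ {r}))) :
    (S : Set (ℕ × ℕ)) \ (P : Set (ℕ × ℕ)) =
      {x | ∃ lam : ℕ, x = a r + lam • a (n + 1)} :=
  stmt_10_general n m₁ d hd hgcd m hm a ha S hS r hr₁ hr₂ hrm P hP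
end

section
/- Suppose 3 ≤ r ≤ n − 2 and r > m_1. Then S \ P_r = {a_r + λ·a_{n+1} : 0 ≤ λ ≤ d − 1}; in particular S \ P_r is a finite set with exactly d elements. -/
/-!
Write `t = a_{n+1}`. Every generator other than `a_r` lies in `P_r`, and the exchange relations
`a_i + a_j = a_k + a_l` for `i + j = k + l` give `a_r + a_i ∈ P_r` for all `i ≤ n`; hence every
element of `S` outside `P_r` is of the form `a_r + λ t`. The relation
`a_r + d t = d a_1 + a_{r-m_1}` puts those with `λ ≥ d` into `P_r`. Conversely, if `a_r + λ t`
with `λ < d` were a sum of generators of `P_r`, comparing total degrees shows that at most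
`λ + 1 ≤ d` of them are among `a_1, …, a_n`. Their first coordinates are all `≡ m_1 (mod d)` and
add up to `m_r ≡ m_1`, so `gcd(m_1, d) = 1` forces exactly one of them, which then has to be
`a_r` itself.
-/

namespace ArithmeticMonomialCurve

/-- Indices start at `1`; `seq m₁ d 0 = m₁` is a junk value. -/
def seq (m₁ d i : ℕ) : ℕ := m₁ + (i - 1) * d

/-- `gen m₁ d n i` is `a_i`; `monoid` and `monoidErase … r` below are `S` and `P_r`. -/
def gen (m₁ d n i : ℕ) : ℕ × ℕ :=
  if i = n + 1 then (0, seq m₁ d n) else (seq m₁ d i, seq m₁ d n - seq m₁ d i)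

def monoid (m₁ d n : ℕ) : AddSubmonoid (ℕ × ℕ) :=
  AddSubmonoid.closure (gen m₁ d n '' Set.Icc 1 (n + 1))

def monoidErase (m₁ d n r : ℕ) : AddSubmonoid (ℕ × ℕ) :=
  AddSubmonoid.closure (gen m₁ d n '' (Set.Icc 1 (n + 1) \ {r}))

variable {m₁ d n r i : ℕ}

theorem seq_mono {j : ℕ} (h : i ≤ j) : seq m₁ d i ≤ seq m₁ d j := by
  unfold seq; gcongr

theorem seq_injOn (hd : 0 < d) : Set.InjOn (seq m₁ d) (Set.Ici 1) := by
  intro i hi j hj h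
  have : (i - 1) * d = (j - 1) * d := by unfold seq at h; omega
  have := Nat.eq_of_mul_eq_mul_right hd this
  simp only [Set.mem_Ici] at hi hj
  omega

theorem seq_add_seq {j k l : ℕ} (hi : 1 ≤ i) (hj : 1 ≤ j) (hk : 1 ≤ k) (hl : 1 ≤ l)
    (h : i + j = k + l) : seq m₁ d i + seq m₁ d j = seq m₁ d k + seq m₁ d l := by
  have : (i - 1) + (j - 1) = (k - 1) + (l - 1) := by omega
  unfold seq
  linear_combination d * this

theorem sum_map_seq (s : Multiset ℕ) :
    (s.map (seq m₁ d)).sum = Multiset.card s * m₁ + (s.map (· - 1)).sum * d := by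
  induction s using Multiset.induction_on with
  | empty => simp
  | cons i s ih =>
    simp only [Multiset.map_cons, Multiset.sum_cons, Multiset.card_cons, ih, seq]
    ring

theorem gen_of_le (hi : i ≤ n) : gen m₁ d n i = (seq m₁ d i, seq m₁ d n - seq m₁ d i) :=
  if_neg (by omega)

theorem gen_top : gen m₁ d n (n + 1) = (0, seq m₁ d n) := if_pos rfl

theorem gen_add_gen {j k l : ℕ} (hi : 1 ≤ i) (hj : 1 ≤ j) (hk : 1 ≤ k) (hl : 1 ≤ l)
    (hin : i ≤ n) (hjn : j ≤ n) (hkn : k ≤ n) (hln : l ≤ n) (h : i + j = k + l) :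
    gen m₁ d n i + gen m₁ d n j = gen m₁ d n k + gen m₁ d n l := by
  have hsum := seq_add_seq (m₁ := m₁) (d := d) hi hj hk hl h
  have := seq_mono (m₁ := m₁) (d := d) hin
  have := seq_mono (m₁ := m₁) (d := d) hjn
  have := seq_mono (m₁ := m₁) (d := d) hkn
  have := seq_mono (m₁ := m₁) (d := d) hln
  rw [gen_of_le hin, gen_of_le hjn, gen_of_le hkn, gen_of_le hln, Prod.mk_add_mk,
    Prod.mk_add_mk]
  ext <;> dsimp only <;> omega

theorem gen_mem_monoid (hi : i ∈ Set.Icc 1 (n + 1)) : gen m₁ d n i ∈ monoid m₁ d n :=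
  AddSubmonoid.subset_closure ⟨i, hi, rfl⟩

theorem gen_mem_monoidErase (hi : i ∈ Set.Icc 1 (n + 1)) (hir : i ≠ r) :
    gen m₁ d n i ∈ monoidErase m₁ d n r :=
  AddSubmonoid.subset_closure ⟨i, ⟨hi, hir⟩, rfl⟩

theorem gen_add_gen_mem_monoidErase (hr : 3 ≤ r) (hrn : r + 2 ≤ n) (hi : 1 ≤ i)
    (hin : i ≤ n) :
    gen m₁ d n r + gen m₁ d n i ∈ monoidErase m₁ d n r := by
  obtain ⟨k, l, hk, hl, hkl⟩ : ∃ k l, (1 ≤ k ∧ k ≤ n ∧ k ≠ r) ∧ (1 ≤ l ∧ l ≤ n ∧ l ≠ r) ∧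
      r + i = k + l := by
    by_cases h : i = n ∨ i + 1 = r
    exacts [⟨r + 1, i - 1, by omega⟩, ⟨r - 1, i + 1, by omega⟩]
  rw [gen_add_gen (by omega) hi hk.1 hl.1 (by omega) hin hk.2.1 hl.2.1 hkl]
  exact add_mem (gen_mem_monoidErase ⟨hk.1, by omega⟩ hk.2.2)
    (gen_mem_monoidErase ⟨hl.1, by omega⟩ hl.2.2)

theorem gen_add_nsmul_gen_top_eq (hrm : m₁ < r) (hrn : r ≤ n) :
    gen m₁ d n r + d • gen m₁ d n (n + 1) = d • gen m₁ d n 1 + gen m₁ d n (r - m₁) := by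
  have hseq : seq m₁ d r = d * m₁ + seq m₁ d (r - m₁) := by
    unfold seq
    rw [show r - 1 = (r - m₁ - 1) + m₁ by omega]
    ring
  have h1 : m₁ ≤ seq m₁ d n := Nat.le_add_right _ _
  have h2 : seq m₁ d (r - m₁) ≤ seq m₁ d n := seq_mono (by omega)
  have h3 : seq m₁ d r ≤ seq m₁ d n := seq_mono hrn
  have hseq1 : seq m₁ d 1 = m₁ := by simp [seq]
  rw [gen_of_le hrn, gen_top, gen_of_le (by omega : 1 ≤ n), gen_of_le (by omega : r - m₁ ≤ n),
    hseq1]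
  ext
  · simp only [Prod.fst_add, Prod.smul_fst, smul_eq_mul]
    omega
  · simp only [Prod.snd_add, Prod.smul_snd, smul_eq_mul]
    rw [Nat.mul_sub]
    have : d * m₁ ≤ d * seq m₁ d n := Nat.mul_le_mul_left d h1
    omega

theorem gen_add_nsmul_gen_top_mem_monoidErase (hm₁ : 0 < m₁) (hrm : m₁ < r) (hrn : r ≤ n) :
    gen m₁ d n r + d • gen m₁ d n (n + 1) ∈ monoidErase m₁ d n r := by
  rw [gen_add_nsmul_gen_top_eq hrm hrn]
  exact add_mem (nsmul_mem (gen_mem_monoidErase ⟨le_rfl, by omega⟩ (by omega)) d)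
    (gen_mem_monoidErase ⟨by omega, by omega⟩ (by omega))

theorem exists_nsmul_or_gen_add_mem_of_mem_monoidErase (hr : 3 ≤ r) (hrn : r + 2 ≤ n)
    {p : ℕ × ℕ} (hp : p ∈ monoidErase m₁ d n r) :
    (∃ μ : ℕ, p = μ • gen m₁ d n (n + 1)) ∨ gen m₁ d n r + p ∈ monoidErase m₁ d n r := by
  induction hp using AddSubmonoid.closure_induction with
  | mem x hx =>
    obtain ⟨i, ⟨⟨hi1, hi2⟩, -⟩, rfl⟩ := hx
    rcases Nat.lt_or_ge i (n + 1) with hin | hin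
    · exact .inr (gen_add_gen_mem_monoidErase hr hrn hi1 (by omega))
    · exact .inl ⟨1, by rw [one_nsmul, le_antisymm hi2 hin]⟩
  | zero => exact .inl ⟨0, (zero_nsmul _).symm⟩
  | add x y _ hy ihx ihy =>
    rcases ihx with ⟨μ, rfl⟩ | hx'
    · rcases ihy with ⟨ν, rfl⟩ | hy'
      · exact .inl ⟨μ + ν, (add_nsmul _ _ _).symm⟩
      · refine .inr ?_
        rw [add_left_comm]
        have htop : gen m₁ d n (n + 1) ∈ monoidErase m₁ d n r :=
          gen_mem_monoidErase ⟨by omega, le_rfl⟩ (by omega)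
        exact add_mem (nsmul_mem htop μ) hy'
    · exact .inr (add_assoc (gen m₁ d n r) x y ▸ add_mem hx' hy)

theorem mem_monoidErase_or_exists_eq_of_mem_monoid (hr : 3 ≤ r) (hrn : r + 2 ≤ n)
    {x : ℕ × ℕ} (hx : x ∈ monoid m₁ d n) :
    x ∈ monoidErase m₁ d n r ∨ ∃ μ : ℕ, x = gen m₁ d n r + μ • gen m₁ d n (n + 1) := by
  have htop : gen m₁ d n (n + 1) ∈ monoidErase m₁ d n r :=
    gen_mem_monoidErase ⟨by omega, le_rfl⟩ (by omega)
  have absorb {p : ℕ × ℕ} (hp : p ∈ monoidErase m₁ d n r) (μ : ℕ) :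
      p + (gen m₁ d n r + μ • gen m₁ d n (n + 1)) ∈ monoidErase m₁ d n r ∨
        ∃ ν : ℕ, p + (gen m₁ d n r + μ • gen m₁ d n (n + 1)) =
          gen m₁ d n r + ν • gen m₁ d n (n + 1) := by
    rcases exists_nsmul_or_gen_add_mem_of_mem_monoidErase hr hrn hp with ⟨ν, rfl⟩ | hp'
    · exact .inr ⟨ν + μ, by rw [add_nsmul]; abel⟩
    · exact .inl (by rw [← add_assoc, add_comm p]; exact add_mem hp' (nsmul_mem htop μ))
  induction hx using AddSubmonoid.closure_induction with
  | mem x hx =>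
    obtain ⟨i, hi, rfl⟩ := hx
    by_cases hir : i = r
    · exact .inr ⟨0, by rw [hir, zero_nsmul, add_zero]⟩
    · exact .inl (gen_mem_monoidErase hi hir)
  | zero => exact .inl (zero_mem _)
  | add x y _ _ ihx ihy =>
    rcases ihx with hx | ⟨μ, rfl⟩ <;> rcases ihy with hy | ⟨ν, rfl⟩
    · exact .inl (add_mem hx hy)
    · exact absorb hx ν
    · exact add_comm y _ ▸ absorb hy μ
    · refine .inl ?_
      rw [add_add_add_comm, ← add_nsmul]
      exact add_mem (gen_add_gen_mem_monoidErase hr hrn (by omega) (by omega))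
        (nsmul_mem htop _)

theorem exists_multiset_of_mem_monoidErase {x : ℕ × ℕ} (hx : x ∈ monoidErase m₁ d n r) :
    ∃ (s : Multiset ℕ) (c : ℕ), (∀ i ∈ s, 1 ≤ i ∧ i ≤ n ∧ i ≠ r) ∧
      x.1 = (s.map (seq m₁ d)).sum ∧ x.1 + x.2 = (Multiset.card s + c) * seq m₁ d n := by
  induction hx using AddSubmonoid.closure_induction with
  | mem x hx =>
    obtain ⟨i, ⟨⟨hi1, hi2⟩, hir : i ≠ r⟩, rfl⟩ := hx
    rcases Nat.lt_or_ge i (n + 1) with hin | hin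
    · have := seq_mono (m₁ := m₁) (d := d) (show i ≤ n by omega)
      refine ⟨{i}, 0, fun j hj => by rw [Multiset.mem_singleton.mp hj]; omega, ?_, ?_⟩ <;>
        simp only [gen_of_le (show i ≤ n by omega), Multiset.map_singleton,
          Multiset.sum_singleton, Multiset.card_singleton]
      omega
    · obtain rfl : i = n + 1 := le_antisymm hi2 hin
      exact ⟨0, 1, by simp, by simp [gen_top], by simp [gen_top]⟩
  | zero => exact ⟨0, 0, by simp, by simp, by simp⟩
  | add x y _ _ ihx ihy =>
    obtain ⟨s, c, hs, hs1, hs2⟩ := ihx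
    obtain ⟨t, e, ht, ht1, ht2⟩ := ihy
    refine ⟨s + t, c + e, fun i hi => ?_, ?_, ?_⟩
    · exact (Multiset.mem_add.mp hi).elim (hs i) (ht i)
    · simp only [Prod.fst_add, Multiset.map_add, Multiset.sum_add, hs1, ht1]
    · simp only [Prod.fst_add, Prod.snd_add, Multiset.card_add]
      linear_combination hs2 + ht2

theorem eq_one_of_mul_add_mul_eq {k T s : ℕ} (hcop : Nat.Coprime m₁ d) (hk : 0 < k)
    (hkd : k ≤ d) (h : k * m₁ + T * d = m₁ + s * d) : k = 1 := by
  have hsum : (k - 1) * m₁ + T * d = s * d := by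
    obtain ⟨k, rfl⟩ := Nat.exists_eq_add_of_lt hk
    simp only [add_tsub_cancel_right] at *
    linear_combination h
  have hdvd : d ∣ (k - 1) * m₁ :=
    (Nat.dvd_add_left (dvd_mul_left d T)).mp (hsum ▸ dvd_mul_left d s)
  have := Nat.eq_zero_of_dvd_of_lt (hcop.symm.dvd_of_dvd_mul_right hdvd) (by omega)
  omega

theorem gen_add_nsmul_gen_top_not_mem_monoidErase (hm₁ : 0 < m₁) (hcop : Nat.Coprime m₁ d)
    (hr : 1 ≤ r) (hrn : r ≤ n) {lam : ℕ} (hlam : lam < d) :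
    gen m₁ d n r + lam • gen m₁ d n (n + 1) ∉ monoidErase m₁ d n r := by
  intro hx
  obtain ⟨s, c, hs, hs1, hs2⟩ := exists_multiset_of_mem_monoidErase hx
  have hrn' : seq m₁ d r ≤ seq m₁ d n := seq_mono hrn
  have hpos : 0 < seq m₁ d n := Nat.add_pos_left hm₁ _
  simp only [gen_of_le hrn, gen_top, Prod.fst_add, Prod.snd_add, Prod.smul_fst, Prod.smul_snd,
    smul_eq_mul, mul_zero, add_zero] at hs1 hs2
  have hcard : Multiset.card s + c = lam + 1 :=
    Nat.eq_of_mul_eq_mul_right hpos (by rw [← hs2]; ring_nf; omega)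
  have hs0 : s ≠ 0 := by
    rintro rfl
    simp only [Multiset.map_zero, Multiset.sum_zero, seq] at hs1
    omega
  have hs_one : Multiset.card s = 1 := by
    refine eq_one_of_mul_add_mul_eq (T := (s.map (· - 1)).sum) (s := r - 1) hcop
      (Multiset.card_pos.mpr hs0) (by omega) ?_
    rw [← sum_map_seq, ← hs1]
    rfl
  obtain ⟨i, rfl⟩ := Multiset.card_eq_one.mp hs_one
  obtain ⟨hi, -, hir⟩ := hs i (Multiset.mem_singleton_self i)
  simp only [Multiset.map_singleton, Multiset.sum_singleton] at hs1
  exact hir (seq_injOn (by omega) hi hr hs1.symm)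

theorem gen_add_nsmul_gen_top_injective (hm₁ : 0 < m₁) :
    Function.Injective fun lam : ℕ => gen m₁ d n r + lam • gen m₁ d n (n + 1) := by
  intro lam μ h
  have h2 := congrArg Prod.snd ((add_right_injective _) h)
  simp only [gen_top, Prod.smul_snd, smul_eq_mul] at h2
  exact Nat.eq_of_mul_eq_mul_right (Nat.add_pos_left hm₁ _) h2

theorem monoid_diff_monoidErase (hm₁ : 0 < m₁) (hcop : Nat.Coprime m₁ d) (hr : 3 ≤ r)
    (hrn : r + 2 ≤ n) (hrm : m₁ < r) :
    (monoid m₁ d n : Set (ℕ × ℕ)) \ monoidErase m₁ d n r =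
      (fun lam : ℕ => gen m₁ d n r + lam • gen m₁ d n (n + 1)) '' Set.Iio d := by
  ext x
  constructor
  · rintro ⟨hxS, hxP⟩
    rcases mem_monoidErase_or_exists_eq_of_mem_monoid hr hrn hxS with hx | ⟨μ, rfl⟩
    · exact absurd hx hxP
    refine ⟨μ, Set.mem_Iio.mpr (not_le.mp fun hdμ => hxP ?_), rfl⟩
    rw [← Nat.add_sub_cancel' hdμ, add_nsmul, ← add_assoc]
    exact add_mem (gen_add_nsmul_gen_top_mem_monoidErase hm₁ hrm (by omega))
      (nsmul_mem (gen_mem_monoidErase ⟨by omega, le_rfl⟩ (by omega)) _)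
  · rintro ⟨lam, hlam, rfl⟩
    refine ⟨add_mem (gen_mem_monoid ⟨by omega, by omega⟩)
      (nsmul_mem (gen_mem_monoid ⟨by omega, le_rfl⟩) _), ?_⟩
    exact gen_add_nsmul_gen_top_not_mem_monoidErase hm₁ hcop (by omega) (by omega) hlam

end ArithmeticMonomialCurve

open ArithmeticMonomialCurve

theorem stmt_11_general (n m₁ d : ℕ) (hm₁ : 0 < m₁)
    (hgcd : Nat.gcd m₁ d = 1)
    (m : ℕ → ℕ) (hm : ∀ i, m i = m₁ + (i - 1) * d)
    (a : ℕ → ℕ × ℕ)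
    (ha : ∀ i, a i = if i = n + 1 then (0, m n) else (m i, m n - m i))
    (S : AddSubmonoid (ℕ × ℕ))
    (hS : S = AddSubmonoid.closure (a '' Set.Icc 1 (n + 1)))
    (r : ℕ) (hr₁ : 3 ≤ r) (hr₂ : r ≤ n - 2) (hrm : m₁ < r)
    (P : AddSubmonoid (ℕ × ℕ))
    (hP : P = AddSubmonoid.closure (a '' (Set.Icc 1 (n + 1) \ {r}))) :
    (S : Set (ℕ × ℕ)) \ (P : Set (ℕ × ℕ)) =
      {x | ∃ lam : ℕ, lam < d ∧ x = a r + lam • a (n + 1)} ∧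
    ((S : Set (ℕ × ℕ)) \ (P : Set (ℕ × ℕ))).Finite ∧
    ((S : Set (ℕ × ℕ)) \ (P : Set (ℕ × ℕ))).ncard = d := by
  obtain rfl : m = seq m₁ d := funext hm
  obtain rfl : a = gen m₁ d n := funext ha
  obtain rfl : S = monoid m₁ d n := hS
  obtain rfl : P = monoidErase m₁ d n r := hP
  rw [monoid_diff_monoidErase hm₁ hgcd hr₁ (by omega) hrm]
  refine ⟨?_, (Set.finite_Iio d).image _, ?_⟩
  · ext x
    simp only [Set.mem_image, Set.mem_Iio, Set.mem_ofPred_eq, eq_comm]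
  · rw [Set.ncard_image_of_injective _ (gen_add_nsmul_gen_top_injective hm₁),
      Set.ncard_Iio_nat]

/-- For the projective monomial curve associated to an arithmetic
sequence, if `3 ≤ r ≤ n-2` and `r > m_1`, then
`S \ P_r = {a_r + λ·a_{n+1} : 0 ≤ λ ≤ d-1}` (written with `λ < d`); in particular
`S \ P_r` is finite with exactly `d` elements. -/
theorem stmt_11 (n m₁ d : ℕ) (hn : 4 ≤ n) (hm₁ : 0 < m₁) (hd : 0 < d)
    (hgcd : Nat.gcd m₁ d = 1)
    (m : ℕ → ℕ) (hm : ∀ i, m i = m₁ + (i - 1) * d)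
    (a : ℕ → ℕ × ℕ)
    (ha : ∀ i, a i = if i = n + 1 then (0, m n) else (m i, m n - m i))
    (S : AddSubmonoid (ℕ × ℕ))
    (hS : S = AddSubmonoid.closure (a '' Set.Icc 1 (n + 1)))
    (r : ℕ) (hr₁ : 3 ≤ r) (hr₂ : r ≤ n - 2) (hrm : m₁ < r)
    (P : AddSubmonoid (ℕ × ℕ))
    (hP : P = AddSubmonoid.closure (a '' (Set.Icc 1 (n + 1) \ {r}))) :
    (S : Set (ℕ × ℕ)) \ (P : Set (ℕ × ℕ)) =
      {x | ∃ lam : ℕ, lam < d ∧ x = a r + lam • a (n + 1)} ∧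
    ((S : Set (ℕ × ℕ)) \ (P : Set (ℕ × ℕ))).Finite ∧
    ((S : Set (ℕ × ℕ)) \ (P : Set (ℕ × ℕ))).ncard = d :=
  stmt_11_general n m₁ d hm₁ hgcd m hm a ha S hS r hr₁ hr₂ hrm P hP
end

section
/- Suppose r = n − 1 and n − 1 ≤ m_1. Then S \ P_{n−1} = {a_{n−1} + μ·a_n + λ·a_{n+1} : μ, λ ∈ ℕ and (μ ≤ q − 1 + ε or λ ≤ d − 1)}, where ε = 1 if l = n − 1 and ε = 0 otherwise. -/
/-!
An element of `S` outside `P_{n-1}` uses `a_{n-1}` exactly once, next to copies of `a_n` and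
`a_{n+1}` only: `a_{n-1} + a_{n-1} = a_{n-2} + a_n`, and `a_{n-1} + a_i` with `i ≤ n - 2` equals
`a_{i-1} + a_n` (or `a_2 + a_{n-2}` when `i = 1`).

An element of `P_{n-1}` made of `t` generators among `a_1, …, a_n` and `s` copies of `a_{n+1}`
is `(t m₁ + A d, D d + s m_n)` with `A + D = t (n-1)` and `D ≠ 1`, since `a_{n-1}` is the only
generator with `D = 1`. If it equals `a_{n-1} + μ a_n + λ a_{n+1}`, then
`(t - μ - 1) m₁ = ((μ+1)(n-1) - 1 - A) d`, so `t - μ - 1 = k d` by coprimality, and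
`D = k m_n + 1` forces `k ≥ 1`; hence `m₁ < (μ+1)(n-1)` and `λ ≥ d`. Conversely, under these two
conditions the element is rewritten with `μ + d + 1` generators among `a_1, …, a_n`, read off from
the Euclidean division of `(μ+1)(n-1) - 1 - m₁` by `n - 1`. Finally `q + ε = ⌊m₁ / (n-1)⌋`.
-/

section
variable {M : Type*} [AddCommMonoid M] {g : M} {G H : Set M}

theorem mem_closure_or_add_mem_closure (hHG : H ⊆ G)
    (hgG : ∀ h ∈ G \ H, g + h ∈ AddSubmonoid.closure G) {p : M}
    (hp : p ∈ AddSubmonoid.closure G) :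
    p ∈ AddSubmonoid.closure H ∨ g + p ∈ AddSubmonoid.closure G := by
  induction hp using AddSubmonoid.closure_induction with
  | mem h hh =>
    by_cases hH : h ∈ H
    · exact .inl (AddSubmonoid.subset_closure hH)
    · exact .inr (hgG h ⟨hh, hH⟩)
  | zero => exact .inl (zero_mem _)
  | add p p' hp hp' ih ih' =>
    rcases ih with ih | ih
    · rcases ih' with ih' | ih'
      · exact .inl (add_mem ih ih')
      · exact .inr (add_left_comm g p p' ▸ add_mem (AddSubmonoid.closure_mono hHG ih) ih')
    · exact .inr (add_assoc g p p' ▸ add_mem ih hp')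

theorem mem_closure_or_exists_add_of_mem_closure_insert (hHG : H ⊆ G)
    (hgg : g + g ∈ AddSubmonoid.closure G) (hgG : ∀ h ∈ G \ H, g + h ∈ AddSubmonoid.closure G)
    {x : M} (hx : x ∈ AddSubmonoid.closure (insert g G)) :
    x ∈ AddSubmonoid.closure G ∨ ∃ y ∈ AddSubmonoid.closure H, x = g + y := by
  have hHG' := AddSubmonoid.closure_mono hHG
  induction hx using AddSubmonoid.closure_induction with
  | mem x hx =>
    rcases hx with rfl | hx
    · exact .inr ⟨0, zero_mem _, (add_zero x).symm⟩
    · exact .inl (AddSubmonoid.subset_closure hx)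
  | zero => exact .inl (zero_mem _)
  | add x x' _ _ ih ih' =>
    rcases ih with hx | ⟨y, hy, rfl⟩ <;> rcases ih' with hx' | ⟨y', hy', rfl⟩
    · exact .inl (add_mem hx hx')
    · rcases mem_closure_or_add_mem_closure hHG hgG hx with hx | hx
      · exact .inr ⟨x + y', add_mem hx hy', add_left_comm x g y'⟩
      · exact .inl (add_left_comm g x y' ▸ add_assoc g x y' ▸ add_mem hx (hHG' hy'))
    · rcases mem_closure_or_add_mem_closure hHG hgG hx' with hx' | hx'
      · exact .inr ⟨y + x', add_mem hy hx', add_assoc g y x'⟩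
      · exact .inl (add_right_comm g y x' ▸ add_mem hx' (hHG' hy))
    · exact .inl (add_add_add_comm g y g y' ▸ add_mem hgg (hHG' (add_mem hy hy')))

end

theorem Nat.sub_one_div_add_ite_eq_div {m N : ℕ} (hN : 0 < N) :
    (m - 1) / N + (if m - (m - 1) / N * N = N then 1 else 0) = m / N := by
  rcases m with _ | m
  · simp [hN.ne]
  have h₁ := Nat.div_add_mod m N
  have h₂ := Nat.mod_lt m hN
  rw [Nat.add_sub_cancel]
  split_ifs with h <;> symm <;> apply Nat.div_eq_of_lt_le <;> simp only [add_mul, one_mul] <;>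
    rw [mul_comm] at h₁ <;> omega

theorem lt_mul_and_le_of_eq {m₁ d N t s A D μ lam : ℕ} (hN : 2 ≤ N) (hd : 0 < d)
    (hcop : m₁.Coprime d) (hAD : A + D = t * N) (hD : D ≠ 1)
    (h₁ : t * m₁ + A * d = m₁ + (N - 1) * d + μ * (m₁ + N * d))
    (h₂ : D * d + s * (m₁ + N * d) = d + lam * (m₁ + N * d)) :
    m₁ < (μ + 1) * N ∧ d ≤ lam := by
  zify [show 1 ≤ N by omega] at hN hd hAD hD h₁ h₂ ⊢
  have hpos : (2 : ℤ) ≤ m₁ + N * d := by nlinarith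
  have hts : (t + s : ℤ) = μ + 1 + lam := by
    have : ((t + s) - (μ + 1 + lam) : ℤ) * (m₁ + N * d) = 0 := by
      linear_combination h₁ + h₂ - d * hAD
    linarith [(mul_eq_zero.1 this).resolve_right (by positivity)]
  obtain ⟨k, hk⟩ : (d : ℤ) ∣ t - μ - 1 :=
    (Nat.isCoprime_iff_coprime.2 hcop.symm).dvd_of_dvd_mul_right (z := (m₁ : ℤ))
      ⟨(μ + 1) * N - 1 - A, by linear_combination h₁⟩
  have hC : (μ + 1 : ℤ) * N - 1 - A = k * m₁ := by
    refine mul_left_cancel₀ (show (d : ℤ) ≠ 0 by positivity) ?_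
    linear_combination m₁ * hk - h₁
  have hDk : (D : ℤ) = k * (m₁ + N * d) + 1 := by linear_combination hAD + hC + N * hk
  have hk₁ : 1 ≤ k := by
    by_contra! hk₁
    rcases (show k = 0 ∨ k ≤ -1 by omega) with rfl | hk₁
    · exact hD (by simpa using hDk)
    · nlinarith [Int.natCast_nonneg D]
  constructor
  · nlinarith [Int.natCast_nonneg A, Int.natCast_nonneg m₁]
  · nlinarith [Int.natCast_nonneg s]

/-- `arithGen n m₁ d i` is `a_i`, with `m_i = m₁ + (i - 1) d`. -/
def arithGen (n m₁ d i : ℕ) : ℕ × ℕ :=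
  if i = n + 1 then (0, m₁ + (n - 1) * d) else (m₁ + (i - 1) * d, (n - i) * d)

/-- The monoid `P_r`. -/
def arithMonoidExcept (n m₁ d r : ℕ) : AddSubmonoid (ℕ × ℕ) :=
  AddSubmonoid.closure (arithGen n m₁ d '' (Set.Icc 1 (n + 1) \ {r}))

section
variable {n m₁ d : ℕ}

theorem arithGen_of_le {i : ℕ} (hi : i ≤ n) :
    arithGen n m₁ d i = (m₁ + (i - 1) * d, (n - i) * d) :=
  if_neg (by omega)

theorem arithGen_succ : arithGen n m₁ d (n + 1) = (0, m₁ + (n - 1) * d) :=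
  if_pos rfl

theorem arithGen_add_arithGen {i j i' j' : ℕ} (hi : i ∈ Set.Icc 1 n) (hj : j ∈ Set.Icc 1 n)
    (hi' : i' ∈ Set.Icc 1 n) (hj' : j' ∈ Set.Icc 1 n) (h : i + j = i' + j') :
    arithGen n m₁ d i + arithGen n m₁ d j = arithGen n m₁ d i' + arithGen n m₁ d j' := by
  simp only [Set.mem_Icc] at hi hj hi' hj'
  simp only [arithGen_of_le hi.2, arithGen_of_le hj.2, arithGen_of_le hi'.2,
    arithGen_of_le hj'.2, Prod.mk_add_mk, Prod.mk.injEq, add_add_add_comm m₁, ← add_mul]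
  constructor
  · congr 2; omega
  · congr 1; omega

theorem arithGen_mem_arithMonoidExcept {r i : ℕ} (hi₁ : 1 ≤ i) (hi₂ : i ≤ n + 1) (hir : i ≠ r) :
    arithGen n m₁ d i ∈ arithMonoidExcept n m₁ d r :=
  AddSubmonoid.subset_closure ⟨i, ⟨⟨hi₁, hi₂⟩, hir⟩, rfl⟩

theorem arithGen_pred_add_mem (hn : 4 ≤ n) {i : ℕ} (hi₁ : 1 ≤ i) (hi₂ : i ≤ n - 2) :
    arithGen n m₁ d (n - 1) + arithGen n m₁ d i ∈ arithMonoidExcept n m₁ d (n - 1) := by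
  obtain ⟨j, k, hjk, hj₁, hj₂, hk₁, hk₂, hkn⟩ :
      ∃ j k, j + k = n - 1 + i ∧ 1 ≤ j ∧ j ≤ n - 2 ∧ 2 ≤ k ∧ k ≤ n ∧ k ≠ n - 1 :=
    if hi : i = 1 then ⟨2, n - 2, by omega⟩ else ⟨i - 1, n, by omega⟩
  rw [arithGen_add_arithGen (i' := j) (j' := k)]
  · exact add_mem (arithGen_mem_arithMonoidExcept (by omega) (by omega) (by omega))
      (arithGen_mem_arithMonoidExcept (by omega) (by omega) hkn)
  all_goals (try simp only [Set.mem_Icc]); omega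

theorem arithGen_pred_add_self_mem (hn : 4 ≤ n) :
    arithGen n m₁ d (n - 1) + arithGen n m₁ d (n - 1) ∈ arithMonoidExcept n m₁ d (n - 1) := by
  rw [arithGen_add_arithGen (i' := n - 2) (j' := n)]
  · exact add_mem (arithGen_mem_arithMonoidExcept (by omega) (by omega) (by omega))
      (arithGen_mem_arithMonoidExcept (by omega) (by omega) (by omega))
  all_goals (try simp only [Set.mem_Icc]); omega

theorem mem_arithMonoidExcept_or_exists_eq (hn : 4 ≤ n) {x : ℕ × ℕ}
    (hx : x ∈ AddSubmonoid.closure (arithGen n m₁ d '' Set.Icc 1 (n + 1))) :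
    x ∈ arithMonoidExcept n m₁ d (n - 1) ∨ ∃ μ lam : ℕ,
      x = arithGen n m₁ d (n - 1) + μ • arithGen n m₁ d n + lam • arithGen n m₁ d (n + 1) := by
  have hinsert : arithGen n m₁ d '' Set.Icc 1 (n + 1) =
      insert (arithGen n m₁ d (n - 1)) (arithGen n m₁ d '' (Set.Icc 1 (n + 1) \ {n - 1})) := by
    rw [← Set.image_insert_eq, Set.insert_sdiff_singleton,
      Set.insert_eq_of_mem (Set.mem_Icc.2 ⟨by omega, by omega⟩)]
  have hHG : {arithGen n m₁ d n, arithGen n m₁ d (n + 1)} ⊆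
      arithGen n m₁ d '' (Set.Icc 1 (n + 1) \ {n - 1}) :=
    Set.pair_subset (Set.mem_image_of_mem _ ⟨⟨by omega, by omega⟩, by simp; omega⟩)
      (Set.mem_image_of_mem _ ⟨⟨by omega, le_rfl⟩, by simp; omega⟩)
  have hgG : ∀ h ∈ arithGen n m₁ d '' (Set.Icc 1 (n + 1) \ {n - 1}) \
      {arithGen n m₁ d n, arithGen n m₁ d (n + 1)},
      arithGen n m₁ d (n - 1) + h ∈ arithMonoidExcept n m₁ d (n - 1) := by
    rintro _ ⟨⟨i, ⟨⟨hi₁, hi₂⟩, hi⟩, rfl⟩, hin⟩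
    have hin : i ≠ n ∧ i ≠ n + 1 := by constructor <;> rintro rfl <;> simp at hin
    exact arithGen_pred_add_mem hn hi₁ (by grind)
  rw [hinsert] at hx
  obtain hx | ⟨y, hy, rfl⟩ :=
    mem_closure_or_exists_add_of_mem_closure_insert hHG (arithGen_pred_add_self_mem hn) hgG hx
  · exact .inl hx
  · obtain ⟨μ, lam, rfl⟩ := (AddSubmonoid.mem_closure_pair _ _ _).1 hy
    exact .inr ⟨μ, lam, (add_assoc _ _ _).symm⟩

theorem exists_eq_of_mem_arithMonoidExcept {x : ℕ × ℕ}
    (hx : x ∈ arithMonoidExcept n m₁ d (n - 1)) :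
    ∃ t s A D : ℕ, A + D = t * (n - 1) ∧ D ≠ 1 ∧
      x = (t * m₁ + A * d, D * d + s * (m₁ + (n - 1) * d)) := by
  induction hx using AddSubmonoid.closure_induction with
  | mem x hx =>
    obtain ⟨i, ⟨⟨hi₁, hi₂⟩, hi⟩, rfl⟩ := hx
    rcases (show i = n + 1 ∨ i ≤ n by omega) with rfl | hin
    · exact ⟨0, 1, 0, 0, by simp, by simp, by simp [arithGen_succ]⟩
    · exact ⟨1, 0, i - 1, n - i, by omega, by grind, by simp [arithGen_of_le hin]⟩
  | zero => exact ⟨0, 0, 0, 0, by simp, by simp, by simp [Prod.zero_eq_mk]⟩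
  | add x y _ _ ihx ihy =>
    obtain ⟨t, s, A, D, hAD, hD, rfl⟩ := ihx
    obtain ⟨t', s', A', D', hAD', hD', rfl⟩ := ihy
    refine ⟨t + t', s + s', A + A', D + D', by grind, by omega, ?_⟩
    simp only [Prod.mk_add_mk, Prod.mk.injEq]
    constructor <;> ring

theorem arithGen_pred_add_eq (hn : 4 ≤ n) {μ lam α β A : ℕ} (hlam : d ≤ lam)
    (hA : A + m₁ + 1 = (μ + 1) * (n - 1)) (hαβ : (n - 1) * α + β = A) (hβ : β < n - 1)
    (hα : α ≤ μ) :
    arithGen n m₁ d (n - 1) + μ • arithGen n m₁ d n + lam • arithGen n m₁ d (n + 1) =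
      ((μ + d - α) • arithGen n m₁ d 1 + arithGen n m₁ d (β + 1)) + α • arithGen n m₁ d n +
        (lam - d) • arithGen n m₁ d (n + 1) := by
  obtain ⟨N, rfl⟩ : ∃ N, n = N + 1 := ⟨n - 1, by omega⟩
  simp only [Nat.add_sub_cancel] at hA hαβ hβ ⊢
  simp only [arithGen_of_le (show N ≤ N + 1 by omega), arithGen_of_le le_rfl,
    arithGen_of_le (show 1 ≤ N + 1 by omega), arithGen_of_le (show β + 1 ≤ N + 1 by omega),
    arithGen_succ, Prod.smul_mk, smul_eq_mul, Prod.mk_add_mk, Prod.mk.injEq, Nat.add_sub_cancel,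
    Nat.add_sub_cancel_left, Nat.add_sub_add_right, Nat.sub_self, zero_mul, mul_zero, add_zero]
  constructor <;>
    zify [show α ≤ μ + d by omega, hlam, show β ≤ N by omega, show 1 ≤ N by omega] at hA hαβ ⊢
  · linear_combination (-d : ℤ) * hA - d * hαβ
  · linear_combination (d : ℤ) * hA + d * hαβ

theorem arithGen_pred_add_mem_of_lt (hn : 4 ≤ n) (hd : 0 < d) {μ lam : ℕ}
    (hμ : m₁ < (μ + 1) * (n - 1)) (hlam : d ≤ lam) :
    arithGen n m₁ d (n - 1) + μ • arithGen n m₁ d n + lam • arithGen n m₁ d (n + 1) ∈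
      arithMonoidExcept n m₁ d (n - 1) := by
  obtain ⟨A, hA⟩ : ∃ A, A + m₁ + 1 = (μ + 1) * (n - 1) := ⟨_, Nat.sub_add_cancel hμ⟩
  have hβ := Nat.mod_lt A (show 0 < n - 1 by omega)
  have hα : A / (n - 1) < μ + 1 := (Nat.div_lt_iff_lt_mul (by omega)).2 (by omega)
  rw [arithGen_pred_add_eq hn hlam hA (Nat.div_add_mod A (n - 1)) hβ (by omega)]
  refine add_mem (add_mem ?_ (nsmul_mem (arithGen_mem_arithMonoidExcept (by omega) (by omega)
    (by omega)) _)) (nsmul_mem (arithGen_mem_arithMonoidExcept (by omega) le_rfl (by omega)) _)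
  have hgen₁ : arithGen n m₁ d 1 ∈ arithMonoidExcept n m₁ d (n - 1) :=
    arithGen_mem_arithMonoidExcept le_rfl (by omega) (by omega)
  by_cases hβn : A % (n - 1) + 1 = n - 1
  · obtain ⟨c, hc⟩ : ∃ c, μ + d - A / (n - 1) = c + 1 := ⟨μ + d - A / (n - 1) - 1, by omega⟩
    rw [hc, succ_nsmul, add_assoc, hβn, add_comm (arithGen n m₁ d 1)]
    exact add_mem (nsmul_mem hgen₁ _) (arithGen_pred_add_mem hn le_rfl (by omega))
  · exact add_mem (nsmul_mem hgen₁ _) (arithGen_mem_arithMonoidExcept (by omega) (by omega) hβn)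

theorem arithGen_pred_add_mem_iff (hn : 4 ≤ n) (hd : 0 < d) (hcop : m₁.Coprime d)
    {μ lam : ℕ} :
    arithGen n m₁ d (n - 1) + μ • arithGen n m₁ d n + lam • arithGen n m₁ d (n + 1) ∈
      arithMonoidExcept n m₁ d (n - 1) ↔ m₁ < (μ + 1) * (n - 1) ∧ d ≤ lam := by
  refine ⟨fun hx => ?_, fun h => arithGen_pred_add_mem_of_lt hn hd h.1 h.2⟩
  obtain ⟨t, s, A, D, hAD, hD, hx⟩ := exists_eq_of_mem_arithMonoidExcept hx
  simp only [arithGen_of_le (show n - 1 ≤ n by omega), arithGen_of_le le_rfl, arithGen_succ,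
    Prod.smul_mk, smul_eq_mul, Prod.mk_add_mk, Prod.mk.injEq, Nat.sub_self, zero_mul, mul_zero,
    add_zero, show n - (n - 1) = 1 by omega, one_mul] at hx
  exact lt_mul_and_le_of_eq (by omega) hd hcop hAD hD hx.1.symm hx.2.symm

theorem closure_arithGen_diff_arithMonoidExcept (hn : 4 ≤ n) (hd : 0 < d) (hcop : m₁.Coprime d) :
    (AddSubmonoid.closure (arithGen n m₁ d '' Set.Icc 1 (n + 1)) : Set (ℕ × ℕ)) \
        arithMonoidExcept n m₁ d (n - 1) =
      {x | ∃ μ lam : ℕ, ¬(m₁ < (μ + 1) * (n - 1) ∧ d ≤ lam) ∧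
        x = arithGen n m₁ d (n - 1) + μ • arithGen n m₁ d n + lam • arithGen n m₁ d (n + 1)} := by
  ext x
  constructor
  · rintro ⟨hS, hP⟩
    obtain ⟨μ, lam, rfl⟩ := (mem_arithMonoidExcept_or_exists_eq hn hS).resolve_left hP
    exact ⟨μ, lam, fun h => hP ((arithGen_pred_add_mem_iff hn hd hcop).2 h), rfl⟩
  · rintro ⟨μ, lam, h, rfl⟩
    have gen_mem {i : ℕ} (hi₁ : 1 ≤ i) (hi₂ : i ≤ n + 1) :
        arithGen n m₁ d i ∈ AddSubmonoid.closure (arithGen n m₁ d '' Set.Icc 1 (n + 1)) :=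
      AddSubmonoid.subset_closure ⟨i, ⟨hi₁, hi₂⟩, rfl⟩
    refine ⟨add_mem (add_mem (gen_mem (by omega) (by omega)) (nsmul_mem (gen_mem (by omega)
      (by omega)) _)) (nsmul_mem (gen_mem (by omega) le_rfl) _),
      fun hP => h ((arithGen_pred_add_mem_iff hn hd hcop).1 hP)⟩

end

theorem stmt_12_general (n m₁ d : ℕ) (hn : 4 ≤ n) (hd : 0 < d)
    (hgcd : Nat.gcd m₁ d = 1)
    (m : ℕ → ℕ) (hm : ∀ i, m i = m₁ + (i - 1) * d)
    (a : ℕ → ℕ × ℕ)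
    (ha : ∀ i, a i = if i = n + 1 then (0, m n) else (m i, m n - m i))
    (S : AddSubmonoid (ℕ × ℕ))
    (hS : S = AddSubmonoid.closure (a '' Set.Icc 1 (n + 1)))
    (P : AddSubmonoid (ℕ × ℕ))
    (hP : P = AddSubmonoid.closure (a '' (Set.Icc 1 (n + 1) \ {n - 1})))
    (q l ε : ℕ) (hq : q = (m₁ - 1) / (n - 1)) (hl : l = m₁ - q * (n - 1))
    (hε : ε = if l = n - 1 then 1 else 0) :
    (S : Set (ℕ × ℕ)) \ (P : Set (ℕ × ℕ)) =
      {x | ∃ μ lam : ℕ, (μ < q + ε ∨ lam < d) ∧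
        x = a (n - 1) + μ • a n + lam • a (n + 1)} := by
  have hga : Set.EqOn a (arithGen n m₁ d) (Set.Icc 1 (n + 1)) := by
    rintro i ⟨hi₁, -⟩
    rw [ha, hm, hm, arithGen]
    split_ifs
    · rfl
    · rw [Nat.add_sub_add_left, ← Nat.sub_mul, Nat.sub_sub_sub_cancel_right (by omega)]
  have hP' : P = arithMonoidExcept n m₁ d (n - 1) := by
    rw [hP, (hga.mono Set.sdiff_subset).image_eq]
    rfl
  have hqε : q + ε = m₁ / (n - 1) := by
    subst hq hl hε
    exact Nat.sub_one_div_add_ite_eq_div (show 0 < n - 1 by omega)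
  rw [hS, hP', hga.image_eq, closure_arithGen_diff_arithMonoidExcept hn hd hgcd,
    hga ⟨by omega, by omega⟩, hga ⟨by omega, by omega⟩, hga ⟨by omega, le_rfl⟩, hqε]
  have hμ (μ : ℕ) : μ < m₁ / (n - 1) ↔ (μ + 1) * (n - 1) ≤ m₁ :=
    Nat.le_div_iff_mul_le (by omega)
  simp only [hμ, not_and_or, not_lt, not_le]

/-- For the projective monomial curve associated to an arithmetic
sequence, if `r = n-1 ≤ m_1`, then
`S \ P_{n-1} = {a_{n-1} + μ·a_n + λ·a_{n+1} : μ ≤ q-1+ε or λ ≤ d-1}`, where `ε = 1` if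
`l = n-1` and `ε = 0` otherwise (written with `μ < q+ε` and `λ < d`). -/
theorem stmt_12 (n m₁ d : ℕ) (hn : 4 ≤ n) (hm₁ : 0 < m₁) (hd : 0 < d)
    (hgcd : Nat.gcd m₁ d = 1) (hnm : n - 1 ≤ m₁)
    (m : ℕ → ℕ) (hm : ∀ i, m i = m₁ + (i - 1) * d)
    (a : ℕ → ℕ × ℕ)
    (ha : ∀ i, a i = if i = n + 1 then (0, m n) else (m i, m n - m i))
    (S : AddSubmonoid (ℕ × ℕ))
    (hS : S = AddSubmonoid.closure (a '' Set.Icc 1 (n + 1)))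
    (P : AddSubmonoid (ℕ × ℕ))
    (hP : P = AddSubmonoid.closure (a '' (Set.Icc 1 (n + 1) \ {n - 1})))
    (q l ε : ℕ) (hq : q = (m₁ - 1) / (n - 1)) (hl : l = m₁ - q * (n - 1))
    (hε : ε = if l = n - 1 then 1 else 0) :
    (S : Set (ℕ × ℕ)) \ (P : Set (ℕ × ℕ)) =
      {x | ∃ μ lam : ℕ, (μ < q + ε ∨ lam < d) ∧
        x = a (n - 1) + μ • a n + lam • a (n + 1)} :=
  stmt_12_general n m₁ d hn hd hgcd m hm a ha S hS P hP q l ε hq hl hε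
end
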